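/- arXiv:1710.03847 — 5 statements merged into one kernel-verified Lean document; each statement's English description precedes it below -/
import Mathlib

section
/- Let S be a finite set, let 𝒜 and ℬ be two laminar families of subsets of S, and let ℓ be a positive integer. Then there exists a subset A of S such that for every P ∈ 𝒜 ∪ ℬ one has ⌊|P|/ℓ⌋ ≤ |A ∩ P| ≤ ⌈|P|/ℓ⌉. -/
/-!
Scale by `ℓ`: call `y : α → ℤ` feasible if `0 ≤ y ≤ ℓ` on `S` and `ℓ * lo P ≤ y(P) ≤ ℓ * hi P`
for every member `P`; with `lo P = ⌊|P| / ℓ⌋` and `hi P = ⌈|P| / ℓ⌉` the constant `1` is feasible.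
Call `P` tight if `ℓ ∣ y(P)`. As long as some `y v` is not divisible by `ℓ`, there is a nonzero
`d : α → {0, ±1}`, supported on such fractional elements, with `|d(P)| ≤ 1` for every member and
`d(P) = 0` for every tight member. Both `y + d` and `y - d` are then feasible, because a non-tight
`y(P)` lies strictly between the multiples `ℓ * lo P` and `ℓ * hi P` of `ℓ`, and one of them
decreases the potential `∑ v ∈ S, y v * (ℓ - y v)`. Once every `y v` is `0` or `ℓ`, the set
`A = {v | y v = ℓ}` works.

To build `d`, classify each fractional element by its least tight superset in either family. The
classes of the tight sets inside a tight set `T` partition `T`, so by induction each class has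
`y`-sum divisible by `ℓ`, and hence no class contains exactly one fractional element. In the
bipartite multigraph whose vertices are the classes and whose edges are the fractional elements,
every class thus has degree at least `2`, so a longest alternating path either closes up into an
even cycle or ends in unclassified elements at both ends. Signs alternating along it give `d`.
-/

open Finset

namespace LaminarRounding

variable {α β : Type*}

section Signing

structure IsBalanced [DecidableEq β] (c : α → Option β) (D : Finset α) (d : α → ℤ) : Prop where
  card_le_two : ∀ x, #{v ∈ D | c v = x} ≤ 2
  sum_eq_zero_of_card_eq_two : ∀ x, #{v ∈ D | c v = x} = 2 → ∑ v ∈ D with c v = x, d v = 0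
  sum_eq_zero_of_eq_some : ∀ T, ∑ v ∈ D with c v = some T, d v = 0

/-- `C σ v` is the class of `v` in the colouring `σ`, and `none` if `v` is unclassified. -/
def HasSigning [DecidableEq β] (V : Finset α) (C : Bool → α → Option β) : Prop :=
  ∃ D ⊆ V, ∃ d : α → ℤ, (∃ v, d v ≠ 0) ∧ (∀ v, |d v| ≤ 1) ∧ (∀ v, d v ≠ 0 → v ∈ D) ∧
    ∀ σ, IsBalanced (C σ) D d

theorem abs_sum_le_one_of_subset {B K : Finset α} {d : α → ℤ} (hBK : B ⊆ K)
    (hd : ∀ v, |d v| ≤ 1) (hK : #K ≤ 2) (hK2 : #K = 2 → ∑ v ∈ K, d v = 0) :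
    |∑ v ∈ B, d v| ≤ 1 := by
  rcases le_or_gt #B 1 with hB | hB
  · calc |∑ v ∈ B, d v| ≤ ∑ v ∈ B, |d v| := abs_sum_le_sum_abs _ _
      _ ≤ ∑ _v ∈ B, 1 := sum_le_sum fun v _ ↦ hd v
      _ ≤ 1 := by simpa using hB
  · obtain rfl := eq_of_subset_of_card_le hBK (by omega)
    rw [hK2 (by omega), abs_zero]
    exact zero_le_one

def colourAt (s : Bool) (i : ℕ) : Bool := if i % 2 = 0 then s else !s

@[simp] theorem colourAt_zero (s : Bool) : colourAt s 0 = s := rfl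

theorem colourAt_one (s : Bool) : colourAt s 1 = !s := rfl

theorem colourAt_eq_colourAt_iff {s : Bool} {i j : ℕ} :
    colourAt s i = colourAt s j ↔ i % 2 = j % 2 := by
  unfold colourAt; cases s <;> split_ifs <;> simp <;> omega

theorem colourAt_colourAt (s : Bool) (k i : ℕ) :
    colourAt (colourAt s k) i = colourAt s (k + i) := by
  unfold colourAt; cases s <;> split_ifs <;> simp_all <;> omega

theorem not_colourAt (s : Bool) (i : ℕ) : (!colourAt s i) = colourAt s (i + 1) := by
  unfold colourAt; cases s <;> split_ifs <;> simp_all <;> omega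

theorem eq_colourAt_pred_of_ne {s σ : Bool} {i : ℕ} (hi : 0 < i) (h : σ ≠ colourAt s i) :
    σ = colourAt s (i - 1) := by
  have := not_colourAt s (i - 1)
  rw [Nat.sub_add_cancel hi] at this
  cases σ <;> cases h' : colourAt s (i - 1) <;> simp_all

def junction (C : Bool → α → Option β) (s : Bool) (f : ℕ → α) (i : ℕ) : Bool × Option β :=
  (colourAt s i, C (colourAt s i) (f i))

/-- Step `i` of the path links `f i` and `f (i + 1)` through their common class of colour
`colourAt s i`, its junction, and different steps have different junctions. The ends of the path
are the classes `(!s, C (!s) (f 0))` and `junction C s f (n - 1)`. -/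
structure IsAltPath (V : Finset α) (C : Bool → α → Option β) (s : Bool) (n : ℕ) (f : ℕ → α) :
    Prop where
  mem : ∀ i < n, f i ∈ V
  injOn : Set.InjOn f (Set.Iio n)
  isSome : ∀ i, i + 1 < n → (C (colourAt s i) (f i)).isSome
  link : ∀ i, i + 1 < n → C (colourAt s i) (f (i + 1)) = C (colourAt s i) (f i)
  injOn_junction : Set.InjOn (junction C s f) (Set.Iio (n - 1))

theorem junction_drop (C : Bool → α → Option β) (s : Bool) (f : ℕ → α) (k i : ℕ) :
    junction C (colourAt s k) (fun i ↦ f (k + i)) i = junction C s f (k + i) := by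
  simp [junction, colourAt_colourAt]

/-- Both ends are unclassified, or they coincide and the path closes up into a cycle. -/
structure ClosedOrFreeEnds (C : Bool → α → Option β) (s : Bool) (n : ℕ) (f : ℕ → α) : Prop where
  head_ne : ∀ j < n - 1, (!s, C (!s) (f 0)) ≠ junction C s f j
  tail_ne : ∀ j < n - 1, junction C s f (n - 1) ≠ junction C s f j
  ends : (C (!s) (f 0) = none ∧ C (colourAt s (n - 1)) (f (n - 1)) = none) ∨
    (!s, C (!s) (f 0)) = junction C s f (n - 1)

def altSign [DecidableEq α] (f : ℕ → α) (n : ℕ) (v : α) : ℤ :=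
  ∑ i ∈ range n with f i = v, (-1) ^ i

theorem altSign_eq_zero [DecidableEq α] {f : ℕ → α} {n : ℕ} {v : α}
    (hv : v ∉ (range n).image f) : altSign f n v = 0 :=
  sum_eq_zero fun i hi ↦ absurd (mem_image.mpr ⟨i, (mem_filter.mp hi).1, (mem_filter.mp hi).2⟩) hv

namespace IsAltPath

variable {V : Finset α} {C : Bool → α → Option β} {s : Bool} {n : ℕ} {f : ℕ → α}

theorem single {v : α} (hv : v ∈ V) (s : Bool) : IsAltPath V C s 1 (fun _ ↦ v) where
  mem _ _ := hv
  injOn i hi j hj _ := by simp only [Set.mem_Iio] at hi hj; omega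
  isSome i hi := by omega
  link i hi := by omega
  injOn_junction i hi j hj _ := by simp only [Set.mem_Iio] at hi hj; omega

theorem card_le (W : IsAltPath V C s n f) : n ≤ #V := by
  simpa using card_le_card_of_injOn (s := range n) f (fun i hi ↦ W.mem i (by simpa using hi))
    (fun i hi j hj ↦ W.injOn (by simpa using hi) (by simpa using hj))

theorem eq_junction_or_end (W : IsAltPath V C s n f) {i : ℕ} (hi : i < n) (σ : Bool) :
    (∃ j, j + 1 < n ∧ (i = j ∨ i = j + 1) ∧ (σ, C σ (f i)) = junction C s f j) ∨
      (i = 0 ∧ σ = !s) ∨ (i = n - 1 ∧ σ = colourAt s (n - 1)) := by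
  by_cases hσ : σ = colourAt s i
  · subst hσ
    by_cases hlast : i + 1 < n
    · exact Or.inl ⟨i, hlast, Or.inl rfl, rfl⟩
    · exact Or.inr (Or.inr ⟨by omega, by rw [show i = n - 1 by omega]⟩)
  · rcases Nat.eq_zero_or_pos i with rfl | hpos
    · exact Or.inr (Or.inl ⟨rfl, Bool.eq_not_iff.mpr hσ⟩)
    · have hσ' := eq_colourAt_pred_of_ne hpos hσ
      refine Or.inl ⟨i - 1, by omega, Or.inr (by omega), ?_⟩
      have := W.link (i - 1) (by omega)
      rw [Nat.sub_add_cancel hpos] at this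
      simp [junction, hσ', this]

theorem reverse (W : IsAltPath V C s n f) :
    IsAltPath V C (colourAt s n) n (fun i ↦ f (n - 1 - i)) := by
  have hcol : ∀ i, i + 1 < n → colourAt (colourAt s n) i = colourAt s (n - 2 - i) := by
    intro i hi
    rw [colourAt_colourAt, colourAt_eq_colourAt_iff]; omega
  have hjunc : ∀ i, i + 1 < n →
      junction C (colourAt s n) (fun i ↦ f (n - 1 - i)) i = junction C s f (n - 2 - i) := by
    intro i hi
    have := W.link (n - 2 - i) (by omega)
    rw [show n - 2 - i + 1 = n - 1 - i by omega] at this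
    simp [junction, hcol i hi, this]
  refine ⟨fun i hi ↦ W.mem _ (by omega), fun i hi j hj h ↦ ?_, fun i hi ↦ ?_, fun i hi ↦ ?_,
    fun i hi j hj h ↦ ?_⟩
  · simp only [Set.mem_Iio] at hi hj
    have := W.injOn (show n - 1 - i < n by omega) (show n - 1 - j < n by omega) h
    omega
  · have := W.isSome (n - 2 - i) (by omega)
    have hl := W.link (n - 2 - i) (by omega)
    rw [show n - 2 - i + 1 = n - 1 - i by omega] at hl
    simpa [hcol i hi, hl] using this
  · have := W.link (n - 2 - i) (by omega)
    rw [show n - 2 - i + 1 = n - 1 - i by omega] at this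
    simp only [hcol i hi, this, show n - 1 - (i + 1) = n - 2 - i by omega]
  · simp only [Set.mem_Iio] at hi hj
    rw [hjunc i (by omega), hjunc j (by omega)] at h
    have := W.injOn_junction (show n - 2 - i < n - 1 by omega)
      (show n - 2 - j < n - 1 by omega) h
    omega

theorem drop (W : IsAltPath V C s n f) (k : ℕ) :
    IsAltPath V C (colourAt s k) (n - k) (fun i ↦ f (k + i)) := by
  have hjunc := junction_drop C s f k
  refine ⟨fun i hi ↦ W.mem _ (by omega), fun i hi j hj h ↦ ?_, fun i hi ↦ ?_, fun i hi ↦ ?_,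
    fun i hi j hj h ↦ ?_⟩
  · simp only [Set.mem_Iio] at hi hj
    have := W.injOn (show k + i < n by omega) (show k + j < n by omega) h
    omega
  · simpa [colourAt_colourAt] using W.isSome (k + i) (by omega)
  · simpa [colourAt_colourAt, ← add_assoc] using W.link (k + i) (by omega)
  · simp only [Set.mem_Iio] at hi hj
    rw [hjunc, hjunc] at h
    have := W.injOn_junction (show k + i < n - 1 by omega)
      (show k + j < n - 1 by omega) h
    omega

theorem extend (W : IsAltPath V C s n f) (hn : 0 < n)
    (htail : ∀ j < n - 1, junction C s f (n - 1) ≠ junction C s f j)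
    (hsome : (C (colourAt s (n - 1)) (f (n - 1))).isSome) {w : α} (hw : w ∈ V)
    (hfresh : ∀ i < n, f i ≠ w)
    (hwc : C (colourAt s (n - 1)) w = C (colourAt s (n - 1)) (f (n - 1))) :
    IsAltPath V C s (n + 1) (Function.update f n w) := by
  have hf : ∀ i < n, Function.update f n w i = f i := fun i hi ↦
    Function.update_of_ne (by omega) _ _
  have hjunc : ∀ i < n, junction C s (Function.update f n w) i = junction C s f i := by
    intro i hi; simp [junction, hf i hi]
  refine ⟨fun i hi ↦ ?_, fun i hi j hj h ↦ ?_, fun i hi ↦ ?_, fun i hi ↦ ?_,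
    fun i hi j hj h ↦ ?_⟩
  · rcases Nat.lt_succ_iff_lt_or_eq.mp hi with hi | rfl
    · rw [hf i hi]; exact W.mem i hi
    · simpa using hw
  · simp only [Set.mem_Iio] at hi hj
    rcases Nat.lt_succ_iff_lt_or_eq.mp hi with hi | rfl <;>
      rcases Nat.lt_succ_iff_lt_or_eq.mp hj with hj | rfl
    · rw [hf i hi, hf j hj] at h; exact W.injOn hi hj h
    · rw [hf i hi, Function.update_self] at h; exact absurd h (hfresh i hi)
    · rw [hf j hj, Function.update_self] at h; exact absurd h.symm (hfresh j hj)
    · rfl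
  · rw [hf i (by omega)]
    by_cases hi' : i + 1 < n
    · exact W.isSome i hi'
    · rwa [show i = n - 1 by omega]
  · rw [hf i (by omega)]
    by_cases hi' : i + 1 < n
    · rw [hf (i + 1) hi']; exact W.link i hi'
    · obtain rfl : i = n - 1 := by omega
      rw [Nat.sub_add_cancel hn]; simpa using hwc
  · simp only [Set.mem_Iio, Nat.add_sub_cancel] at hi hj
    rw [hjunc i hi, hjunc j hj] at h
    rcases Nat.lt_or_ge i (n - 1) with hi' | hi' <;> rcases Nat.lt_or_ge j (n - 1) with hj' | hj'
    · exact W.injOn_junction hi' hj' h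
    · rw [show j = n - 1 by omega] at h ⊢; exact absurd h.symm (htail i hi')
    · rw [show i = n - 1 by omega] at h ⊢; exact absurd h (htail j hj')
    · omega

theorem altSign_apply [DecidableEq α] (W : IsAltPath V C s n f) {i : ℕ} (hi : i < n) :
    altSign f n (f i) = (-1) ^ i := by
  have : {j ∈ range n | f j = f i} = {i} := by
    ext j
    simp only [mem_filter, mem_range, mem_singleton]
    exact ⟨fun ⟨hj, h⟩ ↦ W.injOn hj hi h, by rintro rfl; exact ⟨hi, rfl⟩⟩
  rw [altSign, this, sum_singleton]

variable [DecidableEq β]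

theorem indices_eq_pair (W : IsAltPath V C s n f) (hends : ClosedOrFreeEnds C s n f)
    {σ : Bool} {c : Option β} {j : ℕ} (hj : j + 1 < n) (hσc : (σ, c) = junction C s f j) :
    {i ∈ range n | C σ (f i) = c} = {j, j + 1} := by
  simp only [junction, Prod.mk.injEq] at hσc
  obtain ⟨rfl, rfl⟩ := hσc
  ext i
  simp only [mem_filter, mem_range, mem_insert, mem_singleton]
  constructor
  · rintro ⟨hi, hic⟩
    rcases W.eq_junction_or_end hi (colourAt s j) with
      ⟨k, hk, hik, hjk⟩ | ⟨rfl, hσ⟩ | ⟨rfl, hσ⟩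
    · rw [hic] at hjk
      obtain rfl := W.injOn_junction (Set.mem_Iio.mpr (by omega)) (Set.mem_Iio.mpr (by omega)) hjk
      omega
    · exact absurd (by rw [← hσ, hic]; rfl) (hends.head_ne j (by omega))
    · exact absurd (by rw [junction, ← hσ, hic]; rfl) (hends.tail_ne j (by omega))
  · rintro (rfl | rfl)
    · exact ⟨by omega, rfl⟩
    · exact ⟨hj, W.link _ hj⟩

theorem eq_end_of_mem_indices (W : IsAltPath V C s n f) {σ : Bool} {c : Option β}
    (hno : ∀ j, j + 1 < n → (σ, c) ≠ junction C s f j) {i : ℕ}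
    (hi : i ∈ {i ∈ range n | C σ (f i) = c}) :
    (i = 0 ∧ (σ, c) = (!s, C (!s) (f 0))) ∨ (i = n - 1 ∧ (σ, c) = junction C s f (n - 1)) := by
  simp only [mem_filter, mem_range] at hi
  obtain ⟨hi, rfl⟩ := hi
  rcases W.eq_junction_or_end hi σ with ⟨k, hk, -, hjk⟩ | ⟨rfl, rfl⟩ | ⟨rfl, rfl⟩
  · exact absurd hjk (hno k hk)
  · exact Or.inl ⟨rfl, rfl⟩
  · exact Or.inr ⟨rfl, rfl⟩

theorem indices_eq_pair_of_head_eq_tail (W : IsAltPath V C s n f) (hn : 0 < n)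
    {σ : Bool} {c : Option β} (hno : ∀ j, j + 1 < n → (σ, c) ≠ junction C s f j)
    (hhead : (σ, c) = (!s, C (!s) (f 0))) (htail : (σ, c) = junction C s f (n - 1)) :
    {i ∈ range n | C σ (f i) = c} = {0, n - 1} ∧ (n - 1) % 2 = 1 := by
  have hodd : (n - 1) % 2 = 1 := by
    have : colourAt s 1 = colourAt s (n - 1) := by
      rw [colourAt_one]
      simp only [junction, Prod.mk.injEq] at hhead htail
      rw [← hhead.1, htail.1]
    rw [colourAt_eq_colourAt_iff] at this
    omega
  refine ⟨?_, hodd⟩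
  ext i
  simp only [mem_insert, mem_singleton]
  constructor
  · intro hi
    rcases W.eq_end_of_mem_indices hno hi with ⟨rfl, -⟩ | ⟨rfl, -⟩ <;> simp
  · simp only [junction, Prod.mk.injEq] at hhead htail
    rintro (rfl | rfl) <;> simp only [mem_filter, mem_range]
    · exact ⟨hn, by rw [hhead.1, hhead.2]⟩
    · exact ⟨by omega, by rw [htail.1, htail.2]⟩

theorem indices_balanced (W : IsAltPath V C s n f) (hn : 0 < n)
    (hends : ClosedOrFreeEnds C s n f)
    (σ : Bool) (c : Option β) :
    #{i ∈ range n | C σ (f i) = c} ≤ 2 ∧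
      (#{i ∈ range n | C σ (f i) = c} = 2 → ∑ i ∈ range n with C σ (f i) = c, (-1 : ℤ) ^ i = 0) ∧
      (c.isSome → ∑ i ∈ range n with C σ (f i) = c, (-1 : ℤ) ^ i = 0) := by
  by_cases hJ : ∃ j, j + 1 < n ∧ (σ, c) = junction C s f j
  · obtain ⟨j, hj, hσc⟩ := hJ
    rw [W.indices_eq_pair hends hj hσc, card_pair (by omega), sum_pair (by omega), pow_succ]
    simp
  push Not at hJ
  by_cases hboth : (σ, c) = (!s, C (!s) (f 0)) ∧ (σ, c) = junction C s f (n - 1)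
  · obtain ⟨hI, hodd⟩ := W.indices_eq_pair_of_head_eq_tail hn hJ hboth.1 hboth.2
    rw [hI, card_pair (by omega), sum_pair (by omega), neg_one_pow_eq_pow_mod_two (n - 1), hodd]
    simp
  have hcard : #{i ∈ range n | C σ (f i) = c} ≤ 1 := by
    refine card_le_one.mpr fun i hi i' hi' ↦ ?_
    rcases W.eq_end_of_mem_indices hJ hi with ⟨rfl, h⟩ | ⟨rfl, h⟩ <;>
      rcases W.eq_end_of_mem_indices hJ hi' with ⟨rfl, h'⟩ | ⟨rfl, h'⟩
    · rfl
    · exact absurd ⟨h, h'⟩ hboth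
    · exact absurd ⟨h', h⟩ hboth
    · rfl
  refine ⟨by omega, by omega, fun hc ↦ ?_⟩
  convert sum_empty
  refine eq_empty_of_forall_notMem fun i hi ↦ ?_
  have hends := hends.ends
  simp only [Prod.mk.injEq, junction] at hboth hends
  rcases W.eq_end_of_mem_indices hJ hi with ⟨-, h⟩ | ⟨-, h⟩ <;>
    simp only [Prod.mk.injEq, junction] at h <;> rcases hends with ⟨h0, h1⟩ | h01
  · simp [h.2, h0] at hc
  · exact hboth ⟨h, h.1.trans h01.1, h.2.trans h01.2⟩
  · simp [h.2, h1] at hc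
  · exact hboth ⟨⟨h.1.trans h01.1.symm, h.2.trans h01.2.symm⟩, h⟩

theorem isBalanced [DecidableEq α] (W : IsAltPath V C s n f) (hn : 0 < n)
    (hends : ClosedOrFreeEnds C s n f)
    (σ : Bool) : IsBalanced (C σ) ((range n).image f) (altSign f n) := by
  have hinj : ∀ c : Option β, Set.InjOn f ↑{i ∈ range n | C σ (f i) = c} := fun c i hi j hj h ↦
    W.injOn (by simpa using (mem_filter.mp hi).1) (by simpa using (mem_filter.mp hj).1) h
  have hcard : ∀ c, #{v ∈ (range n).image f | C σ v = c} = #{i ∈ range n | C σ (f i) = c} :=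
    fun c ↦ by rw [filter_image, card_image_of_injOn (hinj c)]
  have hsum : ∀ c, ∑ v ∈ (range n).image f with C σ v = c, altSign f n v =
      ∑ i ∈ range n with C σ (f i) = c, (-1 : ℤ) ^ i := fun c ↦ by
    rw [filter_image, sum_image (hinj c)]
    exact sum_congr rfl fun i hi ↦ W.altSign_apply (by simpa using (mem_filter.mp hi).1)
  have key := W.indices_balanced hn hends σ
  exact ⟨fun c ↦ hcard c ▸ (key c).1, fun c h ↦ hsum c ▸ (key c).2.1 (hcard c ▸ h),
    fun T ↦ hsum _ ▸ (key (some T)).2.2 rfl⟩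

theorem hasSigning [DecidableEq α] (W : IsAltPath V C s n f) (hn : 0 < n)
    (hends : ClosedOrFreeEnds C s n f) : HasSigning V C := by
  refine ⟨(range n).image f, fun v hv ↦ ?_, altSign f n, ⟨f 0, ?_⟩, fun v ↦ ?_, fun v hv ↦ ?_,
    W.isBalanced hn hends⟩
  · obtain ⟨i, hi, rfl⟩ := mem_image.mp hv
    exact W.mem i (mem_range.mp hi)
  · simp [W.altSign_apply hn]
  · by_cases hv : v ∈ (range n).image f
    · obtain ⟨i, hi, rfl⟩ := mem_image.mp hv
      rw [W.altSign_apply (mem_range.mp hi), abs_pow, abs_neg, abs_one, one_pow]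
    · rw [altSign_eq_zero hv, abs_zero]
      exact zero_le_one
  · by_contra hv'
    exact hv (altSign_eq_zero hv')

theorem hasSigning_of_eq_none [DecidableEq α] (W : IsAltPath V C s n f) (hn : 0 < n)
    (hhead : C (!s) (f 0) = none) (htail : C (colourAt s (n - 1)) (f (n - 1)) = none) :
    HasSigning V C := by
  have hfree : ∀ {x : Bool × Option β}, x.2 = none → ∀ j < n - 1, x ≠ junction C s f j :=
    fun hx j hj h ↦ by
      have h2 := congrArg Prod.snd h
      simp only [junction, hx] at h2
      simpa [← h2] using W.isSome j (by omega)
  exact W.hasSigning hn ⟨hfree hhead, hfree htail, Or.inl ⟨hhead, htail⟩⟩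

theorem exists_signing_or_extend [DecidableEq α] (W : IsAltPath V C s n f) (hn : 0 < n)
    (hsome : (C (colourAt s (n - 1)) (f (n - 1))).isSome)
    (hpartner : ∀ σ, ∀ v ∈ V, ∀ T, C σ v = some T → ∃ w ∈ V, w ≠ v ∧ C σ w = some T) :
    HasSigning V C ∨ ∃ g, IsAltPath V C s (n + 1) g := by
  obtain ⟨T, hT⟩ := Option.isSome_iff_exists.mp hsome
  by_cases htail : ∀ j < n - 1, junction C s f (n - 1) ≠ junction C s f j
  · obtain ⟨w, hwV, hwne, hwT⟩ := hpartner _ _ (W.mem (n - 1) (by omega)) T hT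
    by_cases hfresh : ∀ i < n, f i ≠ w
    · exact Or.inr ⟨_, W.extend hn htail hsome hwV hfresh (hwT.trans hT.symm)⟩
    push Not at hfresh
    obtain ⟨i, hi, rfl⟩ := hfresh
    left
    -- the partner already on the path can only be the head, which closes a cycle
    rcases W.eq_junction_or_end hi (colourAt s (n - 1)) with
      ⟨j, hj, -, hjunc⟩ | ⟨rfl, hσ⟩ | ⟨rfl, -⟩
    · exact absurd (by rw [← hjunc, junction, hwT, hT]) (htail j (by omega))
    · have hcycle : (!s, C (!s) (f 0)) = junction C s f (n - 1) := by
        rw [junction, ← hσ, hwT, hT]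
      exact W.hasSigning hn ⟨fun j hj ↦ hcycle ▸ htail j hj, htail, Or.inr hcycle⟩
    · exact absurd rfl hwne
  push Not at htail
  obtain ⟨j, hj, hjunc⟩ := htail
  -- the tail end is the junction of step `j`, so the path from `f (j + 1)` on is a cycle
  left
  have hhead : (!colourAt s (j + 1), C (!colourAt s (j + 1)) (f (j + 1 + 0))) =
      junction C s f j := by
    have : (!colourAt s (j + 1)) = colourAt s j := by
      rw [not_colourAt, colourAt_eq_colourAt_iff]; omega
    simp [junction, this, W.link j (by omega)]
  have hne : ∀ i, j + 1 + i < n - 1 → junction C s f j ≠ junction C s f (j + 1 + i) :=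
    fun i hi h ↦ by
      have := W.injOn_junction (Set.mem_Iio.mpr (by omega)) (Set.mem_Iio.mpr hi) h
      omega
  refine (W.drop (j + 1)).hasSigning (by omega) ⟨fun i hi ↦ ?_, fun i hi ↦ ?_, Or.inr ?_⟩ <;>
    simp only [hhead, junction_drop, show j + 1 + (n - (j + 1) - 1) = n - 1 by omega, hjunc]
  · exact hne i (by omega)
  · exact hne i (by omega)

end IsAltPath

theorem exists_signing [DecidableEq α] [DecidableEq β] {V : Finset α} {C : Bool → α → Option β}
    (hV : V.Nonempty)
    (hpartner : ∀ σ, ∀ v ∈ V, ∀ T, C σ v = some T → ∃ w ∈ V, w ≠ v ∧ C σ w = some T) :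
    HasSigning V C := by
  classical
  obtain ⟨v₀, hv₀⟩ := hV
  have hP1 : ∃ s f, IsAltPath V C s 1 f := ⟨true, _, IsAltPath.single hv₀ true⟩
  have hbound : ∀ m, (∃ s f, IsAltPath V C s m f) → m ≤ #V := fun m ⟨_, _, W⟩ ↦ W.card_le
  set N := Nat.findGreatest (fun m ↦ ∃ s f, IsAltPath V C s m f) #V
  have hmax : ∀ m, (∃ s f, IsAltPath V C s m f) → m ≤ N := fun m hm ↦
    Nat.le_findGreatest (P := fun m ↦ ∃ s f, IsAltPath V C s m f) (hbound m hm) hm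
  have hN : 0 < N := hmax 1 hP1
  obtain ⟨s, f, W⟩ : ∃ s f, IsAltPath V C s N f :=
    Nat.findGreatest_spec (P := fun m ↦ ∃ s f, IsAltPath V C s m f) (hbound 1 hP1) hP1
  -- a longest path cannot be extended at its tail, nor, reversed, at its head
  have hfree : ∀ s f, IsAltPath V C s N f →
      HasSigning V C ∨ C (colourAt s (N - 1)) (f (N - 1)) = none := by
    intro s f W
    cases h : C (colourAt s (N - 1)) (f (N - 1)) with
    | none => exact Or.inr rfl
    | some T =>
      refine (W.exists_signing_or_extend hN (by simp [h]) hpartner).imp_right fun ⟨g, Wg⟩ ↦ ?_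
      exact absurd (hmax _ ⟨s, g, Wg⟩) (by omega)
  rcases hfree s f W with h | htail
  · exact h
  rcases hfree _ _ W.reverse with h | hhead
  · exact h
  have hcol : colourAt (colourAt s N) (N - 1) = !s := by
    rw [colourAt_colourAt, ← colourAt_one, colourAt_eq_colourAt_iff]
    omega
  rw [hcol, Nat.sub_self] at hhead
  exact W.hasSigning_of_eq_none hN hhead htail

end Signing

section Laminar

variable {ℱ 𝒯 : Finset (Finset α)}

open Classical in
noncomputable def leastSuperset (𝒯 : Finset (Finset α)) (X : Finset α) : Option (Finset α) :=
  if h : ∃ T, IsLeast {Q | Q ∈ 𝒯 ∧ X ⊆ Q} T then some h.choose else none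

theorem leastSuperset_eq_some_iff {X T : Finset α} :
    leastSuperset 𝒯 X = some T ↔ IsLeast {Q | Q ∈ 𝒯 ∧ X ⊆ Q} T := by
  unfold leastSuperset
  split_ifs with h
  · rw [Option.some_inj]
    exact ⟨fun e ↦ e ▸ h.choose_spec, h.choose_spec.unique⟩
  · exact ⟨nofun, fun hT ↦ absurd ⟨T, hT⟩ h⟩

theorem mem_of_leastSuperset_eq_some {X T : Finset α} (h : leastSuperset 𝒯 X = some T) :
    T ∈ 𝒯 ∧ X ⊆ T :=
  (leastSuperset_eq_some_iff.mp h).1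

variable [DecidableEq α]

def IsLaminar (ℱ : Finset (Finset α)) : Prop :=
  ∀ P ∈ ℱ, ∀ Q ∈ ℱ, P ⊆ Q ∨ Q ⊆ P ∨ P ∩ Q = ∅

theorem IsLaminar.mono (hℱ : IsLaminar ℱ) (h : 𝒯 ⊆ ℱ) : IsLaminar 𝒯 :=
  fun P hP Q hQ ↦ hℱ P (h hP) Q (h hQ)

theorem IsLaminar.exists_isLeast (h𝒯 : IsLaminar 𝒯) {X Q : Finset α} (hX : X.Nonempty)
    (hQ : Q ∈ 𝒯) (hXQ : X ⊆ Q) : ∃ T, IsLeast {Q | Q ∈ 𝒯 ∧ X ⊆ Q} T := by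
  obtain ⟨T, hT⟩ := exists_minimal_of_wellFoundedLT (fun Q ↦ Q ∈ 𝒯 ∧ X ⊆ Q) ⟨Q, hQ, hXQ⟩
  refine ⟨T, hT.prop, fun R hR ↦ ?_⟩
  rcases h𝒯 T hT.prop.1 R hR.1 with h | h | h
  · exact h
  · exact (hT.eq_of_le hR h).ge
  · obtain ⟨x, hx⟩ := hX
    simpa [h] using mem_inter.mpr ⟨hT.prop.2 hx, hR.2 hx⟩

theorem IsLaminar.leastSuperset_eq_none_iff (h𝒯 : IsLaminar 𝒯) {X : Finset α}
    (hX : X.Nonempty) : leastSuperset 𝒯 X = none ↔ ∀ Q ∈ 𝒯, ¬X ⊆ Q := by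
  refine ⟨fun h Q hQ hXQ ↦ ?_, fun h ↦ ?_⟩
  · obtain ⟨T, hT⟩ := h𝒯.exists_isLeast hX hQ hXQ
    simp [leastSuperset_eq_some_iff.mpr hT] at h
  · rw [Option.eq_none_iff_forall_ne_some]
    exact fun T hT ↦ h T (mem_of_leastSuperset_eq_some hT).1 (mem_of_leastSuperset_eq_some hT).2

theorem IsLaminar.exists_leastSuperset_singleton (h𝒯 : IsLaminar 𝒯) {Q : Finset α} {v : α}
    (hQ : Q ∈ 𝒯) (hv : v ∈ Q) : ∃ T ⊆ Q, leastSuperset 𝒯 {v} = some T := by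
  obtain ⟨T, hT⟩ := h𝒯.exists_isLeast (singleton_nonempty v) hQ (singleton_subset_iff.mpr hv)
  exact ⟨T, hT.2 ⟨hQ, singleton_subset_iff.mpr hv⟩, leastSuperset_eq_some_iff.mpr hT⟩

theorem filter_leastSuperset_eq {s t T : Finset α} (hT : T ⊆ t) :
    {v ∈ s ∩ t | leastSuperset 𝒯 {v} = some T} = {v ∈ s | leastSuperset 𝒯 {v} = some T} := by
  ext v
  simp only [mem_filter, mem_inter]
  exact ⟨fun ⟨hv, h⟩ ↦ ⟨hv.1, h⟩,
    fun ⟨hv, h⟩ ↦ ⟨⟨hv, hT (singleton_subset_iff.mp (mem_of_leastSuperset_eq_some h).2)⟩, h⟩⟩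

theorem IsLaminar.dvd_sum_class (h𝒯 : IsLaminar 𝒯) {ℓ : ℤ} {y : α → ℤ}
    (hdvd : ∀ T ∈ 𝒯, ℓ ∣ ∑ v ∈ T, y v) {T : Finset α} (hT : T ∈ 𝒯) :
    ℓ ∣ ∑ v ∈ T with leastSuperset 𝒯 {v} = some T, y v := by
  induction hk : #T using Nat.strong_induction_on generalizing T with
  | _ k ih =>
  have hsplit : ∑ v ∈ T, y v =
      ∑ T' ∈ 𝒯 with T' ⊆ T, ∑ v ∈ T with leastSuperset 𝒯 {v} = some T', y v := by
    rw [← sum_image (g := some) (fun _ _ _ _ h ↦ Option.some_injective _ h)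
      (f := fun c ↦ ∑ v ∈ T with leastSuperset 𝒯 {v} = c, y v)]
    refine (sum_fiberwise_of_maps_to (fun v hv ↦ ?_) y).symm
    obtain ⟨T', hT'T, hT'⟩ := h𝒯.exists_leastSuperset_singleton hT hv
    exact mem_image.mpr ⟨T', mem_filter.mpr ⟨(mem_of_leastSuperset_eq_some hT').1, hT'T⟩, hT'.symm⟩
  rw [← add_sum_erase _ _ (show T ∈ {T' ∈ 𝒯 | T' ⊆ T} from mem_filter.mpr ⟨hT, subset_rfl⟩)]
    at hsplit
  refine (dvd_add_left (dvd_sum fun T' hT' ↦ ?_)).mp (hsplit ▸ hdvd T hT)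
  obtain ⟨hne, hT'𝒯, hT'T⟩ : T' ≠ T ∧ T' ∈ 𝒯 ∧ T' ⊆ T := by simpa using hT'
  rw [← filter_leastSuperset_eq (t := T') subset_rfl, inter_eq_right.mpr hT'T]
  exact ih _ (hk ▸ card_lt_card (ssubset_of_subset_of_ne hT'T hne)) hT'𝒯 rfl

theorem IsLaminar.exists_partner (h𝒯 : IsLaminar 𝒯) {ℓ : ℤ} {y : α → ℤ}
    (hdvd : ∀ T ∈ 𝒯, ℓ ∣ ∑ v ∈ T, y v) {v : α} {T : Finset α} (hv : ¬ℓ ∣ y v)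
    (hvT : leastSuperset 𝒯 {v} = some T) :
    ∃ w ≠ v, ¬ℓ ∣ y w ∧ leastSuperset 𝒯 {w} = some T := by
  by_contra! h
  have hclass := h𝒯.dvd_sum_class hdvd (mem_of_leastSuperset_eq_some hvT).1
  have hvmem : v ∈ {w ∈ T | leastSuperset 𝒯 {w} = some T} :=
    mem_filter.mpr ⟨singleton_subset_iff.mp (mem_of_leastSuperset_eq_some hvT).2, hvT⟩
  rw [← add_sum_erase _ _ hvmem] at hclass
  refine hv ((dvd_add_left (dvd_sum fun w hw ↦ ?_)).mp hclass)
  obtain ⟨hwv, hw⟩ := mem_erase.mp hw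
  by_contra hw'
  exact h w hwv hw' (mem_filter.mp hw).2

theorem IsLaminar.leastSuperset_singleton_eq (hℱ : IsLaminar ℱ) (h𝒯ℱ : 𝒯 ⊆ ℱ) {P : Finset α}
    (hP : P ∈ ℱ) {v : α} (hv : v ∈ P) :
    (∃ T ⊆ P, leastSuperset 𝒯 {v} = some T) ∨ leastSuperset 𝒯 {v} = leastSuperset 𝒯 P := by
  cases h : leastSuperset 𝒯 {v} with
  | none =>
    refine Or.inr ((hℱ.mono h𝒯ℱ).leastSuperset_eq_none_iff ⟨v, hv⟩ |>.mpr fun Q hQ hPQ ↦ ?_).symm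
    exact ((hℱ.mono h𝒯ℱ).leastSuperset_eq_none_iff (singleton_nonempty v)).mp h Q hQ
      (singleton_subset_iff.mpr (hPQ hv))
  | some T =>
    have hT := leastSuperset_eq_some_iff.mp h
    rcases hℱ T (h𝒯ℱ hT.1.1) P hP with hTP | hPT | hTP
    · exact Or.inl ⟨T, hTP, rfl⟩
    · refine Or.inr (leastSuperset_eq_some_iff.mpr ⟨⟨hT.1.1, hPT⟩, fun Q hQ ↦ ?_⟩).symm
      exact hT.2 ⟨hQ.1, singleton_subset_iff.mpr (hQ.2 hv)⟩
    · simpa [hTP] using mem_inter.mpr ⟨singleton_subset_iff.mp hT.1.2, hv⟩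

theorem IsLaminar.abs_sum_le_one (hℱ : IsLaminar ℱ) (h𝒯ℱ : 𝒯 ⊆ ℱ) {D : Finset α} {d : α → ℤ}
    (hbal : IsBalanced (fun v ↦ leastSuperset 𝒯 {v}) D d) (hd : ∀ v, |d v| ≤ 1)
    (hsupp : ∀ v, d v ≠ 0 → v ∈ D) {P : Finset α} (hP : P ∈ ℱ) :
    |∑ v ∈ P, d v| ≤ 1 ∧ (P ∈ 𝒯 → ∑ v ∈ P, d v = 0) := by
  have hPD : ∑ v ∈ P, d v = ∑ v ∈ D ∩ P with leastSuperset 𝒯 {v} = leastSuperset 𝒯 P, d v := by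
    calc ∑ v ∈ P, d v = ∑ v ∈ D ∩ P, d v := by
          rw [inter_comm, ← filter_mem_eq_inter]
          exact (sum_filter_of_ne fun v _ h ↦ hsupp v h).symm
      _ = ∑ c ∈ (D ∩ P).image (fun v ↦ leastSuperset 𝒯 {v}),
            ∑ v ∈ D ∩ P with leastSuperset 𝒯 {v} = c, d v :=
          (sum_fiberwise_of_maps_to (fun v hv ↦ mem_image_of_mem _ hv) d).symm
      _ = _ := by
          refine sum_eq_single _ (fun c hc hne ↦ ?_) (fun h ↦ sum_eq_zero fun v hv ↦ ?_)
          · obtain ⟨v, hv, rfl⟩ := mem_image.mp hc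
            rcases hℱ.leastSuperset_singleton_eq h𝒯ℱ hP (mem_inter.mp hv).2 with ⟨T, hTP, hT⟩ | h
            · rw [hT, filter_leastSuperset_eq hTP]
              exact hbal.sum_eq_zero_of_eq_some T
            · exact absurd h hne
          · obtain ⟨hv, hvc⟩ := mem_filter.mp hv
            exact absurd (hvc ▸ mem_image_of_mem _ hv) h
  refine ⟨hPD ▸ abs_sum_le_one_of_subset (filter_subset_filter _ inter_subset_left) hd
    (hbal.card_le_two _) (hbal.sum_eq_zero_of_card_eq_two _), fun hP𝒯 ↦ ?_⟩
  have : leastSuperset 𝒯 P = some P :=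
    leastSuperset_eq_some_iff.mpr ⟨⟨hP𝒯, subset_rfl⟩, fun Q hQ ↦ hQ.2⟩
  rw [hPD, this, filter_leastSuperset_eq subset_rfl]
  exact hbal.sum_eq_zero_of_eq_some P

theorem exists_signing_of_laminar {S : Finset α} {ℱ : Bool → Finset (Finset α)}
    (hℱ : ∀ σ, IsLaminar (ℱ σ)) (hℱS : ∀ σ, ∀ P ∈ ℱ σ, P ⊆ S) {ℓ : ℤ} {y : α → ℤ} {v₀ : α}
    (hv₀ : v₀ ∈ S) (hy : ¬ℓ ∣ y v₀) :
    ∃ d : α → ℤ, (∃ v, d v ≠ 0) ∧ (∀ v, |d v| ≤ 1) ∧ (∀ v, d v ≠ 0 → v ∈ S ∧ ¬ℓ ∣ y v) ∧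
      ∀ σ, ∀ P ∈ ℱ σ, |∑ v ∈ P, d v| ≤ 1 ∧ (ℓ ∣ ∑ v ∈ P, y v → ∑ v ∈ P, d v = 0) := by
  set 𝒯 : Bool → Finset (Finset α) := fun σ ↦ {P ∈ ℱ σ | ℓ ∣ ∑ v ∈ P, y v}
  have h𝒯 : ∀ σ, IsLaminar (𝒯 σ) := fun σ ↦ (hℱ σ).mono (filter_subset _ _)
  obtain ⟨D, hDV, d, hne, hd, hsupp, hbal⟩ := exists_signing (V := {v ∈ S | ¬ℓ ∣ y v})
    (C := fun σ v ↦ leastSuperset (𝒯 σ) {v}) ⟨v₀, mem_filter.mpr ⟨hv₀, hy⟩⟩ <| by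
      intro σ v hv T hT
      obtain ⟨w, hwv, hw, hwT⟩ := (h𝒯 σ).exists_partner (fun T hT ↦ (mem_filter.mp hT).2)
        (mem_filter.mp hv).2 hT
      obtain ⟨hT𝒯, hwT'⟩ := mem_of_leastSuperset_eq_some hwT
      exact ⟨w, mem_filter.mpr ⟨hℱS σ T (mem_filter.mp hT𝒯).1 (singleton_subset_iff.mp hwT'), hw⟩,
        hwv, hwT⟩
  refine ⟨d, hne, hd, fun v hv ↦ mem_filter.mp (hDV (hsupp v hv)), fun σ P hP ↦ ?_⟩
  obtain ⟨h1, h2⟩ := (hℱ σ).abs_sum_le_one (filter_subset _ _) (hbal σ) hd hsupp hP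
  exact ⟨h1, fun h ↦ h2 (mem_filter.mpr ⟨hP, h⟩)⟩

end Laminar

section Rounding

variable {S : Finset α} {ℱ : Bool → Finset (Finset α)} {ℓ : ℕ} {lo hi : Finset α → ℤ}
  {y : α → ℤ}

def Feasible (S : Finset α) (ℱ : Bool → Finset (Finset α)) (ℓ : ℕ) (lo hi : Finset α → ℤ)
    (y : α → ℤ) : Prop :=
  (∀ v ∈ S, 0 ≤ y v ∧ y v ≤ ℓ) ∧
    ∀ σ, ∀ P ∈ ℱ σ, ℓ * lo P ≤ ∑ v ∈ P, y v ∧ ∑ v ∈ P, y v ≤ ℓ * hi P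

def potential (S : Finset α) (ℓ : ℕ) (y : α → ℤ) : ℤ := ∑ v ∈ S, y v * (ℓ - y v)

theorem Feasible.potential_nonneg (hy : Feasible S ℱ ℓ lo hi y) : 0 ≤ potential S ℓ y :=
  sum_nonneg fun v hv ↦ mul_nonneg (hy.1 v hv).1 (sub_nonneg.mpr (hy.1 v hv).2)

theorem potential_add_add_potential_sub (S : Finset α) (ℓ : ℕ) (y d : α → ℤ) :
    potential S ℓ (y + d) + potential S ℓ (y - d) =
      2 * potential S ℓ y - 2 * ∑ v ∈ S, d v ^ 2 := by
  simp only [potential, mul_sum, ← sum_add_distrib, ← sum_sub_distrib, Pi.add_apply,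
    Pi.sub_apply]
  exact sum_congr rfl fun v _ ↦ by ring

theorem Feasible.add (hy : Feasible S ℱ ℓ lo hi y) {d : α → ℤ} (hd : ∀ v, |d v| ≤ 1)
    (hsupp : ∀ v ∈ S, d v ≠ 0 → ¬(ℓ : ℤ) ∣ y v)
    (hP : ∀ σ, ∀ P ∈ ℱ σ, |∑ v ∈ P, d v| ≤ 1 ∧ ((ℓ : ℤ) ∣ ∑ v ∈ P, y v → ∑ v ∈ P, d v = 0)) :
    Feasible S ℱ ℓ lo hi (y + d) := by
  refine ⟨fun v hv ↦ ?_, fun σ P hPσ ↦ ?_⟩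
  · obtain ⟨h0, hℓ⟩ := hy.1 v hv
    have := abs_le.mp (hd v)
    by_cases hdv : d v = 0
    · simp [hdv, h0, hℓ]
    have hne := hsupp v hv hdv
    have h0' : y v ≠ 0 := fun h ↦ hne (h ▸ dvd_zero _)
    have hℓ' : y v ≠ ℓ := fun h ↦ hne (h ▸ dvd_refl _)
    simp only [Pi.add_apply]
    omega
  · simp only [Pi.add_apply, sum_add_distrib]
    obtain ⟨hlo, hhi⟩ := hy.2 σ P hPσ
    obtain ⟨hd1, hd0⟩ := hP σ P hPσ
    by_cases hdvd : (ℓ : ℤ) ∣ ∑ v ∈ P, y v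
    · rw [hd0 hdvd, add_zero]
      exact ⟨hlo, hhi⟩
    have hlo' := lt_of_le_of_ne hlo fun h ↦ hdvd (h ▸ dvd_mul_right _ _)
    have hhi' := lt_of_le_of_ne hhi fun h ↦ hdvd (h.symm ▸ dvd_mul_right _ _)
    have := abs_le.mp hd1
    constructor <;> linarith

theorem Feasible.exists_potential_lt [DecidableEq α] (hℱ : ∀ σ, IsLaminar (ℱ σ))
    (hℱS : ∀ σ, ∀ P ∈ ℱ σ, P ⊆ S) (hy : Feasible S ℱ ℓ lo hi y) {v₀ : α} (hv₀ : v₀ ∈ S)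
    (hfrac : ¬(ℓ : ℤ) ∣ y v₀) :
    ∃ y', Feasible S ℱ ℓ lo hi y' ∧ potential S ℓ y' < potential S ℓ y := by
  obtain ⟨d, ⟨v₁, hv₁⟩, hd, hsupp, hP⟩ := exists_signing_of_laminar hℱ hℱS hv₀ hfrac
  have hsupp' : ∀ v ∈ S, d v ≠ 0 → ¬(ℓ : ℤ) ∣ y v := fun v _ h ↦ (hsupp v h).2
  have hpos : 0 < ∑ v ∈ S, d v ^ 2 :=
    (sq_pos_of_ne_zero hv₁).trans_le (single_le_sum (fun v _ ↦ sq_nonneg (d v)) (hsupp v₁ hv₁).1)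
  have hplus := hy.add hd hsupp' hP
  have hminus : Feasible S ℱ ℓ lo hi (y - d) := by
    rw [sub_eq_add_neg]
    refine hy.add (fun v ↦ by simpa using hd v) (fun v hv h ↦ hsupp' v hv (by simpa using h))
      fun σ P hPσ ↦ ?_
    simpa [sum_neg_distrib] using hP σ P hPσ
  have := potential_add_add_potential_sub S ℓ y d
  rcases le_total (potential S ℓ (y + d)) (potential S ℓ (y - d)) with h | h
  · exact ⟨y + d, hplus, by linarith⟩
  · exact ⟨y - d, hminus, by linarith⟩

theorem Feasible.exists_dvd [DecidableEq α] (hℱ : ∀ σ, IsLaminar (ℱ σ))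
    (hℱS : ∀ σ, ∀ P ∈ ℱ σ, P ⊆ S) (hy : Feasible S ℱ ℓ lo hi y) :
    ∃ z, Feasible S ℱ ℓ lo hi z ∧ ∀ v ∈ S, (ℓ : ℤ) ∣ z v := by
  induction hk : (potential S ℓ y).toNat using Nat.strong_induction_on generalizing y with
  | _ k ih =>
  by_cases h : ∀ v ∈ S, (ℓ : ℤ) ∣ y v
  · exact ⟨y, hy, h⟩
  push Not at h
  obtain ⟨v₀, hv₀, hfrac⟩ := h
  obtain ⟨y', hy', hlt⟩ := hy.exists_potential_lt hℱ hℱS hv₀ hfrac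
  exact ih _ (by have := hy'.potential_nonneg; omega) hy' rfl

theorem exists_subset_of_feasible [DecidableEq α] (hℓ : 0 < ℓ) (hℱ : ∀ σ, IsLaminar (ℱ σ))
    (hℱS : ∀ σ, ∀ P ∈ ℱ σ, P ⊆ S) (hy : Feasible S ℱ ℓ lo hi y) :
    ∃ A ⊆ S, ∀ σ, ∀ P ∈ ℱ σ, lo P ≤ #(A ∩ P) ∧ (#(A ∩ P) : ℤ) ≤ hi P := by
  obtain ⟨z, hz, hdvd⟩ := hy.exists_dvd hℱ hℱS
  have hz01 : ∀ v ∈ S, z v = if z v = ℓ then (ℓ : ℤ) else 0 := by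
    intro v hv
    split_ifs with h
    · exact h
    · exact Int.eq_zero_of_dvd_of_nonneg_of_lt (hz.1 v hv).1
        (lt_of_le_of_ne (hz.1 v hv).2 h) (hdvd v hv)
  refine ⟨{v ∈ S | z v = ℓ}, filter_subset _ _, fun σ P hP ↦ ?_⟩
  have hsum : ∑ v ∈ P, z v = ℓ * #({v ∈ S | z v = ℓ} ∩ P) := by
    rw [sum_congr rfl fun v hv ↦ hz01 v (hℱS σ P hP hv), ← sum_filter, sum_const, nsmul_eq_mul,
      mul_comm]
    congr 3
    ext v
    simp only [mem_filter, mem_inter]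
    exact ⟨fun ⟨hv, h⟩ ↦ ⟨⟨hℱS σ P hP hv, h⟩, hv⟩, fun ⟨⟨_, h⟩, hv⟩ ↦ ⟨hv, h⟩⟩
  obtain ⟨hlo, hhi⟩ := hz.2 σ P hP
  rw [hsum] at hlo hhi
  have hℓ' : (0 : ℤ) < ℓ := by exact_mod_cast hℓ
  exact ⟨le_of_mul_le_mul_left hlo hℓ', le_of_mul_le_mul_left hhi hℓ'⟩

theorem feasible_one (hℓ : 0 < ℓ) :
    Feasible S ℱ ℓ (fun P ↦ ⌊(#P : ℚ) / ℓ⌋) (fun P ↦ ⌈(#P : ℚ) / ℓ⌉) 1 := by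
  have hℓ' : (0 : ℚ) < ℓ := by exact_mod_cast hℓ
  refine ⟨fun v _ ↦ ⟨zero_le_one, by simp only [Pi.one_apply]; omega⟩, fun σ P _ ↦ ?_⟩
  simp only [Pi.one_apply, sum_const, nsmul_eq_mul, mul_one]
  have h1 := Int.floor_le ((#P : ℚ) / ℓ)
  have h2 := Int.le_ceil ((#P : ℚ) / ℓ)
  rw [le_div_iff₀ hℓ'] at h1
  rw [div_le_iff₀ hℓ'] at h2
  constructor
  · exact_mod_cast (show ((ℓ : ℤ) * ⌊(#P : ℚ) / ℓ⌋ : ℚ) ≤ #P by push_cast; linarith)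
  · exact_mod_cast (show (#P : ℚ) ≤ ((ℓ : ℤ) * ⌈(#P : ℚ) / ℓ⌉ : ℚ) by push_cast; linarith)

end Rounding

end LaminarRounding

/-- **Nash-Williams' laminar family lemma.**
If `𝒜` and `ℬ` are two laminar families of subsets of a finite set `S`
and `ℓ` is a positive integer, then there is a subset `A` of `S` such that
`⌊|P|/ℓ⌋ ≤ |A ∩ P| ≤ ⌈|P|/ℓ⌉` for every `P ∈ 𝒜 ∪ ℬ`. -/
theorem laminar_lemma {α : Type*} [DecidableEq α] (S : Finset α)
    (𝒜 ℬ : Finset (Finset α))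
    (h𝒜S : ∀ P ∈ 𝒜, P ⊆ S) (hℬS : ∀ P ∈ ℬ, P ⊆ S)
    (h𝒜 : ∀ P ∈ 𝒜, ∀ Q ∈ 𝒜, P ⊆ Q ∨ Q ⊆ P ∨ P ∩ Q = ∅)
    (hℬ : ∀ P ∈ ℬ, ∀ Q ∈ ℬ, P ⊆ Q ∨ Q ⊆ P ∨ P ∩ Q = ∅)
    (ℓ : ℕ) (hℓ : 0 < ℓ) :
    ∃ A ⊆ S, ∀ P ∈ 𝒜 ∪ ℬ,
      ⌊(P.card : ℚ) / (ℓ : ℚ)⌋ ≤ ((A ∩ P).card : ℤ) ∧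
      ((A ∩ P).card : ℤ) ≤ ⌈(P.card : ℚ) / (ℓ : ℚ)⌉ := by
  obtain ⟨A, hAS, hA⟩ :=
    LaminarRounding.exists_subset_of_feasible (ℱ := fun σ ↦ bif σ then 𝒜 else ℬ) hℓ
      (by rintro (_ | _) <;> assumption) (by rintro (_ | _) <;> assumption)
      (LaminarRounding.feasible_one hℓ)
  refine ⟨A, hAS, fun P hP ↦ ?_⟩
  rcases mem_union.mp hP with h | h
  · exact hA true P h
  · exact hA false P h
end

section
/- Let F be a k-edge-colored hypergraph in which every edge is incident with exactly three hinges, let α be a vertex of F, and let g ≥ 2 be an integer such that g ≤ 2 implies m_F(α³) = 0. Then there exists a detachment F' of F obtained by splitting α into two vertices α and v (i.e., V(F') = V(F) ∪ {v}, the hinges of F at α are partitioned between α and v in F', and all other hinges are unchanged) such that: (B1) d_{F'}(α) ≈ d_F(α)(g−1)/g; (B2) d_{F'}(v) ≈ d_F(α)/g; (B3) m_{F'}(α, w²) ≈ m_F(α, w²)(g−1)/g for each vertex w ≠ α of F; (B4) m_{F'}(v, w²) ≈ m_F(α, w²)/g for each w ≠ α; (B5) m_{F'}(α, u, w) ≈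 m_F(α, u, w)(g−1)/g for every pair of distinct vertices u, w of F different from α; (B6) m_{F'}(v, u, w) ≈ m_F(α, u, w)/g for every such pair u, w; (B7) m_{F'}(v², w) = 0 for each w ≠ α; (B8) m_{F'}(α, v, w) ≈ 2·m_F(α², w)/g for each w ≠ α; (B9) m_{F'}(α², w) ≈ m_F(α², w)(g−2)/g for each w ≠ α; (B10) m_{F'}(v³) = m_{F'}(v², α) = 0; (B11) m_{F'}(α³) ≈ m_F(α³)(g−3)/g; (B12) m_{F'}(v, α²) ≈ 3·m_F(α³)/g; and moreover the analogues of (B1)–(B12) hold for each color class F(j), j ∈ {1,…,k}. -/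
/-- The multiset of vertices (with repetition) incident with the edge `e`,
in the hypergraph given by the hinge-to-vertex map `ψ` and the
hinge-to-edge map `φ`. -/
def edgeVerts {V E H : Type} [Fintype H] [DecidableEq E]
    (ψ : H → V) (φ : H → E) (e : E) : Multiset V :=
  (Finset.univ.filter fun h => φ h = e).val.map ψ

/-- `mF ψ φ x y z` is the number of edges incident with exactly three hinges
whose multiset of incident vertices is `{x, y, z}`. -/
def mF {V E H : Type} [Fintype E] [Fintype H] [DecidableEq V] [DecidableEq E]
    (ψ : H → V) (φ : H → E) (x y z : V) : ℕ :=
  (Finset.univ.filter fun e => edgeVerts ψ φ e = ({x, y, z} : Multiset V)).card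

/-- Colored version of `mF`: only edges of color `j` are counted. -/
def mFc {V E H : Type} {k : ℕ} [Fintype E] [Fintype H] [DecidableEq V] [DecidableEq E]
    (ψ : H → V) (φ : H → E) (K : E → Fin k) (j : Fin k) (x y z : V) : ℕ :=
  (Finset.univ.filter fun e => K e = j ∧ edgeVerts ψ φ e = ({x, y, z} : Multiset V)).card

/-- The degree of a vertex: the number of hinges incident with it. -/
def degF {V H : Type} [Fintype H] [DecidableEq V] (ψ : H → V) (v : V) : ℕ :=
  (Finset.univ.filter fun h => ψ h = v).card

/-- The degree of a vertex in the color class `j`. -/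
def degFc {V E H : Type} {k : ℕ} [Fintype H] [DecidableEq V]
    (ψ : H → V) (φ : H → E) (K : E → Fin k) (j : Fin k) (v : V) : ℕ :=
  (Finset.univ.filter fun h => ψ h = v ∧ K (φ h) = j).card

/-- `approx a y` means `⌊y⌋ ≤ a ≤ ⌈y⌉`. -/
def approx (a : ℕ) (y : ℚ) : Prop := ⌊y⌋ ≤ (a : ℤ) ∧ (a : ℤ) ≤ ⌈y⌉

/-!
Give every edge `e` the weight `mult_α(e) / g`; it is at most `1` because `mult_α(e) ≤ 3`, and
`mult_α(e) = 3 > g` would need an edge `{α, α, α}` with `g = 2`. Sort the edges into cells by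
type (the multiset of their endpoints) and colour. Baranyai's rounding lemma rounds the matrix of
cell weights together with its row sums, column sums and total: border it by the gaps up to the
ceilings of its margins, so that all margins become integral, then keep moving along a nonzero
matrix with zero margins supported on the non-integral cells, which exists because every row and
column meeting those cells meets at least two of them. Filling each cell with the rounded number of
its edges through `α` gives a set `M` of edges such that, overall and in each colour class, the
number of edges of `M` of any type, and of all types together, rounds the corresponding weight.
Moving one hinge at `α` of every edge of `M` to the new vertex `v` then turns an edge of type
`{α, u, w}` into one of type `{v, u, w}` exactly when it lies in `M`, which gives (B1)–(B12).
-/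

open Finset

theorem floor_le_and_le_ceil_iff {k : Type*} [Field k] [LinearOrder k] [IsStrictOrderedRing k]
    [FloorRing k] {z : ℤ} {q : k} : (⌊q⌋ ≤ z ∧ z ≤ ⌈q⌉) ↔ |(z : k) - q| < 1 := by
  rw [Int.floor_le_iff, Int.le_ceil_iff, abs_sub_lt_iff]
  constructor <;> rintro ⟨h₁, h₂⟩ <;> constructor <;> linarith

theorem approx_iff_abs_sub_lt_one {a : ℕ} {q : ℚ} : approx a q ↔ |(a : ℚ) - q| < 1 := by
  rw [approx, floor_le_and_le_ceil_iff, Int.cast_natCast]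

theorem approx_sub_of_add_eq {a b n : ℕ} {q : ℚ} (h : a + b = n) (hb : approx b q) :
    approx a (n - q) := by
  rw [approx_iff_abs_sub_lt_one] at hb ⊢
  rwa [show (a : ℚ) - (n - q) = -(b - q) by rw [← h]; push_cast; ring, abs_neg]

theorem exists_ne_not_int_of_sum_eq_int {ι : Type*} [DecidableEq ι] {s : Finset ι} {f : ι → ℚ}
    {n : ℤ} (hs : ∑ i ∈ s, f i = n) {a : ι} (ha : a ∈ s) (hfa : (⌊f a⌋ : ℚ) ≠ f a) :
    ∃ b ∈ s, b ≠ a ∧ (⌊f b⌋ : ℚ) ≠ f b := by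
  by_contra! h
  apply hfa
  have : f a = ((n - ∑ b ∈ s.erase a, ⌊f b⌋ : ℤ) : ℚ) := by
    rw [← add_sum_erase s f ha] at hs
    push_cast
    rw [sum_congr rfl fun b hb => h b (mem_of_mem_erase hb) (ne_of_mem_erase hb)]
    linarith
  rw [this, Int.floor_intCast]

theorem two_mul_card_image_le {α β : Type*} [DecidableEq β] (f : α → β) (s : Finset α)
    (h : ∀ a ∈ s, ∃ b ∈ s, f b = f a ∧ b ≠ a) : 2 * #(s.image f) ≤ #s :=
  mul_card_image_le_card s 2 fun x hx => by
    obtain ⟨a, ha, rfl⟩ := mem_image.mp hx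
    obtain ⟨b, hb, hba, hne⟩ := h a ha
    exact one_lt_card.mpr ⟨a, mem_filter.mpr ⟨ha, rfl⟩, b, mem_filter.mpr ⟨hb, hba⟩, hne.symm⟩

/-- For `z ≠ 0`, the largest `t ≥ 0` for which `q + t * z` stays between `⌊q⌋` and `⌈q⌉`. -/
noncomputable def exitTime (q z : ℚ) : ℚ := if 0 < z then (⌈q⌉ - q) / z else (⌊q⌋ - q) / z

theorem exitTime_nonneg (q z : ℚ) : 0 ≤ exitTime q z := by
  unfold exitTime
  split_ifs with hz
  · exact div_nonneg (by linarith [Int.le_ceil q]) hz.le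
  · exact div_nonneg_of_nonpos (by linarith [Int.floor_le q]) (not_lt.mp hz)

theorem floor_le_add_mul_and_le_ceil {q z t : ℚ} (ht₀ : 0 ≤ t) (ht : t ≤ exitTime q z) :
    (⌊q⌋ : ℚ) ≤ q + t * z ∧ q + t * z ≤ ⌈q⌉ := by
  have hf := Int.floor_le q
  have hc := Int.le_ceil q
  unfold exitTime at ht
  rcases lt_trichotomy z 0 with hz | rfl | hz
  · rw [if_neg hz.not_gt, le_div_iff_of_neg hz] at ht
    constructor <;> nlinarith
  · simp [hf, hc]
  · rw [if_pos hz, le_div_iff₀ hz] at ht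
    constructor <;> nlinarith

theorem floor_add_exitTime_mul {q z : ℚ} (hz : z ≠ 0) :
    (⌊q + exitTime q z * z⌋ : ℚ) = q + exitTime q z * z := by
  unfold exitTime
  split_ifs <;> rw [div_mul_cancel₀ _ hz, add_sub_cancel, Int.floor_intCast]

section MatrixRounding

variable {I J : Type*} [Fintype I] [Fintype J]

theorem sum_col_eq_zero_of_sum_rows_eq_zero {R : Type*} [AddCommMonoid R] {z : I × J → R}
    (hr : ∀ i, ∑ j, z (i, j) = 0) {j₀ : J} (hc : ∀ j ≠ j₀, ∑ i, z (i, j) = 0) :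
    ∑ i, z (i, j₀) = 0 := by
  have htot : ∑ j, ∑ i, z (i, j) = 0 := by
    rw [sum_comm]
    exact sum_eq_zero fun i _ => hr i
  rwa [sum_eq_single j₀ (fun j _ hj => hc j hj) (by simp)] at htot

theorem exists_ne_zero_supported_sums_eq_zero (F : Finset (I × J)) (hF : F.Nonempty)
    (hrow : ∀ p ∈ F, ∃ q ∈ F, q.1 = p.1 ∧ q ≠ p) (hcol : ∀ p ∈ F, ∃ q ∈ F, q.2 = p.2 ∧ q ≠ p) :
    ∃ z : I × J → ℚ, z ≠ 0 ∧ (∀ p ∉ F, z p = 0) ∧ (∀ i, ∑ j, z (i, j) = 0) ∧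
      ∀ j, ∑ i, z (i, j) = 0 := by
  classical
  obtain ⟨p₀, hp₀⟩ := hF
  let R := F.image Prod.fst
  let C := (F.image Prod.snd).erase p₀.2
  -- One condition per row of `R`, per column of `F` but one (it follows from the others) and
  -- per cell outside `F`; as rows and columns meet `F` at least twice, there are fewer
  -- conditions than unknowns.
  let L : (I × J → ℚ) →ₗ[ℚ] (R → ℚ) × (C → ℚ) × ((Fᶜ : Finset (I × J)) → ℚ) :=
    { toFun := fun z => (fun i => ∑ j, z (i, j), fun j => ∑ i, z (i, j), fun p => z p)
      map_add' := fun z z' => by ext <;> simp [sum_add_distrib]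
      map_smul' := fun c z => by ext <;> simp [mul_sum] }
  have hdim : Module.finrank ℚ ((R → ℚ) × (C → ℚ) × ((Fᶜ : Finset (I × J)) → ℚ)) <
      Module.finrank ℚ (I × J → ℚ) := by
    have hR : 2 * #R ≤ #F := two_mul_card_image_le Prod.fst F hrow
    have hC := two_mul_card_image_le Prod.snd F hcol
    have hp : p₀.2 ∈ F.image Prod.snd := mem_image_of_mem _ hp₀
    have hFc := card_compl_add_card F
    have := card_pos.mpr ⟨_, hp⟩
    simp only [Module.finrank_prod, Module.finrank_fintype_fun_eq_card, Fintype.card_coe, C,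
      card_erase_of_mem hp]
    omega
  obtain ⟨z, hzL, hz0⟩ :=
    (Submodule.ne_bot_iff _).mp (LinearMap.ker_ne_bot_of_finrank_lt (f := L) hdim)
  obtain ⟨hLR, hLC, hLF⟩ : (∀ i : R, ∑ j, z (i, j) = 0) ∧ (∀ j : C, ∑ i, z (i, j) = 0) ∧
      ∀ p : (Fᶜ : Finset (I × J)), z p = 0 := by
    simpa [L, Prod.ext_iff, funext_iff] using LinearMap.mem_ker.mp hzL
  have hzF : ∀ p ∉ F, z p = 0 := fun p hp => hLF ⟨p, mem_compl.mpr hp⟩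
  have hr : ∀ i, ∑ j, z (i, j) = 0 := by
    intro i
    by_cases hi : i ∈ R
    · exact hLR ⟨i, hi⟩
    · exact sum_eq_zero fun j _ => hzF _ fun h => hi (mem_image_of_mem Prod.fst h)
  have hc : ∀ j ≠ p₀.2, ∑ i, z (i, j) = 0 := by
    intro j hj
    by_cases hjC : j ∈ F.image Prod.snd
    · exact hLC ⟨j, mem_erase.mpr ⟨hj, hjC⟩⟩
    · exact sum_eq_zero fun i _ => hzF _ fun h => hjC (mem_image_of_mem Prod.snd h)
  refine ⟨z, hz0, hzF, hr, fun j => ?_⟩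
  by_cases hj : j = p₀.2
  · exact hj ▸ sum_col_eq_zero_of_sum_rows_eq_zero hr hc
  · exact hc j hj

def nonIntegral (y : I → J → ℚ) : Finset (I × J) := {p | (⌊y p.1 p.2⌋ : ℚ) ≠ y p.1 p.2}

theorem exists_rounding_step (y : I → J → ℚ) (z : I × J → ℚ) (hz : z ≠ 0)
    (hzF : ∀ p ∉ nonIntegral y, z p = 0) :
    ∃ t : ℚ, (∀ i j, (⌊y i j⌋ : ℚ) ≤ y i j + t * z (i, j) ∧ y i j + t * z (i, j) ≤ ⌈y i j⌉) ∧
      nonIntegral (fun i j => y i j + t * z (i, j)) ⊂ nonIntegral y := by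
  classical
  let S : Finset (I × J) := {p | z p ≠ 0}
  have hS : S.Nonempty := by
    obtain ⟨p, hp⟩ := Function.ne_iff.mp hz
    exact ⟨p, by simpa [S] using hp⟩
  let τ : I × J → ℚ := fun p => exitTime (y p.1 p.2) (z p)
  obtain ⟨p₀, hp₀S, hp₀⟩ := exists_mem_eq_inf' hS τ
  have hp₀z : z p₀ ≠ 0 := by simpa [S] using hp₀S
  refine ⟨S.inf' hS τ, fun i j => ?_, ?_⟩
  · by_cases hij : z (i, j) = 0
    · simp [hij, Int.floor_le, Int.le_ceil]
    · exact floor_le_add_mul_and_le_ceil (le_inf' hS _ fun p _ => exitTime_nonneg _ _)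
        (inf'_le τ (by simpa [S] using hij))
  · have hsub : nonIntegral (fun i j => y i j + S.inf' hS τ * z (i, j)) ⊆ nonIntegral y := by
      intro p hp
      by_contra hpy
      simp only [nonIntegral, mem_filter, mem_univ, true_and, hzF p hpy, mul_zero, add_zero,
        not_not] at hp hpy
      exact hp hpy
    refine (ssubset_iff_of_subset hsub).mpr ⟨p₀, ?_, ?_⟩
    · by_contra h
      exact hp₀z (hzF p₀ h)
    · simpa [nonIntegral, hp₀, τ] using floor_add_exitTime_mul hp₀z

theorem exists_int_rounding_of_sums_int (y : I → J → ℚ) (hr : ∀ i, ∃ n : ℤ, ∑ j, y i j = n)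
    (hc : ∀ j, ∃ n : ℤ, ∑ i, y i j = n) :
    ∃ s : I → J → ℤ, (∀ i j, ⌊y i j⌋ ≤ s i j ∧ s i j ≤ ⌈y i j⌉) ∧
      (∀ i, ∑ j, (s i j : ℚ) = ∑ j, y i j) ∧ ∀ j, ∑ i, (s i j : ℚ) = ∑ i, y i j := by
  classical
  induction hF : nonIntegral y using Finset.strongInduction generalizing y with
  | H F ih =>
  rcases F.eq_empty_or_nonempty with rfl | hne
  · have hint : ∀ i j, (⌊y i j⌋ : ℚ) = y i j := fun i j => by
      by_contra h
      exact notMem_empty (i, j) (hF ▸ by simpa [nonIntegral] using h)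
    exact ⟨fun i j => ⌊y i j⌋, fun i j => ⟨le_rfl, Int.floor_le_ceil _⟩,
      fun i => sum_congr rfl fun j _ => hint i j, fun j => sum_congr rfl fun i _ => hint i j⟩
  have hrow : ∀ p ∈ F, ∃ q ∈ F, q.1 = p.1 ∧ q ≠ p := by
    intro p hp
    obtain ⟨n, hn⟩ := hr p.1
    obtain ⟨j, -, hj, hyj⟩ := exists_ne_not_int_of_sum_eq_int hn (mem_univ p.2)
      (by simpa [nonIntegral, ← hF] using hp)
    exact ⟨(p.1, j), by simpa [nonIntegral, ← hF] using hyj, rfl, fun h => hj (congrArg Prod.snd h)⟩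
  have hcol : ∀ p ∈ F, ∃ q ∈ F, q.2 = p.2 ∧ q ≠ p := by
    intro p hp
    obtain ⟨n, hn⟩ := hc p.2
    obtain ⟨i, -, hi, hyi⟩ := exists_ne_not_int_of_sum_eq_int (f := fun i => y i p.2) hn
      (mem_univ p.1) (by simpa [nonIntegral, ← hF] using hp)
    exact ⟨(i, p.2), by simpa [nonIntegral, ← hF] using hyi, rfl, fun h => hi (congrArg Prod.fst h)⟩
  obtain ⟨z, hz, hzF, hzr, hzc⟩ := exists_ne_zero_supported_sums_eq_zero F hne hrow hcol
  obtain ⟨t, hbound, hsub⟩ := exists_rounding_step y z hz (hF ▸ hzF)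
  have hr' : ∀ i, ∑ j, (y i j + t * z (i, j)) = ∑ j, y i j := fun i => by
    rw [sum_add_distrib, ← mul_sum, hzr, mul_zero, add_zero]
  have hc' : ∀ j, ∑ i, (y i j + t * z (i, j)) = ∑ i, y i j := fun j => by
    rw [sum_add_distrib, ← mul_sum, hzc, mul_zero, add_zero]
  obtain ⟨s, hs, hsr, hsc⟩ := ih _ (hF ▸ hsub) _ (fun i => hr' i ▸ hr i) (fun j => hc' j ▸ hc j) rfl
  refine ⟨s, fun i j => ⟨?_, ?_⟩, fun i => (hsr i).trans (hr' i), fun j => (hsc j).trans (hc' j)⟩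
  · exact (Int.le_floor.mpr (hbound i j).1).trans (hs i j).1
  · exact (hs i j).2.trans (Int.ceil_le.mpr (hbound i j).2)

noncomputable def border (y : I → J → ℚ) : Option I → Option J → ℚ
  | some i, some j => y i j
  | some i, none => ⌈∑ j, y i j⌉ - ∑ j, y i j
  | none, some j => ⌈∑ i, y i j⌉ - ∑ i, y i j
  | none, none => ⌈∑ j, (⌈∑ i, y i j⌉ - ∑ i, y i j)⌉ - ∑ j, (⌈∑ i, y i j⌉ - ∑ i, y i j)

theorem sum_border_some_left (y : I → J → ℚ) (i : I) :
    ∑ oj, border y (some i) oj = ⌈∑ j, y i j⌉ := by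
  simp [Fintype.sum_option, border]

theorem sum_border_none_left (y : I → J → ℚ) :
    ∑ oj, border y none oj = ⌈∑ j, (⌈∑ i, y i j⌉ - ∑ i, y i j)⌉ := by
  simp [Fintype.sum_option, border]

theorem sum_border_some_right (y : I → J → ℚ) (j : J) :
    ∑ oi, border y oi (some j) = ⌈∑ i, y i j⌉ := by
  simp [Fintype.sum_option, border]

theorem sum_border_none_right (y : I → J → ℚ) :
    ∑ oi, border y oi none =
      ((∑ i, ⌈∑ j, y i j⌉ + ⌈∑ j, (⌈∑ i, y i j⌉ - ∑ i, y i j)⌉ - ∑ j, ⌈∑ i, y i j⌉ : ℤ) : ℚ) := by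
  simp only [Fintype.sum_option, border, sum_sub_distrib, sum_comm (γ := I)]
  push_cast
  ring

theorem exists_nat_rounding (y : I → J → ℚ) (hy : ∀ i j, 0 ≤ y i j) :
    ∃ s : I → J → ℕ, (∀ i j, approx (s i j) (y i j)) ∧
      (∀ i, approx (∑ j, s i j) (∑ j, y i j)) ∧ (∀ j, approx (∑ i, s i j) (∑ i, y i j)) ∧
      approx (∑ i, ∑ j, s i j) (∑ i, ∑ j, y i j) := by
  obtain ⟨S, hS, hSr, hSc⟩ := exists_int_rounding_of_sums_int (border y)
    (Option.rec ⟨_, sum_border_none_left y⟩ fun i => ⟨_, sum_border_some_left y i⟩)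
    (Option.rec ⟨_, sum_border_none_right y⟩ fun j => ⟨_, sum_border_some_right y j⟩)
  have hS' : ∀ oi oj, |(S oi oj : ℚ) - border y oi oj| < 1 := fun oi oj =>
    floor_le_and_le_ceil_iff.mp (hS oi oj)
  have hcast : ∀ i j, ((S (some i) (some j)).toNat : ℚ) = S (some i) (some j) := fun i j => by
    exact_mod_cast Int.toNat_of_nonneg ((Int.floor_nonneg.mpr (hy i j)).trans (hS _ _).1)
  have hrow : ∀ i, ∑ j, (S (some i) (some j) : ℚ) - ∑ j, y i j =
      -(S (some i) none - (⌈∑ j, y i j⌉ - ∑ j, y i j)) := fun i => by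
    have := (hSr (some i)).trans (sum_border_some_left y i)
    rw [Fintype.sum_option] at this
    linarith
  have hcol : ∀ j, ∑ i, (S (some i) (some j) : ℚ) - ∑ i, y i j =
      -(S none (some j) - (⌈∑ i, y i j⌉ - ∑ i, y i j)) := fun j => by
    have := (hSc (some j)).trans (sum_border_some_right y j)
    rw [Fintype.sum_option] at this
    linarith
  have htot : ∑ i, ∑ j, (S (some i) (some j) : ℚ) - ∑ i, ∑ j, y i j =
      S none none - border y none none := by
    have hcorner := (hSr none).trans (sum_border_none_left y)
    rw [Fintype.sum_option] at hcorner
    have hcols := sum_congr rfl fun j (_ : j ∈ univ) => hcol j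
    simp only [sum_sub_distrib, sum_neg_distrib] at hcols
    simp only [border, sum_sub_distrib] at hcorner ⊢
    rw [sum_comm, sum_comm (f := y)]
    linarith
  refine ⟨fun i j => (S (some i) (some j)).toNat, fun i j => ?_, fun i => ?_, fun j => ?_, ?_⟩ <;>
    simp only [approx_iff_abs_sub_lt_one, Nat.cast_sum, hcast]
  · exact hS' (some i) (some j)
  · rw [hrow, abs_neg]
    exact hS' (some i) none
  · rw [hcol, abs_neg]
    exact hS' none (some j)
  · rw [htot]
    exact hS' none none

end MatrixRounding

theorem ceil_sum_le_card_filter_pos {ι : Type*} (s : Finset ι) (w : ι → ℚ)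
    (hw₀ : ∀ i ∈ s, 0 ≤ w i) (hw₁ : ∀ i ∈ s, w i ≤ 1) : ⌈∑ i ∈ s, w i⌉ ≤ #{i ∈ s | 0 < w i} := by
  rw [Int.ceil_le, ← sum_filter_of_ne fun i hi hne => (hw₀ i hi).lt_of_ne' hne]
  exact_mod_cast (sum_le_sum fun i hi => hw₁ i (mem_filter.mp hi).1).trans_eq (by simp)

theorem sum_filter_eq_sum_sum_filter_and {E I J R : Type*} [Fintype E] [DecidableEq I]
    [Fintype J] [DecidableEq J] [AddCommMonoid R] (g : E → R) (f : E → I) (c : E → J) (i : I) :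
    ∑ e with f e = i, g e = ∑ j, ∑ e with f e = i ∧ c e = j, g e := by
  rw [← sum_fiberwise _ c]
  simp only [filter_filter]

section Selection

variable {E : Type*} [DecidableEq E]

def RoundsOn (w : E → ℚ) (M S : Finset E) : Prop := approx #{e ∈ S | e ∈ M} (∑ e ∈ S, w e)

def RoundsAlong {K : Type*} [DecidableEq K] (w : E → ℚ) (f : E → K) (M S : Finset E) : Prop :=
  RoundsOn w M S ∧ ∀ k, RoundsOn w M {e ∈ S | f e = k}

theorem RoundsAlong.comp_injective {K L : Type*} [DecidableEq K] [DecidableEq L] {w : E → ℚ}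
    {g : E → K} {M S : Finset E} (h : RoundsAlong w g M S) {u : K → L}
    (hu : Function.Injective u) : RoundsAlong w (u ∘ g) M S := by
  refine ⟨h.1, fun l => ?_⟩
  by_cases hl : ∃ k, u k = l
  · obtain ⟨k, rfl⟩ := hl
    simpa only [Function.comp_apply, hu.eq_iff] using h.2 k
  · push Not at hl
    simp [RoundsOn, approx, hl]

variable [Fintype E]

theorem exists_finset_card_filter_eq {ι : Type*} [DecidableEq ι] (P : E → Prop) [DecidablePred P]
    (p : E → ι) (t : ι → ℕ) (ht : ∀ x, t x ≤ #{e | p e = x ∧ P e}) :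
    ∃ M : Finset E, (∀ e ∈ M, P e) ∧ ∀ x, #{e ∈ M | p e = x} = t x := by
  choose N hN hNcard using fun x => exists_subset_card_eq (ht x)
  refine ⟨({e | e ∈ N (p e)} : Finset E), fun e he => ?_, fun x => ?_⟩
  · exact (mem_filter.mp (hN _ (mem_filter.mp he).2)).2.2
  rw [← hNcard x]
  congr 1
  ext e
  simp only [mem_filter, mem_univ, true_and]
  constructor
  · rintro ⟨he, rfl⟩
    exact he
  · intro he
    obtain ⟨-, rfl, -⟩ := mem_filter.mp (hN x he)
    exact ⟨he, rfl⟩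

variable {I J : Type*} [Fintype I] [Fintype J] [DecidableEq I] [DecidableEq J]

theorem exists_finset_roundsAlong (w : E → ℚ) (hw₀ : ∀ e, 0 ≤ w e) (hw₁ : ∀ e, w e ≤ 1)
    (f : E → I) (c : E → J) :
    ∃ M : Finset E, (∀ e ∈ M, 0 < w e) ∧ RoundsAlong w f M univ ∧
      ∀ j, RoundsAlong w f M {e | c e = j} := by
  let y : I → J → ℚ := fun i j => ∑ e with f e = i ∧ c e = j, w e
  obtain ⟨s, hcell, hrow, hcol, htot⟩ :=
    exists_nat_rounding y fun i j => sum_nonneg fun e _ => hw₀ e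
  have hs : ∀ i j, s i j ≤ #{e | (f e, c e) = (i, j) ∧ 0 < w e} := fun i j => by
    have := (hcell i j).2.trans
      (ceil_sum_le_card_filter_pos _ _ (fun e _ => hw₀ e) fun e _ => hw₁ e)
    simpa only [filter_filter, Prod.mk.injEq, Nat.cast_le] using this
  obtain ⟨M, hMpos, hM⟩ :=
    exists_finset_card_filter_eq _ (fun e => (f e, c e)) (fun x => s x.1 x.2) fun x => hs x.1 x.2
  let χ : E → ℕ := fun e => if e ∈ M then 1 else 0
  have hχ : ∀ i j, ∑ e with f e = i ∧ c e = j, χ e = s i j := fun i j => by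
    rw [← card_filter, ← hM (i, j)]
    congr 1
    ext e
    simp [and_comm]
  refine ⟨M, hMpos, ⟨?_, fun i => ?_⟩, fun j => ⟨?_, fun i => ?_⟩⟩ <;> rw [RoundsOn, card_filter]
  · rw [← sum_fiberwise univ f χ, ← sum_fiberwise univ f w]
    simp only [sum_filter_eq_sum_sum_filter_and _ f c, hχ]
    exact htot
  · rw [sum_filter_eq_sum_sum_filter_and χ f c, sum_filter_eq_sum_sum_filter_and w f c]
    simp only [hχ]
    exact hrow i
  · rw [sum_filter_eq_sum_sum_filter_and χ c f, sum_filter_eq_sum_sum_filter_and w c f]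
    simp only [and_comm (a := c _ = j), hχ]
    exact hcol j
  · simp only [filter_filter, and_comm (a := c _ = j)]
    rw [hχ]
    exact hcell i j

end Selection

section Hypergraph

variable {V E H : Type} [Fintype H] [DecidableEq V] [DecidableEq E]

def degOn (ψ : H → V) (φ : H → E) (S : Finset E) (v : V) : ℕ :=
  ∑ e ∈ S, (edgeVerts ψ φ e).count v

def mOn (ψ : H → V) (φ : H → E) (S : Finset E) (x y z : V) : ℕ :=
  #{e ∈ S | edgeVerts ψ φ e = {x, y, z}}

variable [Fintype E]

theorem card_filter_and_eq_sum_count (ψ : H → V) (φ : H → E) (P : E → Prop) [DecidablePred P]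
    (v : V) : #{h | ψ h = v ∧ P (φ h)} = ∑ e with P e, (edgeVerts ψ φ e).count v := by
  classical
  rw [card_eq_sum_card_fiberwise (f := φ) (t := {e | P e})
    fun h hh => by simpa using (mem_filter.mp hh).2.2]
  refine sum_congr rfl fun e he => ?_
  rw [edgeVerts, Multiset.count_map, ← Finset.filter_val, Finset.card_val]
  congr 1
  ext h
  simp only [mem_filter, mem_univ, true_and]
  constructor
  · rintro ⟨⟨rfl, -⟩, rfl⟩
    exact ⟨rfl, rfl⟩
  · rintro ⟨rfl, rfl⟩
    exact ⟨⟨rfl, by simpa using he⟩, rfl⟩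

theorem degOn_univ (ψ : H → V) (φ : H → E) (v : V) : degOn ψ φ univ v = degF ψ v := by
  simpa [degF, degOn] using (card_filter_and_eq_sum_count ψ φ (fun _ => True) v).symm

theorem degOn_filter_color {k : ℕ} (ψ : H → V) (φ : H → E) (K : E → Fin k) (j : Fin k) (v : V) :
    degOn ψ φ {e | K e = j} v = degFc ψ φ K j v :=
  (card_filter_and_eq_sum_count ψ φ (K · = j) v).symm

theorem mOn_univ (ψ : H → V) (φ : H → E) (x y z : V) : mOn ψ φ univ x y z = mF ψ φ x y z := rfl

theorem mOn_filter_color {k : ℕ} (ψ : H → V) (φ : H → E) (K : E → Fin k) (j : Fin k) (x y z : V) :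
    mOn ψ φ {e | K e = j} x y z = mFc ψ φ K j x y z := by
  rw [mOn, filter_filter, mFc]

theorem count_edgeVerts_le (ψ : H → V) (φ : H → E) (h3 : ∀ e : E, #{h | φ h = e} = 3) {α : V}
    {g : ℕ} (hg : 2 ≤ g) (hgα : g ≤ 2 → mF ψ φ α α α = 0) (e : E) :
    (edgeVerts ψ φ e).count α ≤ g := by
  have hcard : Multiset.card (edgeVerts ψ φ e) = 3 := by
    rw [edgeVerts, Multiset.card_map]
    exact h3 e
  have hle := hcard ▸ Multiset.count_le_card α (edgeVerts ψ φ e)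
  by_contra! hlt
  have hα : edgeVerts ψ φ e = {α, α, α} := by
    rw [show ({α, α, α} : Multiset V) = Multiset.replicate 3 α by rfl, Multiset.eq_replicate]
    exact ⟨hcard, fun b hb => (Multiset.count_eq_card.mp (by omega) b hb).symm⟩
  have : 0 < mF ψ φ α α α := card_pos.mpr ⟨e, mem_filter.mpr ⟨mem_univ e, hα⟩⟩
  omega

end Hypergraph

theorem exists_hinges_image_eq {V E H : Type} [Fintype H] [DecidableEq E] [DecidableEq H]
    (ψ : H → V) (φ : H → E) {α : V} {M : Finset E} (hM : ∀ e ∈ M, α ∈ edgeVerts ψ φ e) :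
    ∃ X : Finset H, (∀ x ∈ X, ψ x = α) ∧ Set.InjOn φ X ∧ X.image φ = M := by
  have : ∀ e ∈ M, ∃ h, φ h = e ∧ ψ h = α := fun e he => by
    obtain ⟨h, hh, hψ⟩ := Multiset.mem_map.mp (hM e he)
    exact ⟨h, by simpa using hh, hψ⟩
  choose sel hsel using this
  refine ⟨M.attach.image fun e : M => sel e.1 e.2, ?_, ?_, ?_⟩
  · simp only [mem_image]
    rintro _ ⟨e, -, rfl⟩
    exact (hsel e e.2).2
  · simp only [coe_image, Set.InjOn, Set.mem_image, mem_coe]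
    rintro _ ⟨e, -, rfl⟩ _ ⟨e', -, rfl⟩ hee'
    rw [(hsel e e.2).1, (hsel e' e'.2).1] at hee'
    rw [Subtype.ext hee']
  · ext e
    simp [hsel]

section Split

variable {V E H : Type} [DecidableEq H]

def splitAt (ψ : H → V) (X : Finset H) (h : H) : Option V := if h ∈ X then none else some (ψ h)

variable {ψ : H → V} {φ : H → E} {α : V} {X : Finset H}

theorem splitAt_eq_some_or (hX : ∀ x ∈ X, ψ x = α) (h : H) :
    splitAt ψ X h = some (ψ h) ∨ (ψ h = α ∧ splitAt ψ X h = none) := by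
  unfold splitAt
  split_ifs with hh
  · exact Or.inr ⟨hX h hh, rfl⟩
  · exact Or.inl rfl

variable [Fintype H] [DecidableEq E]

theorem edgeVerts_splitAt_cases (hX : ∀ x ∈ X, ψ x = α) (hinj : Set.InjOn φ X) (e : E) :
    (e ∉ X.image φ ∧ edgeVerts (splitAt ψ X) φ e = (edgeVerts ψ φ e).map some) ∨
      (e ∈ X.image φ ∧ ∃ t, edgeVerts ψ φ e = α ::ₘ t ∧
        edgeVerts (splitAt ψ X) φ e = none ::ₘ t.map some) := by
  by_cases he : e ∈ X.image φ
  · obtain ⟨x, hx, rfl⟩ := mem_image.mp he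
    obtain ⟨t, ht⟩ :=
      Multiset.exists_cons_of_mem (s := (univ.filter (φ · = φ x)).val) (a := x) (by simp)
    have hnd := ht ▸ (univ.filter (φ · = φ x)).nodup
    refine Or.inr ⟨he, t.map ψ, ?_, ?_⟩
    · rw [edgeVerts, ht, Multiset.map_cons, hX x hx]
    · rw [edgeVerts, ht, Multiset.map_cons, Multiset.map_map]
      refine congrArg₂ _ (if_pos hx) (Multiset.map_congr rfl fun h hh => if_neg fun hhX => ?_)
      have hφ : φ h = φ x := by simpa using (ht ▸ Multiset.mem_cons_of_mem hh :
        h ∈ (univ.filter (φ · = φ x)).val)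
      exact (Multiset.nodup_cons.mp hnd).1 (hinj hhX hx hφ ▸ hh)
  · refine Or.inl ⟨he, ?_⟩
    rw [edgeVerts, edgeVerts, Multiset.map_map]
    refine Multiset.map_congr rfl fun h hh => if_neg fun hhX => he ?_
    exact mem_image.mpr ⟨h, hhX, by simpa using hh⟩

variable [DecidableEq V]

theorem count_none_edgeVerts_splitAt (hX : ∀ x ∈ X, ψ x = α) (hinj : Set.InjOn φ X) (e : E) :
    (edgeVerts (splitAt ψ X) φ e).count none = if e ∈ X.image φ then 1 else 0 := by
  rcases edgeVerts_splitAt_cases hX hinj e with ⟨he, h⟩ | ⟨he, t, -, h⟩ <;> simp [h, he]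

theorem count_some_edgeVerts_splitAt_add (hX : ∀ x ∈ X, ψ x = α) (hinj : Set.InjOn φ X) (e : E) :
    (edgeVerts (splitAt ψ X) φ e).count (some α) + (if e ∈ X.image φ then 1 else 0) =
      (edgeVerts ψ φ e).count α := by
  rcases edgeVerts_splitAt_cases hX hinj e with ⟨he, h⟩ | ⟨he, t, ht, h⟩
  · simp [h, he, Multiset.count_map_eq_count' _ _ (Option.some_injective V)]
  · simp [h, ht, he, Multiset.count_map_eq_count' _ _ (Option.some_injective V)]

theorem edgeVerts_splitAt_eq_map_some_iff (hX : ∀ x ∈ X, ψ x = α) (hinj : Set.InjOn φ X) (e : E)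
    (w : Multiset V) :
    edgeVerts (splitAt ψ X) φ e = w.map some ↔ e ∉ X.image φ ∧ edgeVerts ψ φ e = w := by
  rcases edgeVerts_splitAt_cases hX hinj e with ⟨he, h⟩ | ⟨he, t, -, h⟩
  · rw [h, (Multiset.map_injective (Option.some_injective V)).eq_iff]
    exact (and_iff_right he).symm
  · rw [h]
    simp only [he, not_true_eq_false, false_and, iff_false]
    intro hw
    simpa using congrArg (Multiset.count none) hw

theorem edgeVerts_splitAt_eq_none_cons_iff (hX : ∀ x ∈ X, ψ x = α) (hinj : Set.InjOn φ X) (e : E)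
    (w : Multiset V) :
    edgeVerts (splitAt ψ X) φ e = none ::ₘ w.map some ↔
      e ∈ X.image φ ∧ edgeVerts ψ φ e = α ::ₘ w := by
  rcases edgeVerts_splitAt_cases hX hinj e with ⟨he, h⟩ | ⟨he, t, ht, h⟩
  · rw [h]
    simp only [he, false_and, iff_false]
    intro hw
    simpa using congrArg (Multiset.count none) hw
  · rw [h, ht, Multiset.cons_inj_right, Multiset.cons_inj_right,
      (Multiset.map_injective (Option.some_injective V)).eq_iff]
    exact (and_iff_right he).symm

theorem degOn_splitAt_none (hX : ∀ x ∈ X, ψ x = α) (hinj : Set.InjOn φ X) (S : Finset E) :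
    degOn (splitAt ψ X) φ S none = #{e ∈ S | e ∈ X.image φ} := by
  rw [degOn, card_filter]
  exact sum_congr rfl fun e _ => count_none_edgeVerts_splitAt hX hinj e

theorem degOn_splitAt_some_add (hX : ∀ x ∈ X, ψ x = α) (hinj : Set.InjOn φ X) (S : Finset E) :
    degOn (splitAt ψ X) φ S (some α) + #{e ∈ S | e ∈ X.image φ} = degOn ψ φ S α := by
  rw [degOn, degOn, card_filter, ← sum_add_distrib]
  exact sum_congr rfl fun e _ => count_some_edgeVerts_splitAt_add hX hinj e

theorem card_filter_splitAt_eq_map_some_add (hX : ∀ x ∈ X, ψ x = α) (hinj : Set.InjOn φ X)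
    (S : Finset E) (w : Multiset V) :
    #{e ∈ S | edgeVerts (splitAt ψ X) φ e = w.map some} +
        #{e ∈ {e ∈ S | edgeVerts ψ φ e = w} | e ∈ X.image φ} =
      #{e ∈ S | edgeVerts ψ φ e = w} := by
  rw [← card_filter_add_card_filter_not (s := {e ∈ S | edgeVerts ψ φ e = w}) (· ∈ X.image φ),
    add_comm]
  congr 2
  ext e
  simp only [mem_filter, edgeVerts_splitAt_eq_map_some_iff hX hinj]
  tauto

theorem card_filter_splitAt_eq_none_cons (hX : ∀ x ∈ X, ψ x = α) (hinj : Set.InjOn φ X)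
    (S : Finset E) (w : Multiset V) :
    #{e ∈ S | edgeVerts (splitAt ψ X) φ e = none ::ₘ w.map some} =
      #{e ∈ {e ∈ S | edgeVerts ψ φ e = α ::ₘ w} | e ∈ X.image φ} := by
  congr 1
  ext e
  simp only [mem_filter, edgeVerts_splitAt_eq_none_cons_iff hX hinj]
  tauto

theorem mOn_splitAt_none_none (hX : ∀ x ∈ X, ψ x = α) (hinj : Set.InjOn φ X) (S : Finset E)
    (z : Option V) : mOn (splitAt ψ X) φ S none none z = 0 := by
  refine card_eq_zero.mpr (filter_eq_empty_iff.mpr fun e _ he => ?_)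
  have := count_none_edgeVerts_splitAt hX hinj e
  rw [he] at this
  split_ifs at this <;> simp at this

end Split

section SplitEstimates

variable {V E H : Type} [Fintype H] [DecidableEq V] [DecidableEq E]

def splitWeight (ψ : H → V) (φ : H → E) (α : V) (g : ℕ) (e : E) : ℚ :=
  ((edgeVerts ψ φ e).count α : ℚ) / g

variable {ψ : H → V} {φ : H → E} {α : V} {g : ℕ} {M S : Finset E}

theorem RoundsAlong.approx_card_filter
    (hS : RoundsAlong (splitWeight ψ φ α g) (edgeVerts ψ φ) M S) :
    approx #{e ∈ S | e ∈ M} ((degOn ψ φ S α : ℚ) / g) := by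
  simpa only [RoundsOn, splitWeight, degOn, Nat.cast_sum, sum_div] using hS.1

theorem RoundsAlong.approx_card_filter_edgeVerts_eq
    (hS : RoundsAlong (splitWeight ψ φ α g) (edgeVerts ψ φ) M S)
    (μ : Multiset V) :
    approx #{e ∈ {e ∈ S | edgeVerts ψ φ e = μ} | e ∈ M}
      ((#{e ∈ S | edgeVerts ψ φ e = μ} : ℚ) * (μ.count α : ℚ) / g) := by
  have := hS.2 μ
  rwa [RoundsOn, sum_congr rfl fun e he => by rw [splitWeight, (mem_filter.mp he).2], sum_const,
    nsmul_eq_mul, ← mul_div_assoc] at this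

variable [DecidableEq H] {X : Finset H}

theorem approx_degOn_splitAt_none (hX : ∀ x ∈ X, ψ x = α) (hinj : Set.InjOn φ X)
    (hS : RoundsAlong (splitWeight ψ φ α g) (edgeVerts ψ φ) (X.image φ) S) :
    approx (degOn (splitAt ψ X) φ S none) ((degOn ψ φ S α : ℚ) / g) := by
  rw [degOn_splitAt_none hX hinj]
  exact hS.approx_card_filter

theorem approx_degOn_splitAt_some (hX : ∀ x ∈ X, ψ x = α) (hinj : Set.InjOn φ X) (hg : g ≠ 0)
    (hS : RoundsAlong (splitWeight ψ φ α g) (edgeVerts ψ φ) (X.image φ) S) :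
    approx (degOn (splitAt ψ X) φ S (some α)) ((degOn ψ φ S α : ℚ) * ((g : ℚ) - 1) / g) := by
  have := approx_sub_of_add_eq (degOn_splitAt_some_add hX hinj S) hS.approx_card_filter
  rwa [show (degOn ψ φ S α : ℚ) - degOn ψ φ S α / g = degOn ψ φ S α * (g - 1) / g by
    field_simp] at this

theorem approx_mOn_splitAt_none (hX : ∀ x ∈ X, ψ x = α) (hinj : Set.InjOn φ X)
    (hS : RoundsAlong (splitWeight ψ φ α g) (edgeVerts ψ φ) (X.image φ) S)
    (x y : V) {c : ℚ} (hc : (({α, x, y} : Multiset V).count α : ℚ) = c) :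
    approx (mOn (splitAt ψ X) φ S none (some x) (some y)) (c * mOn ψ φ S α x y / g) := by
  have hμ : ({none, some x, some y} : Multiset (Option V)) =
      none ::ₘ ({x, y} : Multiset V).map some := by
    simp
  rw [mOn, hμ, card_filter_splitAt_eq_none_cons hX hinj, mul_comm, ← hc]
  exact hS.approx_card_filter_edgeVerts_eq _

theorem approx_mOn_splitAt_some (hX : ∀ x ∈ X, ψ x = α) (hinj : Set.InjOn φ X) (hg : g ≠ 0)
    (hS : RoundsAlong (splitWeight ψ φ α g) (edgeVerts ψ φ) (X.image φ) S)
    (x y z : V) {c : ℚ} (hc : (({x, y, z} : Multiset V).count α : ℚ) = c) :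
    approx (mOn (splitAt ψ X) φ S (some x) (some y) (some z))
      ((mOn ψ φ S x y z : ℚ) * ((g : ℚ) - c) / g) := by
  have hμ : ({some x, some y, some z} : Multiset (Option V)) =
      ({x, y, z} : Multiset V).map some := by
    simp
  have := approx_sub_of_add_eq (card_filter_splitAt_eq_map_some_add hX hinj S _)
    (hS.approx_card_filter_edgeVerts_eq {x, y, z})
  rw [hc, show ∀ n : ℚ, n - n * c / g = n * (g - c) / g from fun n => by field_simp] at this
  rwa [mOn, hμ]

end SplitEstimates

/-- Properties (B1)–(B12) of the detachment `ψ'` of `ψ`, counted inside the edge class `S`. -/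
def SplitBounds {V E H : Type} [Fintype H] [DecidableEq V] [DecidableEq E]
    (ψ : H → V) (ψ' : H → Option V) (φ : H → E) (S : Finset E) (α : V) (g : ℕ) : Prop :=
  approx (degOn ψ' φ S (some α)) ((degOn ψ φ S α : ℚ) * ((g : ℚ) - 1) / (g : ℚ)) ∧
  approx (degOn ψ' φ S none) ((degOn ψ φ S α : ℚ) / (g : ℚ)) ∧
  (∀ w : V, w ≠ α →
    approx (mOn ψ' φ S (some α) (some w) (some w))
      ((mOn ψ φ S α w w : ℚ) * ((g : ℚ) - 1) / (g : ℚ))) ∧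
  (∀ w : V, w ≠ α →
    approx (mOn ψ' φ S none (some w) (some w)) ((mOn ψ φ S α w w : ℚ) / (g : ℚ))) ∧
  (∀ u w : V, u ≠ α → w ≠ α → u ≠ w →
    approx (mOn ψ' φ S (some α) (some u) (some w))
      ((mOn ψ φ S α u w : ℚ) * ((g : ℚ) - 1) / (g : ℚ))) ∧
  (∀ u w : V, u ≠ α → w ≠ α → u ≠ w →
    approx (mOn ψ' φ S none (some u) (some w)) ((mOn ψ φ S α u w : ℚ) / (g : ℚ))) ∧
  (∀ w : V, w ≠ α → mOn ψ' φ S none none (some w) = 0) ∧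
  (∀ w : V, w ≠ α →
    approx (mOn ψ' φ S (some α) none (some w)) (2 * (mOn ψ φ S α α w : ℚ) / (g : ℚ))) ∧
  (∀ w : V, w ≠ α →
    approx (mOn ψ' φ S (some α) (some α) (some w))
      ((mOn ψ φ S α α w : ℚ) * ((g : ℚ) - 2) / (g : ℚ))) ∧
  (mOn ψ' φ S none none none = 0 ∧ mOn ψ' φ S none none (some α) = 0) ∧
  approx (mOn ψ' φ S (some α) (some α) (some α))
    ((mOn ψ φ S α α α : ℚ) * ((g : ℚ) - 3) / (g : ℚ)) ∧
  approx (mOn ψ' φ S none (some α) (some α)) (3 * (mOn ψ φ S α α α : ℚ) / (g : ℚ))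

theorem splitBounds_splitAt {V E H : Type} [Fintype H] [DecidableEq V] [DecidableEq E]
    [DecidableEq H] {ψ : H → V} {φ : H → E} {α : V} {g : ℕ} {X : Finset H} {S : Finset E}
    (hX : ∀ x ∈ X, ψ x = α) (hinj : Set.InjOn φ X) (hg : g ≠ 0)
    (hS : RoundsAlong (splitWeight ψ φ α g) (edgeVerts ψ φ) (X.image φ) S) :
    SplitBounds ψ (splitAt ψ X) φ S α g := by
  have hnone := approx_mOn_splitAt_none hX hinj hS
  have hsome := approx_mOn_splitAt_some hX hinj hg hS
  have hzero := mOn_splitAt_none_none hX hinj S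
  refine ⟨approx_degOn_splitAt_some hX hinj hg hS, approx_degOn_splitAt_none hX hinj hS,
    fun w hw => hsome α w w (by simp [hw.symm]), fun w hw => ?_,
    fun u w hu hw _ => hsome α u w (by simp [hu.symm, hw.symm]), fun u w hu hw _ => ?_,
    fun w _ => hzero _, fun w hw => ?_, fun w hw => hsome α α w (by simp [hw.symm]),
    ⟨hzero _, hzero _⟩, hsome α α α (by simp), hnone α α (by simp)⟩
  · simpa only [one_mul] using hnone w w (c := 1) (by simp [hw.symm])
  · simpa only [one_mul] using hnone u w (c := 1) (by simp [hu.symm, hw.symm])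
  · rw [mOn, Multiset.insert_eq_cons, Multiset.insert_eq_cons, Multiset.cons_swap]
    exact hnone α w (by simp [hw.symm])

theorem detachment_step_general {V E H : Type} [Fintype E] [Fintype H]
    [DecidableEq V] [DecidableEq E]
    (ψ : H → V) (φ : H → E)
    (h3 : ∀ e : E, (Finset.univ.filter fun h => φ h = e).card = 3)
    (k : ℕ) (K : E → Fin k)
    (α : V) (g : ℕ) (hg : 2 ≤ g)
    (hgα : g ≤ 2 → mF ψ φ α α α = 0) :
    ∃ ψ' : H → Option V,
      -- `F'` is a detachment of `F` splitting `α` into `some α` and `none`: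
      (∀ h : H, ψ' h = some (ψ h) ∨ (ψ h = α ∧ ψ' h = none)) ∧
      -- (B1)
      approx (degF ψ' (some α)) ((degF ψ α : ℚ) * ((g : ℚ) - 1) / (g : ℚ)) ∧
      -- (B2)
      approx (degF ψ' none) ((degF ψ α : ℚ) / (g : ℚ)) ∧
      -- (B3)
      (∀ w : V, w ≠ α →
        approx (mF ψ' φ (some α) (some w) (some w))
          ((mF ψ φ α w w : ℚ) * ((g : ℚ) - 1) / (g : ℚ))) ∧
      -- (B4)
      (∀ w : V, w ≠ α →
        approx (mF ψ' φ none (some w) (some w)) ((mF ψ φ α w w : ℚ) / (g : ℚ))) ∧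
      -- (B5)
      (∀ u w : V, u ≠ α → w ≠ α → u ≠ w →
        approx (mF ψ' φ (some α) (some u) (some w))
          ((mF ψ φ α u w : ℚ) * ((g : ℚ) - 1) / (g : ℚ))) ∧
      -- (B6)
      (∀ u w : V, u ≠ α → w ≠ α → u ≠ w →
        approx (mF ψ' φ none (some u) (some w)) ((mF ψ φ α u w : ℚ) / (g : ℚ))) ∧
      -- (B7)
      (∀ w : V, w ≠ α → mF ψ' φ none none (some w) = 0) ∧
      -- (B8)
      (∀ w : V, w ≠ α →
        approx (mF ψ' φ (some α) none (some w))
          (2 * (mF ψ φ α α w : ℚ) / (g : ℚ))) ∧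
      -- (B9)
      (∀ w : V, w ≠ α →
        approx (mF ψ' φ (some α) (some α) (some w))
          ((mF ψ φ α α w : ℚ) * ((g : ℚ) - 2) / (g : ℚ))) ∧
      -- (B10)
      (mF ψ' φ none none none = 0 ∧ mF ψ' φ none none (some α) = 0) ∧
      -- (B11)
      approx (mF ψ' φ (some α) (some α) (some α))
        ((mF ψ φ α α α : ℚ) * ((g : ℚ) - 3) / (g : ℚ)) ∧
      -- (B12)
      approx (mF ψ' φ none (some α) (some α)) (3 * (mF ψ φ α α α : ℚ) / (g : ℚ)) ∧
      -- colored analogues of (B1)–(B12) for each color class `j`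
      (∀ j : Fin k,
        approx (degFc ψ' φ K j (some α))
          ((degFc ψ φ K j α : ℚ) * ((g : ℚ) - 1) / (g : ℚ)) ∧
        approx (degFc ψ' φ K j none) ((degFc ψ φ K j α : ℚ) / (g : ℚ)) ∧
        (∀ w : V, w ≠ α →
          approx (mFc ψ' φ K j (some α) (some w) (some w))
            ((mFc ψ φ K j α w w : ℚ) * ((g : ℚ) - 1) / (g : ℚ))) ∧
        (∀ w : V, w ≠ α →
          approx (mFc ψ' φ K j none (some w) (some w))
            ((mFc ψ φ K j α w w : ℚ) / (g : ℚ))) ∧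
        (∀ u w : V, u ≠ α → w ≠ α → u ≠ w →
          approx (mFc ψ' φ K j (some α) (some u) (some w))
            ((mFc ψ φ K j α u w : ℚ) * ((g : ℚ) - 1) / (g : ℚ))) ∧
        (∀ u w : V, u ≠ α → w ≠ α → u ≠ w →
          approx (mFc ψ' φ K j none (some u) (some w))
            ((mFc ψ φ K j α u w : ℚ) / (g : ℚ))) ∧
        (∀ w : V, w ≠ α → mFc ψ' φ K j none none (some w) = 0) ∧
        (∀ w : V, w ≠ α →
          approx (mFc ψ' φ K j (some α) none (some w))
            (2 * (mFc ψ φ K j α α w : ℚ) / (g : ℚ))) ∧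
        (∀ w : V, w ≠ α →
          approx (mFc ψ' φ K j (some α) (some α) (some w))
            ((mFc ψ φ K j α α w : ℚ) * ((g : ℚ) - 2) / (g : ℚ))) ∧
        (mFc ψ' φ K j none none none = 0 ∧ mFc ψ' φ K j none none (some α) = 0) ∧
        approx (mFc ψ' φ K j (some α) (some α) (some α))
          ((mFc ψ φ K j α α α : ℚ) * ((g : ℚ) - 3) / (g : ℚ)) ∧
        approx (mFc ψ' φ K j none (some α) (some α))
          (3 * (mFc ψ φ K j α α α : ℚ) / (g : ℚ))) := by
  classical
  have hg₀ : (0 : ℚ) < g := by exact_mod_cast (by omega : 0 < g)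
  have hw₀ : ∀ e, 0 ≤ splitWeight ψ φ α g e := fun e => div_nonneg (Nat.cast_nonneg _) hg₀.le
  have hw₁ : ∀ e, splitWeight ψ φ α g e ≤ 1 := fun e =>
    div_le_one_of_le₀ (by exact_mod_cast count_edgeVerts_le ψ φ h3 hg hgα e) hg₀.le
  let edgeType : E → univ.image (edgeVerts ψ φ) := fun e =>
    ⟨edgeVerts ψ φ e, mem_image_of_mem _ (mem_univ e)⟩
  obtain ⟨M, hMpos, hMuniv, hMcolor⟩ :=
    exists_finset_roundsAlong (splitWeight ψ φ α g) hw₀ hw₁ edgeType K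
  obtain ⟨X, hXα, hXinj, rfl⟩ := exists_hinges_image_eq ψ φ (M := M) fun e he =>
    Multiset.count_pos.mp (by exact_mod_cast (div_pos_iff_of_pos_right hg₀).mp (hMpos e he))
  have hB : ∀ S, RoundsAlong (splitWeight ψ φ α g) edgeType (X.image φ) S →
      SplitBounds ψ (splitAt ψ X) φ S α g := fun S hS =>
    splitBounds_splitAt hXα hXinj (by omega)
      (hS.comp_injective (u := Subtype.val) Subtype.val_injective)
  obtain ⟨b1, b2, b3, b4, b5, b6, b7, b8, b9, b10, b11, b12⟩ := hB univ hMuniv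
  simp only [degOn_univ, mOn_univ] at b1 b2 b3 b4 b5 b6 b7 b8 b9 b10 b11 b12
  refine ⟨splitAt ψ X, splitAt_eq_some_or hXα, b1, b2, b3, b4, b5, b6, b7, b8, b9, b10, b11, b12,
    fun j => ?_⟩
  simpa only [SplitBounds, degOn_filter_color, mOn_filter_color] using hB _ (hMcolor j)

/-- **One detachment step.**
`F` is given by `ψ : H → V`, the surjection `φ : H → E`, every edge having
exactly three hinges, with a `k`-edge-coloring `K`.  Given a vertex `α` and
an integer `g ≥ 2` such that `g ≤ 2 → m_F(α³) = 0`, the vertex `α` can be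
split into two vertices `α` (here `some α`) and `v` (here `none`), giving a
detachment `F'` with hinge-to-vertex map `ψ' : H → Option V` satisfying
(B1)–(B12) together with their colored analogues. -/
theorem detachment_step {V E H : Type} [Fintype E] [Fintype H]
    [DecidableEq V] [DecidableEq E]
    (ψ : H → V) (φ : H → E) (hφ : Function.Surjective φ)
    (h3 : ∀ e : E, (Finset.univ.filter fun h => φ h = e).card = 3)
    (k : ℕ) (K : E → Fin k)
    (α : V) (g : ℕ) (hg : 2 ≤ g)
    (hgα : g ≤ 2 → mF ψ φ α α α = 0) :
    ∃ ψ' : H → Option V,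
      -- `F'` is a detachment of `F` splitting `α` into `some α` and `none`:
      (∀ h : H, ψ' h = some (ψ h) ∨ (ψ h = α ∧ ψ' h = none)) ∧
      -- (B1)
      approx (degF ψ' (some α)) ((degF ψ α : ℚ) * ((g : ℚ) - 1) / (g : ℚ)) ∧
      -- (B2)
      approx (degF ψ' none) ((degF ψ α : ℚ) / (g : ℚ)) ∧
      -- (B3)
      (∀ w : V, w ≠ α →
        approx (mF ψ' φ (some α) (some w) (some w))
          ((mF ψ φ α w w : ℚ) * ((g : ℚ) - 1) / (g : ℚ))) ∧
      -- (B4)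
      (∀ w : V, w ≠ α →
        approx (mF ψ' φ none (some w) (some w)) ((mF ψ φ α w w : ℚ) / (g : ℚ))) ∧
      -- (B5)
      (∀ u w : V, u ≠ α → w ≠ α → u ≠ w →
        approx (mF ψ' φ (some α) (some u) (some w))
          ((mF ψ φ α u w : ℚ) * ((g : ℚ) - 1) / (g : ℚ))) ∧
      -- (B6)
      (∀ u w : V, u ≠ α → w ≠ α → u ≠ w →
        approx (mF ψ' φ none (some u) (some w)) ((mF ψ φ α u w : ℚ) / (g : ℚ))) ∧
      -- (B7)
      (∀ w : V, w ≠ α → mF ψ' φ none none (some w) = 0) ∧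
      -- (B8)
      (∀ w : V, w ≠ α →
        approx (mF ψ' φ (some α) none (some w))
          (2 * (mF ψ φ α α w : ℚ) / (g : ℚ))) ∧
      -- (B9)
      (∀ w : V, w ≠ α →
        approx (mF ψ' φ (some α) (some α) (some w))
          ((mF ψ φ α α w : ℚ) * ((g : ℚ) - 2) / (g : ℚ))) ∧
      -- (B10)
      (mF ψ' φ none none none = 0 ∧ mF ψ' φ none none (some α) = 0) ∧
      -- (B11)
      approx (mF ψ' φ (some α) (some α) (some α))
        ((mF ψ φ α α α : ℚ) * ((g : ℚ) - 3) / (g : ℚ)) ∧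
      -- (B12)
      approx (mF ψ' φ none (some α) (some α)) (3 * (mF ψ φ α α α : ℚ) / (g : ℚ)) ∧
      -- colored analogues of (B1)–(B12) for each color class `j`
      (∀ j : Fin k,
        approx (degFc ψ' φ K j (some α))
          ((degFc ψ φ K j α : ℚ) * ((g : ℚ) - 1) / (g : ℚ)) ∧
        approx (degFc ψ' φ K j none) ((degFc ψ φ K j α : ℚ) / (g : ℚ)) ∧
        (∀ w : V, w ≠ α →
          approx (mFc ψ' φ K j (some α) (some w) (some w))
            ((mFc ψ φ K j α w w : ℚ) * ((g : ℚ) - 1) / (g : ℚ))) ∧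
        (∀ w : V, w ≠ α →
          approx (mFc ψ' φ K j none (some w) (some w))
            ((mFc ψ φ K j α w w : ℚ) / (g : ℚ))) ∧
        (∀ u w : V, u ≠ α → w ≠ α → u ≠ w →
          approx (mFc ψ' φ K j (some α) (some u) (some w))
            ((mFc ψ φ K j α u w : ℚ) * ((g : ℚ) - 1) / (g : ℚ))) ∧
        (∀ u w : V, u ≠ α → w ≠ α → u ≠ w →
          approx (mFc ψ' φ K j none (some u) (some w))
            ((mFc ψ φ K j α u w : ℚ) / (g : ℚ))) ∧
        (∀ w : V, w ≠ α → mFc ψ' φ K j none none (some w) = 0) ∧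
        (∀ w : V, w ≠ α →
          approx (mFc ψ' φ K j (some α) none (some w))
            (2 * (mFc ψ φ K j α α w : ℚ) / (g : ℚ))) ∧
        (∀ w : V, w ≠ α →
          approx (mFc ψ' φ K j (some α) (some α) (some w))
            ((mFc ψ φ K j α α w : ℚ) * ((g : ℚ) - 2) / (g : ℚ))) ∧
        (mFc ψ' φ K j none none none = 0 ∧ mFc ψ' φ K j none none (some α) = 0) ∧
        approx (mFc ψ' φ K j (some α) (some α) (some α))
          ((mFc ψ φ K j α α α : ℚ) * ((g : ℚ) - 3) / (g : ℚ)) ∧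
        approx (mFc ψ' φ K j none (some α) (some α))
          (3 * (mFc ψ φ K j α α α : ℚ) / (g : ℚ))) :=
  detachment_step_general ψ φ h3 k K α g hg hgα
end

section
/- Let n ≥ 3, let λ, k ≥ 1, and let r_1, …, r_k be positive integers such that 3 divides r_i·n for each i ∈ {1,…,k} and Σ_{i=1}^k r_i = λ·C(n−1, 2). Then λK_n^3 is (r_1,…,r_k)-factorizable: there exists a function c assigning to each pair (T, l), where T ⊆ Fin n with |T| = 3 and l ∈ Fin λ, a color c(T, l) ∈ {1,…,k}, such that for every vertex v ∈ Fin n and every color j, the number of pairs (T, l) with v ∈ T and c(T, l) = j equals r_j. -/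
/-!
Baranyai's amalgamation–detachment argument. Start with all `n` vertices merged into one, so that
colour class `j` consists of `r j * n / h` edges with empty trace on the detached vertices, and
detach the vertices one at a time. When `a` is split off from the `d` vertices still merged,
some of the `g S j` colour-`j` edges with trace `S` must receive `a`. Giving it to the fraction
`(h - #S) / d` of them meets both requirements, the degree `r j` of `a` in colour `j` and the
number `λ * C(d - 1, h - #S - 1)` of `h`-sets with trace `insert a S`, but only fractionally.
Baranyai's rounding lemma makes the choice integral: a matrix with integral row and column sums
can be rounded entrywise up or down keeping all line sums. To prove it, move along a circulation
supported on the non-integral entries until one of them becomes integral; such a circulation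
exists since every line meeting the non-integral entries meets at least two of them, so that
there are more unknowns than independent linear constraints.
-/

open Finset

theorem two_mul_card_image_le_card {γ δ : Type*} [DecidableEq δ] (s : Finset γ) (f : γ → δ)
    (hf : ∀ d, #{c ∈ s | f c = d} ≠ 1) : 2 * #(s.image f) ≤ #s :=
  mul_card_image_le_card s 2 fun d hd => by
    obtain ⟨c, hc, rfl⟩ := mem_image.1 hd
    have : 0 < #{c' ∈ s | f c' = f c} := card_pos.2 ⟨c, by simpa using hc⟩
    have := hf (f c)
    omega

section Circulation

variable {α β K : Type*} [Fintype α] [DecidableEq α] [Fintype β] [DecidableEq β] [Field K]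

theorem exists_ne_zero_rowSum_colSum_eq_zero (S : Finset (α × β)) (hS : S.Nonempty)
    (hrow : ∀ a, #{e ∈ S | e.1 = a} ≠ 1) (hcol : ∀ b, #{e ∈ S | e.2 = b} ≠ 1) :
    ∃ z : α × β → K, z ≠ 0 ∧ (∀ e ∉ S, z e = 0) ∧
      (∀ a, ∑ b, z (a, b) = 0) ∧ ∀ b, ∑ a, z (a, b) = 0 := by
  set A := S.image Prod.fst
  set B := S.image Prod.snd
  obtain ⟨b₀, hb₀⟩ : B.Nonempty := hS.image _
  have hA : 2 * #A ≤ #S := two_mul_card_image_le_card S _ hrow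
  have hB : 2 * #B ≤ #S := two_mul_card_image_le_card S _ hcol
  -- The column sum at `b₀` is left out: it is the total minus the other column sums.
  let sums : (α × β → K) →ₗ[K] (A → K) × (B.erase b₀ → K) :=
    (LinearMap.pi fun a => ∑ b, LinearMap.proj (a.1, b)).prod
      (LinearMap.pi fun b => ∑ a, LinearMap.proj (a, b.1))
  let f := sums ∘ₗ Function.ExtendByZero.linearMap K ((↑) : S → α × β)
  obtain ⟨w, hw, hw0⟩ := Submodule.exists_mem_ne_zero_of_ne_bot (f.ker_ne_bot_of_finrank_lt (by
    simp only [Module.finrank_prod, Module.finrank_fintype_fun_eq_card, Fintype.card_coe,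
      card_erase_of_mem hb₀]
    have := card_pos.2 ⟨b₀, hb₀⟩
    omega))
  set z := Function.extend ((↑) : S → α × β) w 0
  have hzS : ∀ e ∉ S, z e = 0 := fun e he =>
    Function.extend_apply' _ _ _ (by simpa using he)
  have hrowz : ∀ a, ∑ b, z (a, b) = 0 := by
    intro a
    by_cases ha : a ∈ A
    · simpa [f, sums] using congrFun (congrArg Prod.fst (LinearMap.mem_ker.1 hw)) ⟨a, ha⟩
    · exact sum_eq_zero fun b _ => hzS _ fun h => ha (mem_image_of_mem Prod.fst h)
  have hcolz : ∀ b ≠ b₀, ∑ a, z (a, b) = 0 := by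
    intro b hb
    by_cases hbB : b ∈ B
    · simpa [f, sums] using
        congrFun (congrArg Prod.snd (LinearMap.mem_ker.1 hw)) ⟨b, mem_erase.2 ⟨hb, hbB⟩⟩
    · exact sum_eq_zero fun a _ => hzS _ fun h => hbB (mem_image_of_mem Prod.snd h)
  refine ⟨z, fun h => hw0 ?_, hzS, hrowz, fun b => ?_⟩
  · exact Function.extend_injective Subtype.val_injective _ (h.trans (Function.extend_zero _).symm)
  · by_cases hb : b = b₀
    · subst hb
      have := Finset.sum_comm (s := univ) (t := univ) (f := fun a b => z (a, b))
      rw [Finset.sum_eq_single_of_mem b (mem_univ b) fun b' _ hb' => hcolz b' hb'] at this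
      simpa [hrowz] using this.symm
    · exact hcolz b hb

end Circulation

open Classical in
theorem card_filter_notMem_range_intCast_ne_one {K γ : Type*} [AddCommGroupWithOne K]
    [Fintype γ] (q : γ → K) (hq : ∑ c, q c ∈ Set.range Int.cast) :
    #{c | q c ∉ Set.range Int.cast} ≠ 1 := by
  intro h
  obtain ⟨c₀, hc₀⟩ := card_eq_one.1 h
  have hint : ∀ c ∈ univ.erase c₀, q c ∈ Set.range Int.cast := fun c hc => by
    by_contra hqc
    have : c ∈ ({c₀} : Finset γ) := hc₀ ▸ by simpa using hqc
    exact (mem_erase.1 hc).1 (mem_singleton.1 this)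
  have hc₀' : q c₀ ∉ Set.range Int.cast := by
    simpa using (hc₀ ▸ mem_singleton_self c₀ : c₀ ∈ ({c | q c ∉ Set.range Int.cast} : Finset γ))
  choose m hm using hint
  obtain ⟨M, hM⟩ := hq
  refine hc₀' ⟨M - ∑ c ∈ (univ.erase c₀).attach, m c c.2, ?_⟩
  rw [← add_sum_erase _ _ (mem_univ c₀), ← sum_attach] at hM
  push_cast
  rw [hM, ← sum_congr rfl fun c _ => hm c.1 c.2, add_sub_cancel_right]

section Rounding

open scoped Classical

variable {K : Type*} [Field K] [LinearOrder K] [FloorRing K]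

/-- The largest `t ≥ 0` with `x + t * w ∈ [⌊x⌋, ⌈x⌉]` (for `w ≠ 0`). -/
def stepToInt (x w : K) : K := if 0 < w then (⌈x⌉ - x) / w else (x - ⌊x⌋) / -w

theorem add_stepToInt_mul_mem_range {x w : K} (hw : w ≠ 0) :
    x + stepToInt x w * w ∈ Set.range Int.cast := by
  unfold stepToInt
  split_ifs
  · exact ⟨⌈x⌉, by field_simp; ring⟩
  · exact ⟨⌊x⌋, by field_simp; ring⟩

variable [IsStrictOrderedRing K]

theorem stepToInt_nonneg (x w : K) : 0 ≤ stepToInt x w := by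
  unfold stepToInt
  split_ifs with hw
  · exact div_nonneg (sub_nonneg.2 (Int.le_ceil x)) hw.le
  · exact div_nonneg (sub_nonneg.2 (Int.floor_le x)) (neg_nonneg.2 (not_lt.1 hw))

theorem add_mul_mem_Icc_floor_ceil {x w t : K} (hw : w ≠ 0) (ht₀ : 0 ≤ t)
    (ht : t ≤ stepToInt x w) : x + t * w ∈ Set.Icc (⌊x⌋ : K) ⌈x⌉ := by
  unfold stepToInt at ht
  split_ifs at ht with hw'
  · rw [le_div_iff₀ hw'] at ht
    constructor <;> nlinarith [Int.floor_le x]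
  · rw [le_div_iff₀ (neg_pos.2 (lt_of_le_of_ne (not_lt.1 hw') hw))] at ht
    constructor <;> nlinarith [Int.le_ceil x]

variable {α β : Type*} [Fintype α] [Fintype β]

noncomputable def nonintegralEntries (x : α → β → K) : Finset (α × β) :=
  {e | x e.1 e.2 ∉ Set.range Int.cast}

theorem exists_sums_eq_card_nonintegralEntries_lt (x : α → β → K)
    (hrow : ∀ a, ∑ b, x a b ∈ Set.range Int.cast) (hcol : ∀ b, ∑ a, x a b ∈ Set.range Int.cast)
    (hx : (nonintegralEntries x).Nonempty) :
    ∃ x' : α → β → K, (∀ a b, x' a b ∈ Set.Icc (⌊x a b⌋ : K) ⌈x a b⌉) ∧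
      (∀ a, ∑ b, x' a b = ∑ b, x a b) ∧ (∀ b, ∑ a, x' a b = ∑ a, x a b) ∧
      #(nonintegralEntries x') < #(nonintegralEntries x) := by
  set F := nonintegralEntries x
  have hrowF : ∀ a, #{e ∈ F | e.1 = a} ≠ 1 := fun a => by
    have : {e ∈ F | e.1 = a} =
        (univ.filter fun b => x a b ∉ Set.range Int.cast).map (.sectR a β) := by
      ext ⟨a', b⟩; simp [F, nonintegralEntries]; aesop
    rw [this, card_map]
    exact card_filter_notMem_range_intCast_ne_one _ (hrow a)
  have hcolF : ∀ b, #{e ∈ F | e.2 = b} ≠ 1 := fun b => by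
    have : {e ∈ F | e.2 = b} =
        (univ.filter fun a => x a b ∉ Set.range Int.cast).map (.sectL α b) := by
      ext ⟨a, b'⟩; simp [F, nonintegralEntries]; aesop
    rw [this, card_map]
    exact card_filter_notMem_range_intCast_ne_one (fun a => x a b) (hcol b)
  obtain ⟨z, hz0, hzF, hzrow, hzcol⟩ :=
    exists_ne_zero_rowSum_colSum_eq_zero (K := K) F hx hrowF hcolF
  -- Move along `z` until the first entry in its support reaches an integer.
  obtain ⟨e₀, he₀, hmin⟩ := exists_min_image {e | z e ≠ 0} (fun e => stepToInt (x e.1 e.2) (z e))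
    (by simpa [Finset.Nonempty, funext_iff] using hz0)
  have hze₀ : z e₀ ≠ 0 := (mem_filter.1 he₀).2
  set t := stepToInt (x e₀.1 e₀.2) (z e₀)
  refine ⟨fun a b => x a b + t * z (a, b), fun a b => ?_, fun a => ?_, fun b => ?_, ?_⟩
  · by_cases hz : z (a, b) = 0
    · simp [hz, Int.floor_le, Int.le_ceil]
    · exact add_mul_mem_Icc_floor_ceil hz (stepToInt_nonneg _ _) (hmin _ (by simpa using hz))
  · simp [sum_add_distrib, ← mul_sum, hzrow]
  · simp [sum_add_distrib, ← mul_sum, hzcol]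
  · refine (card_le_card fun e he => mem_erase.2 ⟨?_, ?_⟩).trans_lt
      (card_erase_lt_of_mem (by_contra fun h => hze₀ (hzF _ h)))
    · rintro rfl
      simp only [nonintegralEntries, mem_filter] at he
      exact he.2 (add_stepToInt_mul_mem_range hze₀)
    · by_contra heF
      have hxe : x e.1 e.2 ∈ Set.range Int.cast := by simpa [F, nonintegralEntries] using heF
      simp only [nonintegralEntries, mem_filter, hzF e heF] at he
      simp_all

theorem exists_int_matrix_mem_floor_ceil (x : α → β → K)
    (hrow : ∀ a, ∑ b, x a b ∈ Set.range Int.cast) (hcol : ∀ b, ∑ a, x a b ∈ Set.range Int.cast) :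
    ∃ y : α → β → ℤ, (∀ a b, ⌊x a b⌋ ≤ y a b ∧ y a b ≤ ⌈x a b⌉) ∧
      (∀ a, ∑ b, (y a b : K) = ∑ b, x a b) ∧ ∀ b, ∑ a, (y a b : K) = ∑ a, x a b := by
  induction hN : #(nonintegralEntries x) using Nat.strong_induction_on generalizing x with
  | _ N ih =>
  rcases (nonintegralEntries x).eq_empty_or_nonempty with h | h
  · have hint : ∀ a b, (⌊x a b⌋ : K) = x a b := fun a b => by
      rw [Int.floor_eq_self_iff_mem]
      by_contra hab
      simpa [h] using (by simpa [nonintegralEntries] using hab : (a, b) ∈ nonintegralEntries x)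
    exact ⟨fun a b => ⌊x a b⌋, fun a b => ⟨le_rfl, Int.floor_le_ceil _⟩,
      fun a => by simp [hint], fun b => by simp [hint]⟩
  · obtain ⟨x', hx', hrow', hcol', hlt⟩ := exists_sums_eq_card_nonintegralEntries_lt x hrow hcol h
    obtain ⟨y, hy, hyrow, hycol⟩ := ih _ (hN ▸ hlt) x' (by simpa [hrow'] using hrow)
      (by simpa [hcol'] using hcol) rfl
    exact ⟨y, fun a b => ⟨(Int.le_floor.2 (hx' a b).1).trans (hy a b).1,
      (hy a b).2.trans (Int.ceil_le.2 (hx' a b).2)⟩,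
      fun a => (hyrow a).trans (hrow' a), fun b => (hycol b).trans (hcol' b)⟩

theorem exists_nat_matrix_le_of_sums (x : α → β → K) (u : α → β → ℕ) (R : α → ℕ) (C : β → ℕ)
    (hx : ∀ a b, 0 ≤ x a b ∧ x a b ≤ u a b) (hR : ∀ a, ∑ b, x a b = R a)
    (hC : ∀ b, ∑ a, x a b = C b) :
    ∃ y : α → β → ℕ, (∀ a b, y a b ≤ u a b) ∧ (∀ a, ∑ b, y a b = R a) ∧
      ∀ b, ∑ a, y a b = C b := by
  obtain ⟨y, hy, hyR, hyC⟩ := exists_int_matrix_mem_floor_ceil x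
    (fun a => hR a ▸ ⟨R a, Int.cast_natCast _⟩) (fun b => hC b ▸ ⟨C b, Int.cast_natCast _⟩)
  have hy₀ : ∀ a b, 0 ≤ y a b := fun a b => (Int.floor_nonneg.2 (hx a b).1).trans (hy a b).1
  have hcast : ∀ a b, ((y a b).toNat : K) = y a b := fun a b => by
    exact_mod_cast Int.toNat_of_nonneg (hy₀ a b)
  refine ⟨fun a b => (y a b).toNat, fun a b => ?_, fun a => ?_, fun b => ?_⟩
  · exact Int.toNat_le.2 <| (hy a b).2.trans <|
      Int.ceil_le.2 (by exact_mod_cast (hx a b).2 : x a b ≤ ((u a b : ℤ) : K))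
  · exact_mod_cast (by simpa [hcast] using (hyR a).trans (hR a) : ∑ b, ((y a b).toNat : K) = R a)
  · exact_mod_cast (by simpa [hcast] using (hyC b).trans (hC b) : ∑ a, ((y a b).toNat : K) = C b)

end Rounding

theorem Nat.sub_one_choose_sub_one_mul {n k : ℕ} (hk : 0 < k) :
    (n - 1).choose (k - 1) * n = n.choose k * k := by
  obtain ⟨k, rfl⟩ := Nat.exists_eq_add_one_of_ne_zero hk.ne'
  cases n with
  | zero => simp
  | succ n => simpa [mul_comm] using Nat.add_one_mul_choose_eq n k

theorem Finset.sum_finset_eq_of_add_insert {V M : Type*} [Fintype V] [DecidableEq V]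
    [AddCommMonoid M] (a : V) {f f' : Finset V → M} (hf : ∀ S, a ∈ S → f S = 0)
    (hf' : ∀ S, a ∉ S → f' S + f' (insert a S) = f S) :
    ∑ S, f' S = ∑ S, f S := by
  have split (g : Finset V → M) :
      ∑ S, g S = ∑ S ∈ (univ.erase a).powerset, (g S + g (insert a S)) := by
    rw [sum_add_distrib, ← sum_powerset_insert (notMem_erase a univ), insert_erase (mem_univ a),
      powerset_univ]
  rw [split f', split f]
  refine sum_congr rfl fun S hS => ?_
  have haS : a ∉ S := fun h => by simpa using mem_powerset.1 hS h
  rw [hf' S haS, hf _ (mem_insert_self a S), add_zero]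

section Amalgamation

variable {V ι : Type*} [Fintype V] [DecidableEq V] [Fintype ι] {h lam : ℕ} {r : ι → ℕ}

/-- `g S j` counts the colour-`j` edges whose trace on the set `P` of detached vertices is `S`;
the vertices outside `P` are still amalgamated into a single vertex. -/
structure IsAmalgamation (h lam : ℕ) (r : ι → ℕ) (P : Finset V) (g : Finset V → ι → ℕ) :
    Prop where
  subset_of_ne_zero : ∀ S j, g S j ≠ 0 → S ⊆ P ∧ #S ≤ h
  sum_eq : ∀ S ⊆ P, #S ≤ h → ∑ j, g S j = lam * (Fintype.card V - #P).choose (h - #S)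
  degree_eq : ∀ v ∈ P, ∀ j, ∑ S with v ∈ S, g S j = r j
  sum_mul_eq : ∀ j, ∑ S, g S j * (h - #S) = r j * (Fintype.card V - #P)

theorem isAmalgamation_empty (hh : 0 < h) (hdiv : ∀ j, h ∣ r j * Fintype.card V)
    (hsum : ∑ j, r j = lam * (Fintype.card V - 1).choose (h - 1)) :
    IsAmalgamation h lam r (∅ : Finset V)
      fun S j => if S = ∅ then r j * Fintype.card V / h else 0 where
  subset_of_ne_zero S j hS := by
    rw [ite_ne_right_iff] at hS
    simp [hS.1]
  sum_eq S hS _ := by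
    obtain rfl := subset_empty.1 hS
    refine Nat.eq_of_mul_eq_mul_right hh ?_
    simp only [if_true, sum_mul, Nat.div_mul_cancel (hdiv _)]
    rw [← sum_mul, hsum, mul_assoc, Nat.sub_one_choose_sub_one_mul hh, card_empty, Nat.sub_zero,
      Nat.sub_zero, mul_assoc]
  degree_eq v hv := by simp at hv
  sum_mul_eq j := by
    rw [sum_eq_single ∅ (fun S _ hS => by simp [hS]) (by simp)]
    simp [Nat.div_mul_cancel (hdiv j)]

variable {P : Finset V} {g y : Finset V → ι → ℕ}

theorem IsAmalgamation.eq_zero_of_mem (hg : IsAmalgamation h lam r P g) {a : V} (ha : a ∉ P)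
    {S : Finset V} (haS : a ∈ S) (j : ι) : g S j = 0 := by
  by_contra h0
  exact ha ((hg.subset_of_ne_zero S j h0).1 haS)

/-- When the next vertex is detached, `y S j` of the `g S j` colour-`j` edges with trace `S`
receive it. -/
structure IsSplit (h lam : ℕ) (r : ι → ℕ) (P : Finset V) (g y : Finset V → ι → ℕ) :
    Prop where
  le : ∀ S j, y S j ≤ g S j
  sum_eq : ∀ S, ∑ j, y S j = if S ⊆ P ∧ #S < h then
    lam * (Fintype.card V - #P - 1).choose (h - #S - 1) else 0
  sum_eq_degree : ∀ j, ∑ S, y S j = r j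

theorem IsSplit.subset_of_ne_zero (hy : IsSplit h lam r P g y) {S : Finset V} {j : ι}
    (hS : y S j ≠ 0) : S ⊆ P ∧ #S < h := by
  by_contra hc
  have := single_le_sum (f := fun j => y S j) (fun _ _ => Nat.zero_le _) (mem_univ j)
  simp only [hy.sum_eq, if_neg hc] at this
  omega

theorem IsAmalgamation.exists_isSplit (hg : IsAmalgamation h lam r P g)
    (hP : #P < Fintype.card V) : ∃ y, IsSplit h lam r P g y := by
  set D := Fintype.card V - #P
  have hD : (D : ℚ) ≠ 0 := Nat.cast_ne_zero.2 (by omega)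
  have cast_div {m n : ℕ} (hmn : m = n * D) : (m : ℚ) / D = n := by
    rw [hmn, Nat.cast_mul, mul_div_cancel_right₀ _ hD]
  have hrow : ∀ S, (∑ j, g S j) * (h - #S) =
      (if S ⊆ P ∧ #S < h then lam * (D - 1).choose (h - #S - 1) else 0) * D := by
    intro S
    split_ifs with hS
    · obtain ⟨c, hc⟩ : ∃ c, h - #S = c + 1 := ⟨h - #S - 1, by omega⟩
      obtain ⟨d, hd⟩ : ∃ d, D = d + 1 := ⟨D - 1, by omega⟩
      rw [hg.sum_eq S hS.1 hS.2.le, show Fintype.card V - #P = d + 1 from hd, hc, hd,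
        Nat.add_sub_cancel, Nat.add_sub_cancel, mul_assoc, mul_assoc,
        ← Nat.add_one_mul_choose_eq, mul_comm (d + 1)]
    · rw [zero_mul, sum_mul]
      refine sum_eq_zero fun j _ => ?_
      by_cases hgS : g S j = 0
      · rw [hgS, zero_mul]
      · have hS' := hg.subset_of_ne_zero S j hgS
        rw [Nat.sub_eq_zero_of_le (not_lt.1 fun hlt => hS ⟨hS'.1, hlt⟩), mul_zero]
  have hxg : ∀ S j, ((g S j * (h - #S) : ℕ) : ℚ) / D ≤ g S j := by
    intro S j
    rw [div_le_iff₀ (by positivity)]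
    by_cases hgS : g S j = 0
    · simp [hgS]
    obtain ⟨hSP, hSh⟩ := hg.subset_of_ne_zero S j hgS
    have hle : g S j ≤ lam * D.choose (h - #S) :=
      hg.sum_eq S hSP hSh ▸ single_le_sum (fun _ _ => Nat.zero_le _) (mem_univ j)
    have : h - #S ≤ D := by
      by_contra hlt
      rw [Nat.choose_eq_zero_of_lt (by omega), mul_zero] at hle
      omega
    exact_mod_cast Nat.mul_le_mul_left _ this
  -- Each of the `D` amalgamated vertices gets the same share of the `h - #S` missing vertices.
  obtain ⟨y, hyg, hyS, hyj⟩ := exists_nat_matrix_le_of_sums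
    (fun S j => ((g S j * (h - #S) : ℕ) : ℚ) / D) g _ r (fun S j => ⟨by positivity, hxg S j⟩)
    (fun S => by rw [← sum_div, ← Nat.cast_sum, ← sum_mul]; exact cast_div (hrow S))
    (fun j => by rw [← sum_div, ← Nat.cast_sum]; exact cast_div (hg.sum_mul_eq j))
  exact ⟨y, ⟨hyg, hyS, hyj⟩⟩

def detach (g y : Finset V → ι → ℕ) (a : V) (S : Finset V) (j : ι) : ℕ :=
  if a ∈ S then y (S.erase a) j else g S j - y S j

variable {a : V}

theorem detach_add_detach_insert (hy : IsSplit h lam r P g y) {S : Finset V} (haS : a ∉ S)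
    (j : ι) : detach g y a S j + detach g y a (insert a S) j = g S j := by
  simp only [detach, if_neg haS, if_pos (mem_insert_self a S), erase_insert haS]
  have := hy.le S j
  omega

theorem IsAmalgamation.detach_subset_of_ne_zero (hg : IsAmalgamation h lam r P g)
    (hy : IsSplit h lam r P g y) {S : Finset V} {j : ι} (hS : detach g y a S j ≠ 0) :
    S ⊆ insert a P ∧ #S ≤ h := by
  unfold detach at hS
  split_ifs at hS with haS
  · obtain ⟨hSP, hSh⟩ := hy.subset_of_ne_zero hS
    have := card_erase_of_mem haS
    have := card_pos.2 ⟨a, haS⟩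
    exact ⟨subset_insert_iff.2 hSP, by omega⟩
  · obtain ⟨hSP, hSh⟩ := hg.subset_of_ne_zero S j (by omega)
    exact ⟨hSP.trans (subset_insert a P), hSh⟩

theorem IsAmalgamation.detach_sum_eq (hg : IsAmalgamation h lam r P g)
    (hy : IsSplit h lam r P g y) (ha : a ∉ P) {S : Finset V} (hSP : S ⊆ insert a P)
    (hSh : #S ≤ h) : ∑ j, detach g y a S j = lam * (Fintype.card V - #P - 1).choose (h - #S) := by
  by_cases haS : a ∈ S
  · simp only [detach, if_pos haS]
    have := card_erase_of_mem haS
    have := card_pos.2 ⟨a, haS⟩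
    rw [hy.sum_eq, if_pos ⟨subset_insert_iff.1 hSP, by omega⟩]
    congr 2
    omega
  have hSP' : S ⊆ P := (subset_insert_iff_of_notMem haS).1 hSP
  simp only [detach, if_neg haS]
  rw [sum_tsub_distrib _ fun j _ => hy.le S j, hg.sum_eq S hSP' hSh, hy.sum_eq]
  split_ifs with hc
  · obtain ⟨c, hc'⟩ : ∃ c, h - #S = c + 1 := ⟨h - #S - 1, by omega⟩
    obtain ⟨d, hd⟩ : ∃ d, Fintype.card V - #P = d + 1 :=
      ⟨_, (Nat.sub_one_add_one (Nat.sub_pos_of_lt (card_lt_univ_of_notMem ha)).ne').symm⟩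
    rw [hc', hd, Nat.choose_succ_succ', Nat.add_sub_cancel, Nat.add_sub_cancel, mul_add]
    omega
  · rw [Nat.sub_eq_zero_of_le (not_lt.1 fun hlt => hc ⟨hSP', hlt⟩)]
    simp

theorem IsAmalgamation.detach_degree_eq (hg : IsAmalgamation h lam r P g)
    (hy : IsSplit h lam r P g y) (ha : a ∉ P) {v : V} (hv : v ∈ insert a P) (j : ι) :
    ∑ S with v ∈ S, detach g y a S j = r j := by
  rw [sum_filter]
  rcases mem_insert.1 hv with rfl | hvP
  · rw [← hy.sum_eq_degree j]
    refine sum_finset_eq_of_add_insert v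
      (fun S hvS => by_contra fun h => ha ((hy.subset_of_ne_zero h).1 hvS)) fun S hvS => ?_
    simp [detach, hvS, erase_insert hvS]
  · have hva : v ≠ a := fun h => ha (h ▸ hvP)
    rw [← hg.degree_eq v hvP j, sum_filter]
    refine sum_finset_eq_of_add_insert a (fun S haS => by simp [hg.eq_zero_of_mem ha haS])
      fun S haS => ?_
    rw [← detach_add_detach_insert hy haS j]
    simp only [mem_insert, hva, false_or]
    split_ifs <;> simp

theorem IsAmalgamation.detach_sum_mul_eq (hg : IsAmalgamation h lam r P g)
    (hy : IsSplit h lam r P g y) (ha : a ∉ P) (j : ι) :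
    ∑ S, detach g y a S j * (h - #S) = r j * (Fintype.card V - #P - 1) := by
  have hle : ∀ S, y S j ≤ g S j * (h - #S) := fun S => by
    by_cases hyS : y S j = 0
    · simp [hyS]
    · have := (hy.subset_of_ne_zero hyS).2
      exact (hy.le S j).trans (Nat.le_mul_of_pos_right _ (by omega))
  rw [Nat.mul_sub_one, ← hg.sum_mul_eq j, ← hy.sum_eq_degree j,
    ← sum_tsub_distrib _ fun S _ => hle S]
  refine sum_finset_eq_of_add_insert a
    (fun S haS => by simp [hg.eq_zero_of_mem ha haS]) fun S haS => ?_
  rw [card_insert_of_notMem haS, ← Nat.sub_sub]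
  by_cases hy0 : y S j = 0
  · simp [detach, haS, erase_insert haS, hy0]
  -- The new vertex fills one of the `h - #S` free places of each of the `y S j` edges.
  obtain ⟨c, hc⟩ : ∃ c, h - #S = c + 1 :=
    ⟨h - #S - 1, by have := (hy.subset_of_ne_zero hy0).2; omega⟩
  have hyc := Nat.mul_le_mul_right c (hy.le S j)
  have := hy.le S j
  simp only [detach, if_neg haS, if_pos (mem_insert_self a S), erase_insert haS]
  rw [hc, Nat.add_sub_cancel, Nat.sub_mul, Nat.mul_succ, Nat.mul_succ]
  generalize g S j * c = gc, y S j * c = yc at *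
  omega

theorem IsAmalgamation.detach (hg : IsAmalgamation h lam r P g) (hy : IsSplit h lam r P g y)
    (ha : a ∉ P) : IsAmalgamation h lam r (insert a P) (detach g y a) := by
  have hcard : Fintype.card V - #(insert a P) = Fintype.card V - #P - 1 := by
    rw [card_insert_of_notMem ha]
    omega
  exact ⟨fun _ _ => hg.detach_subset_of_ne_zero hy, fun _ hSP hSh => hcard ▸
    hg.detach_sum_eq hy ha hSP hSh, fun _ hv => hg.detach_degree_eq hy ha hv,
    fun j => hcard ▸ hg.detach_sum_mul_eq hy ha j⟩

theorem exists_isAmalgamation (hh : 0 < h) (hdiv : ∀ j, h ∣ r j * Fintype.card V)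
    (hsum : ∑ j, r j = lam * (Fintype.card V - 1).choose (h - 1)) (P : Finset V) :
    ∃ g, IsAmalgamation h lam r P g := by
  induction P using Finset.induction_on with
  | empty => exact ⟨_, isAmalgamation_empty hh hdiv hsum⟩
  | insert a P ha ih =>
    obtain ⟨g, hg⟩ := ih
    obtain ⟨y, hy⟩ := hg.exists_isSplit (card_lt_univ_of_notMem ha)
    exact ⟨_, hg.detach hy ha⟩

variable [DecidableEq ι]

theorem exists_fin_card_fiber_eq {m : ℕ} (w : ι → ℕ) (hw : ∑ j, w j = m) :
    ∃ f : Fin m → ι, ∀ j, #{l | f l = j} = w j := by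
  let e : (Σ j, Fin (w j)) ≃ Fin m := Fintype.equivFinOfCardEq (by simp [hw])
  refine ⟨fun l => (e.symm l).1, fun j => ?_⟩
  rw [card_equiv e.symm (t := univ.map (.sigmaMk j)) fun l => ?_, card_map, card_fin]
  simp only [mem_filter, mem_univ, true_and, mem_map, Function.Embedding.sigmaMk_apply]
  rcases e.symm l with ⟨i, x⟩
  exact ⟨by rintro rfl; exact ⟨x, rfl⟩, by rintro ⟨_, ⟨⟩⟩; rfl⟩

theorem IsAmalgamation.exists_coloring (hg : IsAmalgamation h lam r univ g) :
    ∃ c : {T : Finset V // #T = h} → Fin lam → ι, ∀ v j,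
      #{p : {T : Finset V // #T = h} × Fin lam | v ∈ p.1.1 ∧ c p.1 p.2 = j} = r j := by
  have hcard : ∀ S j, g S j ≠ 0 → #S = h := by
    intro S j hS
    obtain ⟨-, hSh⟩ := hg.subset_of_ne_zero S j hS
    by_contra hne
    have hsum := hg.sum_eq S (subset_univ S) hSh
    rw [card_univ, Nat.sub_self, Nat.choose_eq_zero_of_lt (by omega), mul_zero] at hsum
    exact hS (sum_eq_zero_iff.1 hsum j (mem_univ j))
  have hlam : ∀ T : {T : Finset V // #T = h}, ∑ j, g T.1 j = lam := fun T => by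
    simpa [T.2] using hg.sum_eq T.1 (subset_univ _) T.2.le
  choose c hc using fun T => exists_fin_card_fiber_eq _ (hlam T)
  refine ⟨c, fun v j => ?_⟩
  calc #{p : {T : Finset V // #T = h} × Fin lam | v ∈ p.1.1 ∧ c p.1 p.2 = j}
      = ∑ T : {T : Finset V // #T = h}, if v ∈ T.1 then g T.1 j else 0 := by
        rw [card_filter, Fintype.sum_prod_type]
        refine sum_congr rfl fun T _ => ?_
        split_ifs with hv
        · rw [← hc T j, card_filter]
          simp [hv]
        · simp [hv]
    _ = ∑ S with v ∈ S, g S j := by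
        rw [← sum_subtype {S : Finset V | #S = h} (by simp) fun S => if v ∈ S then g S j else 0,
          sum_filter_of_ne fun S _ hS => hcard S j (by aesop), sum_filter]
    _ = r j := hg.degree_eq v (mem_univ v) j

theorem completeHypergraph_factorizable (hh : 0 < h) (hdiv : ∀ j, h ∣ r j * Fintype.card V)
    (hsum : ∑ j, r j = lam * (Fintype.card V - 1).choose (h - 1)) :
    ∃ c : {T : Finset V // #T = h} → Fin lam → ι, ∀ v j,
      #{p : {T : Finset V // #T = h} × Fin lam | v ∈ p.1.1 ∧ c p.1 p.2 = j} = r j :=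
  (exists_isAmalgamation hh hdiv hsum univ).elim fun _ hg => hg.exists_coloring

end Amalgamation

theorem lambdaKn3_factorizable_general (n lam k : ℕ) (r : Fin k → ℕ)
    (hdiv : ∀ i : Fin k, 3 ∣ r i * n)
    (hsum : ∑ i, r i = lam * Nat.choose (n - 1) 2) :
    ∃ c : {T : Finset (Fin n) // T.card = 3} → Fin lam → Fin k,
      ∀ v : Fin n, ∀ j : Fin k,
        (Finset.univ.filter
          fun p : {T : Finset (Fin n) // T.card = 3} × Fin lam =>
            v ∈ p.1.val ∧ c p.1 p.2 = j).card = r j :=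
  completeHypergraph_factorizable (by norm_num) (by simpa using hdiv) (by simpa using hsum)

/-- **Sufficiency for `(r₁,…,r_k)`-factorization of `λK_n³`.**
If `n ≥ 3`, `3 ∣ rᵢ·n` for each `i`, and `∑ rᵢ = λ·C(n-1,2)`, then the
complete 3-uniform multi-hypergraph `λK_n³` is `(r₁,…,r_k)`-factorizable:
there is a coloring `c` of its edges (pairs `(T, l)` with `T ⊆ Fin n`,
`|T| = 3`, `l ∈ Fin λ`) by colors in `Fin k` such that every vertex is
incident with exactly `r j` edges of each color `j`. -/
theorem lambdaKn3_factorizable (n lam k : ℕ) (hn : 3 ≤ n) (hlam : 1 ≤ lam)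
    (hk : 1 ≤ k) (r : Fin k → ℕ) (hr : ∀ i, 0 < r i)
    (hdiv : ∀ i : Fin k, 3 ∣ r i * n)
    (hsum : ∑ i, r i = lam * Nat.choose (n - 1) 2) :
    ∃ c : {T : Finset (Fin n) // T.card = 3} → Fin lam → Fin k,
      ∀ v : Fin n, ∀ j : Fin k,
        (Finset.univ.filter
          fun p : {T : Finset (Fin n) // T.card = 3} × Fin lam =>
            v ∈ p.1.val ∧ c p.1 p.2 = j).card = r j :=
  lambdaKn3_factorizable_general n lam k r hdiv hsum
end

section
/- Let n ≥ 3, let λ, k ≥ 1, let m_1, …, m_n be positive integers, and let r_1, …, r_k be positive integers. If λK_{m_1,…,m_n}^3 is (r_1,…,r_k)-factorizable — i.e., on the vertex set consisting of n disjoint parts V_1, …, V_n with |V_i| = m_i there exists a function c assigning to each pair (T, l), where T is a 3-element set of vertices lying in three distinct parts and l ∈ Fin λ, a color in {1,…,k}, such that for every vertex v and every color j the number of pairs (T, l) with v ∈ T and c(T, l) = j equals r_j — then: (i) m_1 = m_2 = … = m_n =: m; (ii) 3 divides r_i·m·n for each i ∈ {1,…,k}; and (iii) Σ_{i=1}^k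 r_i = λ·C(n−1, 2)·m². -/
/-!
A vertex `v` of part `i` lies in `d_i` edge supports, where
`2 d_i = (∑_{p ≠ i} m_p)² - ∑_{p ≠ i} m_p²` (count ordered pairs of vertices from two further
distinct parts), and adding up its colour degrees gives `∑ r_j = λ d_i`. Hence `d_i` does not
depend on `i`; for parts `i ≠ j` this says `(m_i - m_j)(m_i + m_j - ∑_p m_p) = 0`, and a third
nonempty part forces `m_i = m_j`. Once all parts have size `M`, `d_i = C(n-1, 2) M²`, and
counting the incidences of the `r_j`-regular 3-uniform colour class `j` gives `3 ∣ r_j n M`.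
-/

open Finset

lemma sum_card_filter_mem_eq_sum_card {E V : Type*} [Fintype V] [DecidableEq V]
    (s : Finset E) (f : E → Finset V) :
    ∑ v, #{e ∈ s | v ∈ f e} = ∑ e ∈ s, #(f e) := by
  simp only [card_filter]
  rw [sum_comm]
  simp

lemma sum_card_filter_and_eq_eq_card_filter_mul_card {E L K : Type*} [Fintype E] [Fintype L]
    [Fintype K] [DecidableEq K] (P : E → Prop) [DecidablePred P] (c : E → L → K) :
    ∑ j, #{p : E × L | P p.1 ∧ c p.1 p.2 = j} = #{e | P e} * Fintype.card L := by
  rw [← card_univ, ← card_product, ← filter_product_left, univ_product_univ,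
    card_eq_sum_card_fiberwise (f := fun p => c p.1 p.2) (t := univ) fun _ _ => mem_univ _]
  simp only [filter_filter]

lemma eq_of_forall_add_sum_sq_erase_eq {ι : Type*} [Fintype ι] [DecidableEq ι]
    (hι : 3 ≤ Fintype.card ι) {f : ι → ℕ} (hf : ∀ i, 0 < f i) {x : ℕ}
    (h : ∀ i, x + ∑ p ∈ univ.erase i, f p ^ 2 = (∑ p ∈ univ.erase i, f p) ^ 2) (i j : ι) :
    f i = f j := by
  obtain rfl | hij := eq_or_ne i j
  · rfl
  obtain ⟨t, -, ht⟩ := exists_mem_notMem_of_card_lt_card (s := {i, j}) (t := univ)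
    (card_le_two.trans_lt (by rwa [card_univ]))
  simp only [mem_insert, mem_singleton, not_or] at ht
  have hA := sum_erase_add univ f (mem_univ i)
  have hB := sum_erase_add univ f (mem_univ j)
  have hQA := sum_erase_add univ (f · ^ 2) (mem_univ i)
  have hQB := sum_erase_add univ (f · ^ 2) (mem_univ j)
  have hthird : f j + f t ≤ ∑ p ∈ univ.erase i, f p := by
    rw [← sum_pair (Ne.symm ht.2)]
    exact sum_le_sum_of_subset (by simp [insert_subset_iff, hij.symm, ht.1])
  have hi := h i
  have hj := h j
  set A := ∑ p ∈ univ.erase i, f p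
  set B := ∑ p ∈ univ.erase j, f p
  set S := ∑ p, f p
  have ht0 := hf t
  zify at hA hB hQA hQB hi hj hthird ht0
  have hfactor : ((f i : ℤ) - f j) * (f i + f j - S) * 2 = 0 := by
    linear_combination hj - hi + hQA - hQB - (A + S - f i) * hA + (B + S - f j) * hB
  have hne : (f i : ℤ) + f j - S ≠ 0 := by linarith
  simpa [hne, sub_eq_zero] using hfactor

section TransversalTriple

variable {ι : Type*} {α : ι → Type*}

abbrev TransversalTriple (α : ι → Type*) : Type _ :=
  {T : Finset (Σ i, α i) // T.card = 3 ∧ ∀ a ∈ T, ∀ b ∈ T, a.1 = b.1 → a = b}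

variable [Fintype ι] [DecidableEq ι] [∀ i, Fintype (α i)]

variable (α) in
def transversalPairsAvoiding (i : ι) : Finset ((Σ i, α i) × (Σ i, α i)) :=
  {q | q.1.1 ≠ i ∧ q.2.1 ≠ i ∧ q.1.1 ≠ q.2.1}

lemma card_filter_fst_mem (s : Finset ι) :
    #{a : Σ i, α i | a.1 ∈ s} = ∑ p ∈ s, Nat.card (α p) := by
  rw [show univ.filter (fun a : Σ i, α i => a.1 ∈ s) = s.sigma fun _ => univ by ext; simp,
    card_sigma]
  simp [Nat.card_eq_fintype_card]

lemma card_transversalPairsAvoiding_add_sum_sq (i : ι) :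
    #(transversalPairsAvoiding α i) + ∑ p ∈ univ.erase i, Nat.card (α p) ^ 2
      = (∑ p ∈ univ.erase i, Nat.card (α p)) ^ 2 := by
  have hrow (a : Σ i, α i) (ha : a.1 ≠ i) :
      #{b : Σ i, α i | b.1 ≠ i ∧ a.1 ≠ b.1} + Nat.card (α a.1)
        = ∑ p ∈ univ.erase i, Nat.card (α p) := by
    rw [← sum_erase_add _ _ (mem_erase.2 ⟨ha, mem_univ _⟩), ← card_filter_fst_mem]
    congr 2
    ext b; simp [and_comm, eq_comm]
  have hpairs : #(transversalPairsAvoiding α i)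
      = ∑ a : Σ i, α i with a.1 ≠ i, #{b : Σ i, α i | b.1 ≠ i ∧ a.1 ≠ b.1} := by
    simp only [transversalPairsAvoiding, card_filter, Fintype.sum_prod_type, sum_filter]
    refine sum_congr rfl fun a _ => ?_
    split_ifs <;> simp_all
  have hsq : ∑ a : Σ i, α i with a.1 ≠ i, Nat.card (α a.1)
      = ∑ p ∈ univ.erase i, Nat.card (α p) ^ 2 := by
    rw [sum_filter, Fintype.sum_sigma, ← filter_ne', sum_filter]
    refine sum_congr rfl fun p _ => ?_
    split_ifs <;> simp [sq]
  have hA : #{a : Σ i, α i | a.1 ≠ i} = ∑ p ∈ univ.erase i, Nat.card (α p) := by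
    rw [← card_filter_fst_mem]; congr 1; ext; simp
  rw [hpairs, ← hsq, ← sum_add_distrib, sum_congr rfl fun a ha => hrow a (mem_filter.1 ha).2,
    sum_const, hA, smul_eq_mul, sq]

variable [∀ i, DecidableEq (α i)]

def transversalDegree (v : Σ i, α i) : ℕ := #{T : TransversalTriple α | v ∈ T.1}

lemma eq_insert_insert_of_mem_offDiag_erase {V : Type*} [DecidableEq V] {T : Finset V}
    (hT : #T = 3) {v : V} (hv : v ∈ T) {q : V × V} (hq : q ∈ (T.erase v).offDiag) :
    T = {v, q.1, q.2} := by
  obtain ⟨⟨hav, haT⟩, ⟨hbv, hbT⟩, hab⟩ := by simpa only [mem_offDiag, mem_erase] using hq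
  refine (eq_of_subset_of_card_le ?_ ?_).symm
  · simp [insert_subset_iff, hv, haT, hbT]
  · rw [hT, card_eq_three.2 ⟨v, q.1, q.2, Ne.symm hav, Ne.symm hbv, hab, rfl⟩]

-- Each triple `T ∋ v` contributes the two orderings of `T \ {v}`.
lemma card_transversalPairsAvoiding_eq_two_mul_transversalDegree (v : Σ i, α i) :
    #(transversalPairsAvoiding α v.1) = 2 * transversalDegree v := by
  have hunion : transversalPairsAvoiding α v.1
      = (univ.filter fun T : TransversalTriple α => v ∈ T.1).biUnion
          fun T => (T.1.erase v).offDiag := by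
    ext ⟨a, b⟩
    simp only [transversalPairsAvoiding, mem_filter, mem_univ, true_and, mem_biUnion,
      mem_offDiag, mem_erase]
    constructor
    · rintro ⟨ha, hb, hab⟩
      have hav : a ≠ v := ne_of_apply_ne Sigma.fst ha
      have hbv : b ≠ v := ne_of_apply_ne Sigma.fst hb
      have hab' : a ≠ b := ne_of_apply_ne Sigma.fst hab
      refine ⟨⟨{v, a, b}, card_eq_three.2 ⟨v, a, b, hav.symm, hbv.symm, hab', rfl⟩, ?_⟩,
        by simp, ⟨hav, by simp⟩, ⟨hbv, by simp⟩, hab'⟩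
      simp only [mem_insert, mem_singleton]
      rintro x (rfl | rfl | rfl) y (rfl | rfl | rfl) hxy <;> simp_all [eq_comm]
    · rintro ⟨T, hvT, ⟨hav, haT⟩, ⟨hbv, hbT⟩, hab⟩
      exact ⟨fun h => hav (T.2.2 _ haT _ hvT h), fun h => hbv (T.2.2 _ hbT _ hvT h),
        fun h => hab (T.2.2 _ haT _ hbT h)⟩
  have hdisj : Set.PairwiseDisjoint (↑(univ.filter fun T : TransversalTriple α => v ∈ T.1))
      fun T : TransversalTriple α => (T.1.erase v).offDiag := by
    intro T hT T' hT' hne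
    refine disjoint_left.2 fun q hq hq' => hne (Subtype.ext ?_)
    rw [eq_insert_insert_of_mem_offDiag_erase T.2.1 (mem_filter.1 hT).2 hq,
      eq_insert_insert_of_mem_offDiag_erase T'.2.1 (mem_filter.1 hT').2 hq']
  rw [hunion, card_biUnion hdisj, sum_const_nat fun T hT => ?_, mul_comm]
  · rfl
  · rw [offDiag_card, card_erase_of_mem (mem_filter.1 hT).2, T.2.1]

lemma two_mul_transversalDegree_add_sum_sq (v : Σ i, α i) :
    2 * transversalDegree v + ∑ p ∈ univ.erase v.1, Nat.card (α p) ^ 2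
      = (∑ p ∈ univ.erase v.1, Nat.card (α p)) ^ 2 := by
  rw [← card_transversalPairsAvoiding_eq_two_mul_transversalDegree,
    card_transversalPairsAvoiding_add_sum_sq]

lemma transversalDegree_eq_of_forall_card_eq {M : ℕ} (hM : ∀ p, Nat.card (α p) = M)
    (v : Σ i, α i) : transversalDegree v = (Fintype.card ι - 1).choose 2 * M ^ 2 := by
  have h := two_mul_transversalDegree_add_sum_sq v
  simp only [hM, sum_const, card_erase_of_mem (mem_univ _), card_univ, smul_eq_mul] at h
  have hq : (transversalDegree v : ℚ) = ((Fintype.card ι - 1).choose 2 : ℕ) * M ^ 2 := by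
    rw [Nat.cast_choose_two]
    have hq : (2 * transversalDegree v : ℚ) + (Fintype.card ι - 1 : ℕ) * M ^ 2
        = ((Fintype.card ι - 1 : ℕ) * M) ^ 2 := by exact_mod_cast h
    linear_combination hq / 2
  exact_mod_cast hq

lemma three_dvd_mul_card_of_forall_card_filter_mem_eq {L : Type*}
    (s : Finset (TransversalTriple α × L)) {r : ℕ} (h : ∀ v, #{p ∈ s | v ∈ p.1.1} = r) :
    3 ∣ r * Fintype.card (Σ i, α i) := by
  have hcount := sum_card_filter_mem_eq_sum_card s fun p => p.1.1
  rw [sum_const_nat fun v _ => h v, sum_const_nat fun p _ => p.1.2.1, card_univ] at hcount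
  exact ⟨#s, by rw [mul_comm, hcount, mul_comm]⟩

end TransversalTriple

theorem lambdaKm1mn3_factorizable_necessary_general (n lam k : ℕ) (hn : 3 ≤ n)
    (hlam : 1 ≤ lam)
    (m : Fin n → ℕ) (hm : ∀ i, 0 < m i)
    (r : Fin k → ℕ)
    (hfact : ∃ c : {T : Finset ((i : Fin n) × Fin (m i)) //
        T.card = 3 ∧ ∀ a ∈ T, ∀ b ∈ T, a.1 = b.1 → a = b} → Fin lam → Fin k,
      ∀ v : (i : Fin n) × Fin (m i), ∀ j : Fin k,
        (Finset.univ.filter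
          fun p : {T : Finset ((i : Fin n) × Fin (m i)) //
              T.card = 3 ∧ ∀ a ∈ T, ∀ b ∈ T, a.1 = b.1 → a = b} × Fin lam =>
            v ∈ p.1.val ∧ c p.1 p.2 = j).card = r j) :
    ∃ M : ℕ, (∀ i : Fin n, m i = M) ∧
      (∀ i : Fin k, 3 ∣ r i * M * n) ∧
      ∑ i, r i = lam * Nat.choose (n - 1) 2 * M ^ 2 := by
  obtain ⟨c, hc⟩ := hfact
  have hsum (v : (i : Fin n) × Fin (m i)) : ∑ j, r j = transversalDegree v * lam := by
    simpa only [hc, Fintype.card_fin, transversalDegree] using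
      sum_card_filter_and_eq_eq_card_filter_mul_card (fun T : TransversalTriple _ => v ∈ T.1) c
  let vertex (i : Fin n) : (i : Fin n) × Fin (m i) := ⟨i, 0, hm i⟩
  let i₀ : Fin n := ⟨0, by omega⟩
  have hdeg (v : (i : Fin n) × Fin (m i)) : transversalDegree v = transversalDegree (vertex i₀) :=
    Nat.eq_of_mul_eq_mul_right hlam (by rw [← hsum, ← hsum])
  have hmeq : ∀ i j, m i = m j := by
    refine eq_of_forall_add_sum_sq_erase_eq (x := 2 * transversalDegree (vertex i₀))
      (by simpa) hm fun i => ?_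
    simpa [hdeg] using two_mul_transversalDegree_add_sum_sq (vertex i)
  refine ⟨m i₀, fun i => hmeq i i₀, fun j => ?_, ?_⟩
  · have h3 := three_dvd_mul_card_of_forall_card_filter_mem_eq
      (univ.filter fun p => c p.1 p.2 = j) fun v => by
        rw [filter_filter]; simpa only [and_comm] using hc v j
    simpa [Fintype.card_sigma, hmeq _ i₀, mul_comm n, mul_assoc] using h3
  · rw [hsum (vertex i₀), transversalDegree_eq_of_forall_card_eq (M := m i₀)
      fun p => by simp [hmeq p i₀]]
    simp only [Fintype.card_fin]
    ring

/-- **Necessity for `(r₁,…,r_k)`-factorization of `λK³_{m₁,…,m_n}`.**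
The vertex set is `(i : Fin n) × Fin (m i)`, part `i` being the fiber over
`i`.  If `n ≥ 3` and there is a coloring `c` of the edges of
`λK³_{m₁,…,m_n}` (pairs `(T, l)` where `T` is a 3-element set of vertices
lying in three pairwise distinct parts and `l ∈ Fin λ`) by colors in `Fin k`
such that every vertex is incident with exactly `r j` edges of each color
`j`, then all parts have a common size `M`, `3 ∣ rᵢ·M·n` for each `i`, and
`∑ rᵢ = λ·C(n-1,2)·M²`. -/
theorem lambdaKm1mn3_factorizable_necessary (n lam k : ℕ) (hn : 3 ≤ n)
    (hlam : 1 ≤ lam) (hk : 1 ≤ k)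
    (m : Fin n → ℕ) (hm : ∀ i, 0 < m i)
    (r : Fin k → ℕ) (hr : ∀ i, 0 < r i)
    (hfact : ∃ c : {T : Finset ((i : Fin n) × Fin (m i)) //
        T.card = 3 ∧ ∀ a ∈ T, ∀ b ∈ T, a.1 = b.1 → a = b} → Fin lam → Fin k,
      ∀ v : (i : Fin n) × Fin (m i), ∀ j : Fin k,
        (Finset.univ.filter
          fun p : {T : Finset ((i : Fin n) × Fin (m i)) //
              T.card = 3 ∧ ∀ a ∈ T, ∀ b ∈ T, a.1 = b.1 → a = b} × Fin lam =>
            v ∈ p.1.val ∧ c p.1 p.2 = j).card = r j) :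
    ∃ M : ℕ, (∀ i : Fin n, m i = M) ∧
      (∀ i : Fin k, 3 ∣ r i * M * n) ∧
      ∑ i, r i = lam * Nat.choose (n - 1) 2 * M ^ 2 :=
  lambdaKm1mn3_factorizable_necessary_general n lam k hn hlam m hm r hfact
end

section
/- Let n ≥ 3, let λ ≥ 1 and let r be a positive integer. Then λK_n^3 is r-factorizable — i.e., there exists k ≥ 1 and a function c assigning to each pair (T, l), with T ⊆ Fin n, |T| = 3 and l ∈ Fin λ, a color in {1,…,k} such that for every vertex v and every color j the number of pairs (T, l) with v ∈ T and c(T, l) = j equals r — if and only if 3 divides r·n and r divides λ·C(n−1, 2). -/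
/-!
Necessity is double counting: a colour class in which every vertex has degree `r` has `r n / 3`
edges, and the `λ C(n-1, 2)` edges through a vertex are split into `r` per colour.

Sufficiency is Baranyai's argument, run for `h`-uniform multi-hypergraphs. Place the vertices
one at a time and record, for every colour `i` and every set `S` of placed vertices, the number
`F i S` of edges of colour `i` whose trace on the placed vertices is `S`. When a new vertex `w` is
placed, each colour must extend exactly `r` of its traces by `w`, and each trace `S` must be
extended `λ C(#unplaced - 1, h - 1 - |S|)` times in total. Extending `F i S (h - |S|) / #unplaced`
of them is a fractional solution, and integrality of the capacitated transportation polytope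
(proved from the cut condition by induction) turns it into an integral one.
-/

open Finset

lemma exists_eq_add_single {ι M : Type*} [DecidableEq ι] [AddZeroClass M] {f : ι → M} {i : ι}
    {a b : M} (h : f i = a + b) : ∃ g : ι → M, f = g + Pi.single i b := by
  refine ⟨Function.update f i a, funext fun j => ?_⟩
  by_cases hj : j = i
  · subst hj; simp [h]
  · simp [hj]

lemma sum_sum_filter_mem {ι V : Type*} [Fintype V] [DecidableEq V] (P : Finset ι) (t : ι → Finset V)
    (f : ι → ℕ) : ∑ v, ∑ p ∈ P with v ∈ t p, f p = ∑ p ∈ P, #(t p) * f p := by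
  rw [sum_comm' (t' := P) (s' := t) (by simp [and_comm])]
  simp [sum_const]

lemma sum_filter_ite_mem_erase {V : Type*} [Fintype V] [DecidableEq V] {w : V}
    (p : Finset V → Prop) [DecidablePred p] {x G : Finset V → ℕ}
    (hx : ∀ T, x T ≠ 0 → w ∉ T) (hG : ∀ T, G T ≠ 0 → w ∉ T) :
    ∑ S with p S, (if w ∈ S then x (S.erase w) else G S) =
      ∑ T with p (insert w T), x T + ∑ T with p T, G T := by
  rw [sum_ite, filter_filter, filter_filter]
  congr 1
  · rw [← sum_filter_of_ne (p := fun T => w ∉ T) fun T _ hT => hx T hT, filter_filter]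
    refine sum_nbij' (·.erase w) (insert w ·) ?_ ?_ ?_ ?_ fun _ _ => rfl
    · intro S hS
      simp only [mem_filter, mem_univ, true_and] at hS ⊢
      simp [insert_erase hS.2, hS.1]
    · intro T hT
      simp only [mem_filter, mem_univ, true_and] at hT ⊢
      simp [hT.1]
    · intro S hS
      simp only [mem_filter, mem_univ, true_and] at hS
      exact insert_erase hS.2
    · intro T hT
      simp only [mem_filter, mem_univ, true_and] at hT
      exact erase_insert hT.2
  · rw [← filter_filter, sum_filter_of_ne fun T _ hT => hG T hT]

lemma exists_fun_card_fiber_eq {κ : Type*} [Fintype κ] [DecidableEq κ] {f : κ → ℕ} {n : ℕ}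
    (hf : ∑ i, f i = n) : ∃ g : Fin n → κ, ∀ i, #{l | g l = i} = f i := by
  let e : (Σ i, Fin (f i)) ≃ Fin n := Fintype.equivFinOfCardEq (by simp [hf])
  refine ⟨fun l => (e.symm l).1, fun i => ?_⟩
  rw [← Fintype.card_subtype, ← Fintype.card_fin (f i)]
  exact Fintype.card_congr ((e.symm.subtypeEquiv fun _ => Iff.rfl).trans (Equiv.sigmaSubtype i))

lemma mul_choose_sub_one (n : ℕ) {h : ℕ} (hh : 0 < h) :
    n * (n - 1).choose (h - 1) = n.choose h * h := by
  obtain ⟨h, rfl⟩ := Nat.exists_eq_add_of_lt hh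
  cases n with
  | zero => simp
  | succ n => simpa using Nat.add_one_mul_choose_eq n h

section Transport

variable {I J : Type*} [Fintype J] [DecidableEq J]

def cutCapacity (m : I → J → ℕ) (C : J → ℕ) (A : Finset I) (B : Finset J) : ℕ :=
  ∑ i ∈ A, ∑ j ∈ B, m i j + ∑ j ∈ Bᶜ, C j

/-- The rows in `A` must ship `∑ i ∈ A, R i`: at most `m` allows into `B`, at most what `C`
allows into `Bᶜ`. -/
def CutCondition (m : I → J → ℕ) (R : I → ℕ) (C : J → ℕ) : Prop :=
  ∀ A B, ∑ i ∈ A, R i ≤ cutCapacity m C A B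

lemma cutCapacity_union_inter_add_le [DecidableEq I] (m : I → J → ℕ) (C : J → ℕ)
    (A₁ A₂ : Finset I) (B₁ B₂ : Finset J) :
    cutCapacity m C (A₁ ∪ A₂) (B₁ ∩ B₂) + cutCapacity m C (A₁ ∩ A₂) (B₁ ∪ B₂) ≤
      cutCapacity m C A₁ B₁ + cutCapacity m C A₂ B₂ := by
  have hC : ∑ j ∈ (B₁ ∩ B₂)ᶜ, C j + ∑ j ∈ (B₁ ∪ B₂)ᶜ, C j
      = ∑ j ∈ B₁ᶜ, C j + ∑ j ∈ B₂ᶜ, C j := by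
    rw [compl_inter, compl_union]
    exact sum_union_inter
  have hm : ∑ p ∈ (A₁ ∪ A₂) ×ˢ (B₁ ∩ B₂), m p.1 p.2 + ∑ p ∈ (A₁ ∩ A₂) ×ˢ (B₁ ∪ B₂), m p.1 p.2
      ≤ ∑ p ∈ A₁ ×ˢ B₁, m p.1 p.2 + ∑ p ∈ A₂ ×ˢ B₂, m p.1 p.2 := by
    rw [← sum_union_inter, ← sum_union_inter (s₁ := A₁ ×ˢ B₁)]
    apply add_le_add <;> apply sum_le_sum_of_subset <;>
      · intro p
        simp only [mem_union, mem_inter, mem_product]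
        tauto
  simp only [cutCapacity, sum_product'] at hm ⊢
  omega

lemma cutCapacity_filter_ne_zero_le (m : I → J → ℕ) (C : J → ℕ) (A : Finset I)
    (B : Finset J) : cutCapacity m C A {j ∈ B | C j ≠ 0} ≤ cutCapacity m C A B := by
  have hC : ∑ j ∈ {j ∈ B | C j ≠ 0}ᶜ, C j = ∑ j ∈ Bᶜ, C j := by
    have := sum_add_sum_compl {j ∈ B | C j ≠ 0} C
    have := sum_add_sum_compl B C
    have : ∑ j ∈ {j ∈ B | C j ≠ 0}, C j = ∑ j ∈ B, C j := sum_filter_ne_zero B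
    omega
  unfold cutCapacity
  rw [hC]
  gcongr
  exact filter_subset _ _

lemma cutCapacity_add_single [DecidableEq I] (m : I → J → ℕ) (C : J → ℕ) (A : Finset I)
    (B : Finset J) (i₀ : I) (j₀ : J) :
    cutCapacity (m + Pi.single i₀ (Pi.single j₀ 1)) (C + Pi.single j₀ 1) A B =
      cutCapacity m C A B + (if i₀ ∈ A ∧ j₀ ∈ B then 1 else 0) + (if j₀ ∈ B then 0 else 1) := by
  have h : ∀ i, ∑ j ∈ B, (Pi.single i₀ (Pi.single j₀ 1) : I → J → ℕ) i j
      = (Pi.single i₀ (if j₀ ∈ B then 1 else 0) : I → ℕ) i := by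
    intro i
    by_cases hi : i = i₀
    · subst hi; simp [sum_pi_single']
    · simp [hi]
  simp only [cutCapacity, Pi.add_apply, sum_add_distrib, h, sum_pi_single', mem_compl]
  split_ifs <;> simp_all <;> omega

variable {m : I → J → ℕ} {R : I → ℕ} {C : J → ℕ}

lemma CutCondition.exists_col_mem_tight [Fintype I] [DecidableEq I] (hcut : CutCondition m R C)
    {i₀ : I} (hi₀ : R i₀ ≠ 0) : ∃ j₀, m i₀ j₀ ≠ 0 ∧ C j₀ ≠ 0 ∧
      ∀ A B, i₀ ∉ A → ∑ i ∈ A, R i = cutCapacity m C A B → j₀ ∈ B := by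
  set T := (univ : Finset (Finset I × Finset J)).filter fun p =>
    i₀ ∉ p.1 ∧ ∑ i ∈ p.1, R i = cutCapacity m C p.1 p.2
  have hT : (∅, univ) ∈ T := by simp only [T, mem_filter]; simp [cutCapacity]
  obtain ⟨⟨A₀, B₀⟩, h₀, hmin⟩ := T.exists_min_image (fun p => #p.2) ⟨_, hT⟩
  simp only [T, mem_filter, mem_univ, true_and, and_imp, Prod.forall] at h₀ hmin
  -- tight cuts avoiding `i₀` are closed under `(A, B) ↦ (A₀ ∪ A, B₀ ∩ B)` by submodularity
  have hB₀ : ∀ A B, i₀ ∉ A → ∑ i ∈ A, R i = cutCapacity m C A B → B₀ ⊆ B := by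
    intro A B hA htight
    have := cutCapacity_union_inter_add_le m C A₀ A B₀ B
    have := hcut (A₀ ∪ A) (B₀ ∩ B)
    have := hcut (A₀ ∩ A) (B₀ ∪ B)
    have : ∑ i ∈ A₀ ∪ A, R i + ∑ i ∈ A₀ ∩ A, R i = ∑ i ∈ A₀, R i + ∑ i ∈ A, R i :=
      sum_union_inter
    have hcard := hmin (A₀ ∪ A) (B₀ ∩ B) (by simp [h₀.1, hA]) (by omega)
    exact inter_eq_left.mp (eq_of_subset_of_card_le inter_subset_left hcard)
  have hR : R i₀ ≤ ∑ j ∈ B₀ with C j ≠ 0, m i₀ j := by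
    have := hcut (insert i₀ A₀) {j ∈ B₀ | C j ≠ 0}
    have := cutCapacity_filter_ne_zero_le m C A₀ B₀
    simp only [cutCapacity, sum_insert h₀.1] at *
    omega
  obtain ⟨j₀, hj₀, hm⟩ :=
    exists_ne_zero_of_sum_ne_zero (by omega : ∑ j ∈ B₀ with C j ≠ 0, m i₀ j ≠ 0)
  obtain ⟨hj₀B₀, hC⟩ := mem_filter.mp hj₀
  exact ⟨j₀, hm, hC, fun A B hA htight => hB₀ A B hA htight hj₀B₀⟩

lemma CutCondition.of_add_single [DecidableEq I] {i₀ : I} {j₀ : J}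
    (hcut : CutCondition (m + Pi.single i₀ (Pi.single j₀ 1)) (R + Pi.single i₀ 1)
      (C + Pi.single j₀ 1))
    (htight : ∀ A B, i₀ ∉ A → ∑ i ∈ A, (R + Pi.single i₀ 1 : I → ℕ) i =
      cutCapacity (m + Pi.single i₀ (Pi.single j₀ 1)) (C + Pi.single j₀ 1) A B → j₀ ∈ B) :
    CutCondition m R C := by
  intro A B
  have h := hcut A B
  have hB := htight A B
  simp only [cutCapacity_add_single, Pi.add_apply, sum_add_distrib, sum_pi_single'] at h hB
  split_ifs at h hB <;> simp_all; omega

theorem exists_transport_of_cutCondition [Fintype I] [DecidableEq I]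
    (hRC : ∑ i, R i = ∑ j, C j) (hcut : CutCondition m R C) :
    ∃ y ≤ m, (∀ i, ∑ j, y i j = R i) ∧ ∀ j, ∑ i, y i j = C j := by
  obtain ⟨N, hN⟩ : ∃ N, ∑ i, R i = N := ⟨_, rfl⟩
  induction N generalizing m R C with
  | zero =>
    refine ⟨0, fun _ _ => Nat.zero_le _, fun i => ?_, fun j => ?_⟩
    · simp [sum_eq_zero_iff.mp hN i (mem_univ i)]
    · simp [sum_eq_zero_iff.mp (hRC ▸ hN) j (mem_univ j)]
  | succ N ih =>
    obtain ⟨i₀, -, hi₀⟩ := exists_ne_zero_of_sum_ne_zero (by omega : ∑ i, R i ≠ 0)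
    obtain ⟨j₀, hm, hC, htight⟩ := hcut.exists_col_mem_tight hi₀
    obtain ⟨R, rfl⟩ := exists_eq_add_single (Nat.sub_one_add_one hi₀).symm
    obtain ⟨C, rfl⟩ := exists_eq_add_single (Nat.sub_one_add_one hC).symm
    obtain ⟨m₀, hm₀⟩ := exists_eq_add_single (Nat.sub_one_add_one hm).symm
    obtain ⟨m, rfl⟩ := exists_eq_add_single hm₀
    simp only [Pi.add_apply, sum_add_distrib, sum_pi_single', mem_univ, if_true] at hN hRC
    obtain ⟨y, hy, hrow, hcol⟩ := ih (by omega) (hcut.of_add_single htight) (by omega)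
    refine ⟨y + Pi.single i₀ (Pi.single j₀ 1), add_le_add hy le_rfl, fun i => ?_, fun j => ?_⟩
    · by_cases hi : i = i₀
      · subst hi; simp [sum_add_distrib, hrow, sum_pi_single']
      · simp [hrow, hi]
    · simp only [Pi.add_apply, sum_add_distrib, hcol, ← Finset.sum_apply, sum_pi_single',
        mem_univ, if_true]

/-- Integrality of the transportation polytope: a transport plan with denominator `d` can be
rounded to an integral one. -/
theorem exists_transport_of_scaled [Fintype I] [DecidableEq I] {d : ℕ} (hd : 0 < d)
    (X : I → J → ℕ) (hXm : ∀ i j, X i j ≤ d * m i j) (hX_row : ∀ i, ∑ j, X i j = d * R i)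
    (hX_col : ∀ j, ∑ i, X i j = d * C j) :
    ∃ y ≤ m, (∀ i, ∑ j, y i j = R i) ∧ ∀ j, ∑ i, y i j = C j := by
  refine exists_transport_of_cutCondition (Nat.eq_of_mul_eq_mul_left hd ?_) fun A B => ?_
  · simp only [mul_sum, ← hX_row, ← hX_col]
    exact sum_comm
  refine Nat.le_of_mul_le_mul_left ?_ hd
  calc d * ∑ i ∈ A, R i = ∑ i ∈ A, ∑ j ∈ B, X i j + ∑ i ∈ A, ∑ j ∈ Bᶜ, X i j := by
        simp only [← sum_add_distrib, sum_add_sum_compl, hX_row, mul_sum]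
    _ ≤ ∑ i ∈ A, ∑ j ∈ B, d * m i j + ∑ i, ∑ j ∈ Bᶜ, X i j :=
        add_le_add (sum_le_sum fun i _ => sum_le_sum fun j _ => hXm i j)
          (sum_le_sum_of_subset (subset_univ A))
    _ = d * cutCapacity m C A B := by
        rw [sum_comm (s := univ)]
        simp only [cutCapacity, mul_add, mul_sum, hX_col]

end Transport

section PartialFactorization

variable {V κ : Type*} [Fintype V] [DecidableEq V] [Fintype κ] {h lam r a : ℕ}
  {U : Finset V} {F : κ → Finset V → ℕ}

/-- A stage of Baranyai's argument after the vertices of `U` have been placed: `F i S` is the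
number of edges of colour `i` whose trace on `U` is `S`. -/
structure IsPartialFactorization (h lam r a : ℕ) (U : Finset V) (F : κ → Finset V → ℕ) :
    Prop where
  subset_of_ne_zero : ∀ i S, F i S ≠ 0 → S ⊆ U
  card_le_of_ne_zero : ∀ i S, F i S ≠ 0 → #S ≤ h
  sum_colors_eq : ∀ S ⊆ U, #S ≤ h → ∑ i, F i S = lam * (#Uᶜ).choose (h - #S)
  sum_traces_eq : ∀ i, ∑ S, F i S = a
  degree_eq : ∀ i, ∀ v ∈ U, ∑ S with v ∈ S, F i S = r

lemma isPartialFactorization_empty (hka : Fintype.card κ * a = lam * (Fintype.card V).choose h) :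
    IsPartialFactorization h lam r a (∅ : Finset V) fun (_ : κ) S => if S = ∅ then a else 0 where
  subset_of_ne_zero i S hS := by simp_all
  card_le_of_ne_zero i S hS := by simp_all
  sum_colors_eq S hS _ := by simp_all [subset_empty.mp hS]
  sum_traces_eq i := by simp
  degree_eq i v hv := by simp at hv

namespace IsPartialFactorization

lemma sub_card_le (hF : IsPartialFactorization h lam r a U F) {i : κ} {S : Finset V}
    (hi : F i S ≠ 0) : h - #S ≤ #Uᶜ := by
  by_contra! hlt
  have hsum := hF.sum_colors_eq S (hF.subset_of_ne_zero i S hi) (hF.card_le_of_ne_zero i S hi)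
  rw [Nat.choose_eq_zero_of_lt hlt, mul_zero, sum_eq_zero_iff] at hsum
  exact hi (hsum i (mem_univ i))

lemma sum_mul_sub_card (hF : IsPartialFactorization h lam r a U F)
    (hra : h * a = r * Fintype.card V) (i : κ) : ∑ S, F i S * (h - #S) = #Uᶜ * r := by
  have hsplit : ∑ S, F i S * (h - #S) + ∑ S, #S * F i S = h * a := by
    rw [← hF.sum_traces_eq i, mul_sum, ← sum_add_distrib]
    refine sum_congr rfl fun S _ => ?_
    by_cases hS : F i S = 0
    · simp [hS]
    · have := hF.card_le_of_ne_zero i S hS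
      rw [mul_comm (#S), ← mul_add, mul_comm, Nat.sub_add_cancel this]
  -- double counting the incidences between placed vertices and traces
  have hinc : ∑ S, #S * F i S = #U * r := by
    have hout : ∀ v ∈ Uᶜ, ∑ S with v ∈ S, F i S = 0 := fun v hv =>
      sum_eq_zero fun S hS => by_contra fun hne =>
        mem_compl.mp hv (hF.subset_of_ne_zero i S hne (mem_filter.mp hS).2)
    rw [← sum_sum_filter_mem, ← sum_add_sum_compl U, sum_congr rfl (hF.degree_eq i),
      sum_eq_zero hout, sum_const, smul_eq_mul, add_zero]
  have hcard : #U + #Uᶜ = Fintype.card V := card_add_card_compl U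
  nlinarith

/-- `x i S` is how many colour-`i` edges with trace `S` get the next vertex `w`; it rounds the
fractional choice `F i S * (h - #S) / #Uᶜ`. -/
lemma exists_extension_counts (hF : IsPartialFactorization h lam r a U F)
    (hra : h * a = r * Fintype.card V) {w : V} (hw : w ∉ U) :
    ∃ x : κ → Finset V → ℕ, (∀ i S, x i S ≤ F i S) ∧ (∀ i S, x i S ≠ 0 → #S < h) ∧
      (∀ i, ∑ S, x i S = r) ∧
      ∀ S ⊆ U, #S < h → ∑ i, x i S = lam * (#(insert w U)ᶜ).choose (h - 1 - #S) := by
  classical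
  have hd : #Uᶜ = #(insert w U)ᶜ + 1 := by
    rw [compl_insert, card_erase_add_one (mem_compl.mpr hw)]
  set m : κ → Finset V → ℕ := fun i S => if #S < h then F i S else 0
  set C : Finset V → ℕ := fun S =>
    if S ⊆ U ∧ #S < h then lam * (#(insert w U)ᶜ).choose (h - 1 - #S) else 0
  have hXm : ∀ i S, F i S * (h - #S) ≤ #Uᶜ * m i S := by
    intro i S
    by_cases hS : #S < h
    · by_cases hi : F i S = 0
      · simp [hi]
      · simpa [m, hS, mul_comm] using Nat.mul_le_mul_left (F i S) (hF.sub_card_le hi)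
    · simp [show h - #S = 0 by omega]
  have hX_col : ∀ S, ∑ i, F i S * (h - #S) = #Uᶜ * C S := by
    intro S
    by_cases hS : S ⊆ U ∧ #S < h
    · obtain ⟨hSU, hSh⟩ := hS
      have hpascal := Nat.add_one_mul_choose_eq (#(insert w U)ᶜ) (h - 1 - #S)
      rw [show h - 1 - #S + 1 = h - #S by omega] at hpascal
      rw [← sum_mul, hF.sum_colors_eq S hSU hSh.le, hd, mul_assoc, ← hpascal]
      simp only [C, hSU, hSh, and_self, if_true]
      ring
    · refine (sum_eq_zero fun i _ => ?_).trans (by simp [C, hS])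
      by_cases hi : F i S = 0
      · simp [hi]
      · have : ¬#S < h := fun hSh => hS ⟨hF.subset_of_ne_zero i S hi, hSh⟩
        simp [show h - #S = 0 by omega]
  obtain ⟨x, hxm, hx_row, hx_col⟩ :=
    exists_transport_of_scaled (by omega) _ hXm (hF.sum_mul_sub_card hra) hX_col
  refine ⟨x, fun i S => (hxm i S).trans ?_, fun i S hx => ?_, hx_row, fun S hS hSh => ?_⟩
  · simp only [m]
    split_ifs <;> simp
  · by_contra hS
    have := hxm i S
    simp only [m, hS, if_false, nonpos_iff_eq_zero] at this
    exact hx this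
  · simpa [C, hS, hSh] using hx_col S

lemma sum_colors_extend (hF : IsPartialFactorization h lam r a U F) {w : V} (hw : w ∉ U)
    {x : κ → Finset V → ℕ} (hxF : ∀ i S, x i S ≤ F i S) (hxh : ∀ i S, x i S ≠ 0 → #S < h)
    (hx_col : ∀ S ⊆ U, #S < h → ∑ i, x i S = lam * (#(insert w U)ᶜ).choose (h - 1 - #S))
    {S : Finset V} (hS : S ⊆ insert w U) (hSh : #S ≤ h) :
    ∑ i, (if w ∈ S then x i (S.erase w) else F i S - x i S) =
      lam * (#(insert w U)ᶜ).choose (h - #S) := by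
  split_ifs with hwS
  · have hcard : #(S.erase w) = #S - 1 := card_erase_of_mem hwS
    have := card_pos.mpr ⟨w, hwS⟩
    rw [hx_col (S.erase w) (subset_insert_iff.mp hS) (by omega), hcard,
      show h - 1 - (#S - 1) = h - #S by omega]
  · have hSU := (subset_insert_iff_of_notMem hwS).mp hS
    rw [sum_tsub_distrib _ fun i _ => hxF i S, hF.sum_colors_eq S hSU hSh,
      compl_insert, ← card_erase_add_one (mem_compl.mpr hw)]
    by_cases hlt : #S < h
    · rw [hx_col S hSU hlt, compl_insert, show h - #S = h - 1 - #S + 1 by omega,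
        Nat.choose_succ_succ', mul_add, Nat.add_sub_cancel_left]
    · have hx0 : ∑ i, x i S = 0 := sum_eq_zero fun i _ => by_contra fun hi => hlt (hxh i S hi)
      simp [hx0, show h - #S = 0 by omega]

lemma extend (hF : IsPartialFactorization h lam r a U F) {w : V} (hw : w ∉ U)
    {x : κ → Finset V → ℕ} (hxF : ∀ i S, x i S ≤ F i S) (hxh : ∀ i S, x i S ≠ 0 → #S < h)
    (hx_row : ∀ i, ∑ S, x i S = r)
    (hx_col : ∀ S ⊆ U, #S < h → ∑ i, x i S = lam * (#(insert w U)ᶜ).choose (h - 1 - #S)) :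
    IsPartialFactorization h lam r a (insert w U)
      fun i S => if w ∈ S then x i (S.erase w) else F i S - x i S := by
  have hFw : ∀ i T, F i T ≠ 0 → w ∉ T := fun i T hT hwT => hw (hF.subset_of_ne_zero i T hT hwT)
  have hxw : ∀ i T, x i T ≠ 0 → w ∉ T := fun i T hT => hFw i T (by have := hxF i T; omega)
  have hGw : ∀ i T, F i T - x i T ≠ 0 → w ∉ T := fun i T hT => hFw i T (by omega)
  have hsum (i : κ) (p : Finset V → Prop) [DecidablePred p] :=
    sum_filter_ite_mem_erase p (hxw i) (hGw i)
  have hFx (i : κ) (s : Finset (Finset V)) :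
      ∑ T ∈ s, x i T + ∑ T ∈ s, (F i T - x i T) = ∑ T ∈ s, F i T := by
    rw [← sum_add_distrib]
    exact sum_congr rfl fun T _ => Nat.add_sub_cancel' (hxF i T)
  constructor
  · intro i S hS
    split_ifs at hS with hwS
    · have := hF.subset_of_ne_zero i (S.erase w) (by have := hxF i (S.erase w); omega)
      exact subset_insert_iff.mpr this
    · exact (hF.subset_of_ne_zero i S (by omega)).trans (subset_insert w U)
  · intro i S hS
    split_ifs at hS with hwS
    · have := hxh i _ hS
      rw [card_erase_of_mem hwS] at this
      omega
    · exact hF.card_le_of_ne_zero i S (by omega)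
  · exact fun S hS hSh => hF.sum_colors_extend hw hxF hxh hx_col hS hSh
  · intro i
    have := hsum i (fun _ => True)
    simp only [filter_true] at this
    rw [this, hFx, hF.sum_traces_eq i]
  · intro i v hv
    rw [hsum i (v ∈ ·)]
    rcases mem_insert.mp hv with rfl | hvU
    · simp only [mem_insert_self, filter_true, hx_row, add_eq_left]
      exact sum_eq_zero fun T hT => by_contra fun hne => hGw i T hne (mem_filter.mp hT).2
    · simp only [mem_insert, ne_of_mem_of_not_mem hvU hw, false_or]
      rw [hFx, hF.degree_eq i v hvU]

end IsPartialFactorization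

theorem exists_isPartialFactorization_univ (hra : h * a = r * Fintype.card V)
    (hka : Fintype.card κ * a = lam * (Fintype.card V).choose h) :
    ∃ F : κ → Finset V → ℕ, IsPartialFactorization h lam r a univ F := by
  suffices ∀ U : Finset V, ∃ F : κ → Finset V → ℕ, IsPartialFactorization h lam r a U F from
    this univ
  intro U
  induction U using Finset.induction_on with
  | empty => exact ⟨_, isPartialFactorization_empty hka⟩
  | insert w U hw ih =>
    obtain ⟨F, hF⟩ := ih
    obtain ⟨x, hxF, hxh, hx_row, hx_col⟩ := hF.exists_extension_counts hra hw
    exact ⟨_, hF.extend hw hxF hxh hx_row hx_col⟩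

end PartialFactorization

section Factorization

variable {V κ : Type*} [Fintype V] [DecidableEq V] [DecidableEq κ] {h lam r : ℕ}

lemma card_filter_mem_subtype (hh : 0 < h) (v : V) :
    #{T : {T : Finset V // #T = h} | v ∈ T.val} = (Fintype.card V - 1).choose (h - 1) := by
  have := card_filter_powersetCard_subset {v} univ h (subset_univ _) (by simpa)
  simp only [card_singleton, card_univ, singleton_subset_iff] at this
  rw [← this, card_filter, card_filter, sum_subtype _ (fun S => mem_powersetCard_univ)]

def IsFactorization (r : ℕ) (c : {T : Finset V // #T = h} → Fin lam → κ) : Prop :=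
  ∀ v j, #{p : {T : Finset V // #T = h} × Fin lam | v ∈ p.1.val ∧ c p.1 p.2 = j} = r

lemma card_filter_mem_and_eq (c : {T : Finset V // #T = h} → Fin lam → κ) (v : V) (j : κ) :
    #{p : {T : Finset V // #T = h} × Fin lam | v ∈ p.1.val ∧ c p.1 p.2 = j} =
      ∑ T with v ∈ T.val, #{l | c T l = j} := by
  rw [card_filter, Fintype.sum_prod_type, sum_filter]
  refine sum_congr rfl fun T _ => ?_
  split_ifs with hv
  · simp only [hv, true_and]
    rw [card_filter]
  · simp [hv]

namespace IsFactorization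

variable {c : {T : Finset V // #T = h} → Fin lam → κ}

lemma dvd_mul_card (hc : IsFactorization r c) (j : κ) : h ∣ r * Fintype.card V := by
  refine ⟨∑ T, #{l | c T l = j}, ?_⟩
  calc r * Fintype.card V = ∑ v, ∑ T with v ∈ T.val, #{l | c T l = j} := by
        simp [← card_filter_mem_and_eq, hc _ j, mul_comm]
    _ = h * ∑ T, #{l | c T l = j} := by
        rw [sum_sum_filter_mem, mul_sum]
        exact sum_congr rfl fun T _ => by rw [T.2]

lemma dvd_mul_choose [Fintype κ] (hc : IsFactorization r c) (hh : 0 < h) (v : V) :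
    r ∣ lam * (Fintype.card V - 1).choose (h - 1) := by
  refine ⟨Fintype.card κ, ?_⟩
  calc lam * (Fintype.card V - 1).choose (h - 1)
      = #{p : {T : Finset V // #T = h} × Fin lam | v ∈ p.1.val} := by
        have := filter_product_left (s := univ) (t := (univ : Finset (Fin lam)))
          fun T : {T : Finset V // #T = h} => v ∈ T.val
        rw [univ_product_univ] at this
        rw [this, card_product, card_filter_mem_subtype hh, card_univ, Fintype.card_fin, mul_comm]
    _ = ∑ j, #{p : {T : Finset V // #T = h} × Fin lam | v ∈ p.1.val ∧ c p.1 p.2 = j} := by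
        rw [card_eq_sum_card_fiberwise (f := fun p => c p.1 p.2) (t := univ) fun _ _ => mem_univ _]
        simp only [filter_filter]
    _ = r * Fintype.card κ := by simp [hc v, mul_comm]

end IsFactorization

lemma IsPartialFactorization.exists_isFactorization [Fintype κ] {a : ℕ} {F : κ → Finset V → ℕ}
    (hF : IsPartialFactorization h lam r a univ F) :
    ∃ c : {T : Finset V // #T = h} → Fin lam → κ, IsFactorization r c := by
  have hcol (T : {T : Finset V // #T = h}) : ∑ i, F i T.val = lam := by
    simpa [T.2] using hF.sum_colors_eq T.val (subset_univ _) T.2.le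
  choose c hc using fun T => exists_fun_card_fiber_eq (hcol T)
  refine ⟨c, fun v j => ?_⟩
  have hcard (S : Finset V) (hS : F j S ≠ 0) : #S = h := by
    have := hF.sub_card_le hS
    have := hF.card_le_of_ne_zero j S hS
    simp only [compl_univ, card_empty] at *
    omega
  rw [card_filter_mem_and_eq, ← hF.degree_eq j v (mem_univ v), sum_filter, sum_filter]
  simp only [hc]
  rw [← sum_subset (subset_univ (powersetCard h univ)),
    sum_subtype _ fun S => mem_powersetCard_univ]
  intro S _ hS
  split_ifs
  · exact by_contra fun hne => hS (mem_powersetCard_univ.mpr (hcard S hne))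
  · rfl

theorem exists_isFactorization [Fintype κ] (hh : 0 < h) (hr : h ∣ r * Fintype.card V)
    (hκ : Fintype.card κ * r = lam * (Fintype.card V - 1).choose (h - 1)) :
    ∃ c : {T : Finset V // #T = h} → Fin lam → κ, IsFactorization r c := by
  obtain ⟨a, ha⟩ := hr
  have hka : Fintype.card κ * a = lam * (Fintype.card V).choose h := by
    refine Nat.eq_of_mul_eq_mul_left hh ?_
    calc h * (Fintype.card κ * a) = Fintype.card κ * r * Fintype.card V := by
          rw [mul_assoc, ha]; ring
      _ = lam * (Fintype.card V).choose h * h := by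
        rw [hκ, mul_assoc, mul_comm _ (Fintype.card V), mul_choose_sub_one _ hh, mul_assoc]
      _ = h * (lam * (Fintype.card V).choose h) := by ring
  obtain ⟨F, hF⟩ := exists_isPartialFactorization_univ (κ := κ) ha.symm hka
  exact hF.exists_isFactorization

end Factorization

theorem lambdaKn3_rFactorizable_iff_general (n lam : ℕ) (hn : 3 ≤ n) (hlam : 1 ≤ lam)
    (r : ℕ) :
    (∃ k : ℕ, 1 ≤ k ∧
      ∃ c : {T : Finset (Fin n) // T.card = 3} → Fin lam → Fin k,
        ∀ v : Fin n, ∀ j : Fin k,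
          (Finset.univ.filter
            fun p : {T : Finset (Fin n) // T.card = 3} × Fin lam =>
              v ∈ p.1.val ∧ c p.1 p.2 = j).card = r) ↔
    (3 ∣ r * n ∧ r ∣ lam * Nat.choose (n - 1) 2) := by
  constructor
  · rintro ⟨k, hk, c, hc⟩
    simpa using And.intro (IsFactorization.dvd_mul_card hc ⟨0, hk⟩)
      (IsFactorization.dvd_mul_choose hc three_pos ⟨0, by omega⟩)
  · rintro ⟨h3, k, hk⟩
    have hk1 : 1 ≤ k := by
      have : 0 < lam * (n - 1).choose 2 := Nat.mul_pos hlam (Nat.choose_pos (by omega))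
      rw [hk] at this
      exact Nat.pos_of_mul_pos_left this
    obtain ⟨c, hc⟩ := exists_isFactorization (V := Fin n) (κ := Fin k) three_pos (by simpa)
      (by simpa [mul_comm] using hk.symm)
    exact ⟨k, hk1, c, hc⟩

/-- **Characterization of `r`-factorizability of `λK_n³`.**
For `n ≥ 3`, the complete 3-uniform multi-hypergraph `λK_n³` is
`r`-factorizable — there exist `k ≥ 1` and a coloring `c` of its edges
(pairs `(T, l)` with `T ⊆ Fin n`, `|T| = 3`, `l ∈ Fin λ`) by colors in
`Fin k` such that every vertex is incident with exactly `r` edges of each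
color — if and only if `3 ∣ r·n` and `r ∣ λ·C(n-1,2)`. -/
theorem lambdaKn3_rFactorizable_iff (n lam : ℕ) (hn : 3 ≤ n) (hlam : 1 ≤ lam)
    (r : ℕ) (hr : 0 < r) :
    (∃ k : ℕ, 1 ≤ k ∧
      ∃ c : {T : Finset (Fin n) // T.card = 3} → Fin lam → Fin k,
        ∀ v : Fin n, ∀ j : Fin k,
          (Finset.univ.filter
            fun p : {T : Finset (Fin n) // T.card = 3} × Fin lam =>
              v ∈ p.1.val ∧ c p.1 p.2 = j).card = r) ↔
    (3 ∣ r * n ∧ r ∣ lam * Nat.choose (n - 1) 2) :=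
  lambdaKn3_rFactorizable_iff_general n lam hn hlam r
end
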